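/- arXiv:1912.08328 — 8 statements merged into one kernel-verified Lean document; each statement's English description precedes it below -/
import Mathlib

section
/- Let G and H be graphs and r ≥ 1 an integer such that G →_r H. Then there is a constant c = c(G,H,r) such that for every positive integer t, the blowup Ramsey number satisfies B_r(G → H; t) ≤ c^t. -/
/-- The `n`-blowup of a graph: each vertex is replaced by an independent set of `n` vertices,
and each edge by a complete bipartite graph between the corresponding sets. -/
def blowupGraph {V : Type} (G : SimpleGraph V) (n : ℕ) : SimpleGraph (V × Fin n) :=
  SimpleGraph.comap Prod.fst G

/-- The coloring `C` admits a monochromatic copy of `H` in `G`. -/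
def HasMonoCopy {V α : Type} (G : SimpleGraph V) (H : SimpleGraph α) {r : ℕ}
    (C : Sym2 V → Fin r) : Prop :=
  ∃ (f : α → V) (c : Fin r), Function.Injective f ∧
    ∀ a b, H.Adj a b → G.Adj (f a) (f b) ∧ C s(f a, f b) = c

/-- `G →_r H`: every `r`-coloring of the edges of `G` contains a monochromatic copy of `H`. -/
def ArrowsFor {V α : Type} (G : SimpleGraph V) (H : SimpleGraph α) (r : ℕ) : Prop :=
  ∀ C : Sym2 V → Fin r, HasMonoCopy G H C

/-- The coloring `C` of `G[n]` admits a monochromatic canonical copy of `H[t]`: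
an embedding `φ` of `H` into `G`, together with `t` blowup vertices `ψ a` in the part indexed
by `φ a` for each vertex `a` of `H`, all of whose blowup edges receive the same color `c`. -/
def HasMonoCanonicalBlowup {V α : Type} (G : SimpleGraph V) (H : SimpleGraph α)
    (n t r : ℕ) (C : Sym2 (V × Fin n) → Fin r) : Prop :=
  ∃ (φ : α → V) (ψ : α → Fin t → Fin n) (c : Fin r),
    Function.Injective φ ∧ (∀ a, Function.Injective (ψ a)) ∧
    ∀ a b, H.Adj a b → G.Adj (φ a) (φ b) ∧ ∀ i j, C s((φ a, ψ a i), (φ b, ψ b j)) = c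

/-- Every `r`-coloring of the edges of `G[n]` contains a monochromatic canonical copy of `H[t]`.
The blowup Ramsey number `B_r(G → H; t)` is the minimum such `n`. -/
def BlowupArrow {V α : Type} (G : SimpleGraph V) (H : SimpleGraph α) (r n t : ℕ) : Prop :=
  ∀ C : Sym2 (V × Fin n) → Fin r, HasMonoCanonicalBlowup G H n t r C

/-!
Write `P` for the number of pairs `p = (φ, c)` of a map `φ : α → V` and a color `c`, and let
all parts `S v` of the blowup have size `m`. Every transversal of the parts carries a
monochromatic copy of `H` because `G →_r H`, so by averaging there is a pair `p`, with `φ` a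
copy of `H` in `G`, that has at least `m^|α| / P` monochromatic copies of `H` of color `c`
inside the parts `S (φ a)`. Given a vertex `a` of `H`, dependent random choice (Jensen's
inequality over the fibres of forgetting the `a`-coordinate of these copies) gives `t` distinct
vertices in `S (φ a)` and parts `S' ⊆ S` of size `m / (2 P^(t+1))` such that every edge from
these `t` vertices to a part `S' (φ b)`, with `b` a neighbour of `a`, has color `c`.

Every pair `p` keeps its own partial blowup of `H`. A round either finds that the partial
blowup of its pair is already complete, or adds one vertex of `H` to it. Hence some blowup is
complete after at most `P |α| + 1` rounds, and parts of size
`2 t² P^(t+1) (2 P^(t+1))^(P |α| + 1) ≤ ((8 P²)^(P |α| + 2))^t` suffice for all of them.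
-/

open Finset Function

section Counting

variable {ι β : Type*}

theorem Finset.card_pow_succ_le_card_image_pow_mul_sum_card_fiber_pow [DecidableEq β]
    (s : Finset ι) (g : ι → β) (t : ℕ) :
    #s ^ (t + 1) ≤ #(s.image g) ^ t * ∑ x ∈ s, #{y ∈ s | g y = g x} ^ t := by
  have hmaps : ∀ x ∈ s, g x ∈ s.image g := fun x hx => mem_image_of_mem g hx
  have hsum : ∑ x ∈ s, #{y ∈ s | g y = g x} ^ t =
      ∑ e ∈ s.image g, #{y ∈ s | g y = e} ^ (t + 1) := by
    rw [← sum_fiberwise_of_maps_to hmaps]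
    refine sum_congr rfl fun e _ => ?_
    rw [sum_congr rfl fun x hx => by rw [(mem_filter.1 hx).2], sum_const, smul_eq_mul, pow_succ']
  rw [hsum, card_eq_sum_card_fiberwise hmaps]
  exact pow_sum_le_card_mul_sum_pow (fun _ _ => Nat.zero_le _) t

theorem Finset.sum_card_filter_forall_mem_eq_sum_card_pow [DecidableEq β] {A : Finset β}
    (s : Finset ι) (D : ι → Finset β) (hD : ∀ x ∈ s, D x ⊆ A) (t : ℕ) :
    ∑ w ∈ Fintype.piFinset (fun _ : Fin t => A), #{x ∈ s | ∀ i, w i ∈ D x} =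
      ∑ x ∈ s, #(D x) ^ t := by
  simp only [card_filter]
  rw [sum_comm]
  refine sum_congr rfl fun x hx => ?_
  have : {w ∈ Fintype.piFinset (fun _ : Fin t => A) | ∀ i, w i ∈ D x} =
      Fintype.piFinset fun _ => D x := by
    ext w
    simp only [mem_filter, Fintype.mem_piFinset]
    exact ⟨fun h => h.2, fun h => ⟨fun i => hD x hx (h i), h⟩⟩
  rw [← card_filter, this, Fintype.card_piFinset, prod_const, card_univ, Fintype.card_fin]

theorem Fintype.card_piFinset_subtype_ne [Fintype ι] [DecidableEq ι] {m : ℕ}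
    (F : ι → Finset β) (hF : ∀ i, #(F i) = m) (i : ι) :
    #(piFinset fun j : {j // j ≠ i} => F j) = m ^ (card ι - 1) := by
  simp [card_piFinset, hF, card_subtype_compl]

theorem Fintype.card_filter_piFinset_mem_le [Fintype ι] [DecidableEq ι] [DecidableEq β] {m : ℕ}
    (F : ι → Finset β) (hF : ∀ i, #(F i) = m) (i : ι) (Y : Finset β) :
    #{x ∈ piFinset F | x i ∈ Y} ≤ #Y * m ^ (card ι - 1) := by
  rw [← card_piFinset_subtype_ne F hF i, ← card_product]
  refine card_le_card_of_injOn (fun x => (x i, fun j : {j // j ≠ i} => x j)) ?_ ?_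
  · intro x hx
    simp only [coe_filter, mem_piFinset, Set.mem_ofPred_eq] at hx
    simp [hx.2, hx.1]
  · intro x _ y _ hxy
    simp only [Prod.mk.injEq, funext_iff, Subtype.forall] at hxy
    funext j
    by_cases hj : j = i
    · exact hj ▸ hxy.1
    · exact hxy.2 j hj

theorem Fintype.card_filter_piFinset_not_injective_le [DecidableEq β] (A : Finset β) (t : ℕ) :
    #{w ∈ piFinset (fun _ : Fin t => A) | ¬ Injective w} ≤ t ^ 2 * #A ^ (t - 1) := by
  set W := piFinset fun _ : Fin t => A
  have hpair : ∀ i j : Fin t, i ≠ j → #{w ∈ W | w i = w j} ≤ #A ^ (t - 1) := by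
    intro i j hij
    calc #{w ∈ W | w i = w j} ≤ #(piFinset fun _ : {l // l ≠ i} => A) := by
          refine card_le_card_of_injOn (fun w l => w l) (fun w hw => ?_) fun w hw v hv hwv => ?_
          · simp only [coe_filter, mem_piFinset, W, Set.mem_ofPred_eq] at hw
            simp [hw.1]
          · simp only [coe_filter, Set.mem_ofPred_eq] at hw hv
            simp only [funext_iff, Subtype.forall] at hwv
            funext l
            by_cases hl : l = i
            · rw [hl, hw.2, hv.2, hwv j hij.symm]
            · exact hwv l hl
      _ = #A ^ (t - 1) := by rw [card_piFinset_subtype_ne _ (fun _ => rfl), card_fin]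
  calc #{w ∈ W | ¬ Injective w}
      ≤ #((univ : Finset (Fin t)).offDiag.biUnion fun ij => {w ∈ W | w ij.1 = w ij.2}) := by
        refine card_le_card fun w hw => ?_
        simp only [mem_filter, Injective, not_forall] at hw
        obtain ⟨hwW, i, j, hij, hne⟩ := hw
        exact mem_biUnion.2 ⟨(i, j), by simpa using hne, mem_filter.2 ⟨hwW, hij⟩⟩
    _ ≤ ∑ ij ∈ univ.offDiag, #{w ∈ W | w ij.1 = w ij.2} := card_biUnion_le
    _ ≤ ∑ _ij ∈ (univ : Finset (Fin t)).offDiag, #A ^ (t - 1) :=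
        sum_le_sum fun ij hij => hpair _ _ (mem_offDiag.1 hij).2.2
    _ ≤ t ^ 2 * #A ^ (t - 1) := by
        rw [sum_const, smul_eq_mul]
        gcongr
        rw [offDiag_card, card_univ, Fintype.card_fin, sq]
        exact Nat.sub_le _ _

theorem Fintype.card_filter_piFinset_comp_eq_le {ι κ β : Type*} [Fintype ι] [Fintype κ]
    [DecidableEq κ] [DecidableEq β] {m : ℕ} (F : κ → Finset β) (hF : ∀ v, #(F v) = m)
    {φ : ι → κ} (hφ : Injective φ) (x : ι → β) :
    #{g ∈ piFinset F | g ∘ φ = x} ≤ m ^ (card κ - card ι) := by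
  classical
  calc #{g ∈ piFinset F | g ∘ φ = x}
      ≤ #(piFinset fun v : {v // v ∉ Set.range φ} => F v) := by
        refine card_le_card_of_injOn (fun g v => g v) (fun g hg => ?_) fun g hg g' hg' hgg' => ?_
        · simp only [coe_filter, mem_piFinset, Set.mem_ofPred_eq] at hg
          simp [hg.1]
        · simp only [coe_filter, Set.mem_ofPred_eq, funext_iff, Subtype.forall] at hg hg' hgg'
          funext v
          by_cases hv : v ∈ Set.range φ
          · obtain ⟨a, rfl⟩ := hv
            exact (hg.2 a).trans (hg'.2 a).symm
          · exact hgg' v hv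
    _ = m ^ (card κ - card ι) := by
        simp only [card_piFinset, hF, Finset.prod_const, Finset.card_univ]
        rw [card_subtype_compl, Set.card_range_of_injective hφ]

end Counting

namespace BlowupRamsey

theorem two_mul_sq_mul_pow_succ_le {t P : ℕ} (ht : 1 ≤ t) (hP : 1 ≤ P) :
    2 * t ^ 2 * P ^ (t + 1) ≤ (8 * P ^ 2) ^ t := by
  have h2 : 2 ≤ 2 ^ t := by simpa using Nat.pow_le_pow_right two_pos ht
  have ht4 : t ^ 2 ≤ 4 ^ t := by
    calc t ^ 2 ≤ (2 ^ t) ^ 2 := Nat.pow_le_pow_left Nat.lt_two_pow_self.le 2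
      _ = 4 ^ t := by rw [← pow_mul, mul_comm, pow_mul]; norm_num
  calc 2 * t ^ 2 * P ^ (t + 1) ≤ 2 ^ t * 4 ^ t * P ^ (2 * t) :=
        Nat.mul_le_mul (Nat.mul_le_mul h2 ht4) (Nat.pow_le_pow_right hP (by omega))
    _ = (8 * P ^ 2) ^ t := by rw [mul_pow, ← pow_mul, ← mul_pow]; norm_num

theorem two_mul_sq_mul_pow_succ_mul_pow_le {t P : ℕ} (ht : 1 ≤ t) (hP : 1 ≤ P) (j : ℕ) :
    2 * t ^ 2 * P ^ (t + 1) * (2 * P ^ (t + 1)) ^ j ≤ ((8 * P ^ 2) ^ (j + 1)) ^ t := by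
  have hL := two_mul_sq_mul_pow_succ_le ht hP
  have hQ : 2 * P ^ (t + 1) ≤ 2 * t ^ 2 * P ^ (t + 1) := by
    gcongr
    exact Nat.le_mul_of_pos_right 2 (by positivity)
  calc _ ≤ (8 * P ^ 2) ^ t * ((8 * P ^ 2) ^ t) ^ j := by gcongr; exact hQ.trans hL
    _ = _ := by rw [← pow_succ', pow_right_comm]

open scoped Classical

variable {α V β κ : Type*}

def IsCopy (G : SimpleGraph V) (H : SimpleGraph α) (φ : α → V) : Prop :=
  Injective φ ∧ ∀ a b, H.Adj a b → G.Adj (φ a) (φ b)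

section MonoCopies

variable [Fintype α] (H : SimpleGraph α) (C : Sym2 (V × β) → κ) (φ : α → V) (c : κ)
  (S : V → Finset β)

noncomputable def monoCopies : Finset (α → β) :=
  {x ∈ Fintype.piFinset fun a => S (φ a) |
    ∀ a b, H.Adj a b → C s((φ a, x a), (φ b, x b)) = c}

noncomputable def monoExtensions (a : α) (x : α → β) : Finset β :=
  {y ∈ S (φ a) | ∀ b, H.Adj a b → C s((φ a, y), (φ b, x b)) = c}

noncomputable def compatibleMonoCopies (a : α) {t : ℕ} (w : Fin t → β) : Finset (α → β) :=
  {x ∈ monoCopies H C φ c S | ∀ i, w i ∈ monoExtensions H C φ c S a x}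

variable {H C φ c S}

theorem mem_monoCopies {x : α → β} :
    x ∈ monoCopies H C φ c S ↔
      (∀ a, x a ∈ S (φ a)) ∧ ∀ a b, H.Adj a b → C s((φ a, x a), (φ b, x b)) = c := by
  simp [monoCopies]

theorem card_monoCopies_le {m : ℕ} (hS : ∀ v, #(S v) = m) :
    #(monoCopies H C φ c S) ≤ m ^ Fintype.card α := by
  refine (card_filter_le _ _).trans ?_
  simp [Fintype.card_piFinset, hS]

theorem card_filter_restrict_eq_le_card_monoExtensions (a : α) (x : α → β) :
    #{y ∈ monoCopies H C φ c S |
        Subtype.restrict (· ≠ a) y = Subtype.restrict (· ≠ a) x} ≤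
      #(monoExtensions H C φ c S a x) := by
  refine card_le_card_of_injOn (fun y => y a) (fun y hy => ?_) fun y hy z hz hyz => ?_
  · simp only [coe_filter, Set.mem_ofPred_eq, funext_iff, Subtype.forall] at hy
    rw [mem_monoCopies] at hy
    simp only [monoExtensions, coe_filter, Set.mem_ofPred_eq]
    refine ⟨hy.1.1 a, fun b hab => ?_⟩
    have hb : y b = x b := hy.2 b (H.ne_of_adj hab).symm
    rw [← hb]
    exact hy.1.2 a b hab
  · simp only [coe_filter, Set.mem_ofPred_eq, funext_iff, Subtype.forall,
      Subtype.restrict_apply] at hy hz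
    funext l
    by_cases hl : l = a
    · exact hl ▸ hyz
    · exact (hy.2 l hl).trans (hz.2 l hl).symm

theorem pow_le_sum_card_compatibleMonoCopies {m P : ℕ} (hS : ∀ v, #(S v) = m)
    (hP : m ^ Fintype.card α ≤ P * #(monoCopies H C φ c S)) (a : α) (t : ℕ) :
    m ^ (Fintype.card α + t) ≤
      P ^ (t + 1) * ∑ w ∈ Fintype.piFinset (fun _ : Fin t => S (φ a)),
        #(compatibleMonoCopies H C φ c S a w) := by
  set k := Fintype.card α
  set X := monoCopies H C φ c S
  set R : (α → β) → {l // l ≠ a} → β := Subtype.restrict (· ≠ a)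
  set E := monoExtensions H C φ c S a
  have hk : 1 ≤ k := Fintype.card_pos_iff.2 ⟨a⟩
  rcases Nat.eq_zero_or_pos m with rfl | hm
  · rw [zero_pow (by omega)]
    exact Nat.zero_le _
  have himage : #(X.image R) ≤ m ^ (k - 1) := by
    rw [← Fintype.card_piFinset_subtype_ne (fun l => S (φ l)) (fun _ => hS _) a]
    refine card_le_card fun y hy => ?_
    obtain ⟨x, hx, rfl⟩ := mem_image.1 hy
    exact Fintype.mem_piFinset.2 fun l => (mem_monoCopies.1 hx).1 l
  have hdc := sum_card_filter_forall_mem_eq_sum_card_pow X E (fun _ _ => filter_subset _ _) t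
  have hsplit : m ^ (k * (t + 1)) = m ^ (k + t) * (m ^ (k - 1)) ^ t := by
    rw [← pow_mul, ← pow_add]
    congr 1
    obtain ⟨k', hk'⟩ : ∃ k', k = k' + 1 := ⟨k - 1, by omega⟩
    rw [hk', Nat.add_sub_cancel]
    ring
  refine Nat.le_of_mul_le_mul_right (c := (m ^ (k - 1)) ^ t) ?_ (by positivity)
  calc m ^ (k + t) * (m ^ (k - 1)) ^ t = (m ^ k) ^ (t + 1) := by rw [← hsplit, pow_mul]
    _ ≤ (P * #X) ^ (t + 1) := Nat.pow_le_pow_left hP _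
    _ = P ^ (t + 1) * #X ^ (t + 1) := mul_pow _ _ _
    _ ≤ P ^ (t + 1) * ((m ^ (k - 1)) ^ t * ∑ x ∈ X, #{y ∈ X | R y = R x} ^ t) := by
      gcongr
      exact (card_pow_succ_le_card_image_pow_mul_sum_card_fiber_pow X R t).trans (by gcongr)
    _ ≤ P ^ (t + 1) * ((m ^ (k - 1)) ^ t * ∑ x ∈ X, #(E x) ^ t) := by
      gcongr with x
      exact card_filter_restrict_eq_le_card_monoExtensions a x
    _ = _ := by rw [← hdc]; simp only [compatibleMonoCopies]; ring

theorem exists_injective_le_card_compatibleMonoCopies {m P t : ℕ} (hS : ∀ v, #(S v) = m)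
    (hP : m ^ Fintype.card α ≤ P * #(monoCopies H C φ c S)) (a : α) (hm₀ : 0 < m)
    (hm : 2 * t ^ 2 * P ^ (t + 1) ≤ m) :
    ∃ w : Fin t → β, Injective w ∧ (∀ i, w i ∈ S (φ a)) ∧
      m ^ Fintype.card α ≤ 2 * P ^ (t + 1) * #(compatibleMonoCopies H C φ c S a w) := by
  set k := Fintype.card α
  set W := Fintype.piFinset fun _ : Fin t => S (φ a)
  set M : (Fin t → β) → ℕ := fun w => #(compatibleMonoCopies H C φ c S a w)
  have hW : #W = m ^ t := by simp [W, hS]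
  -- `m ≥ 2 t² P^(t+1)` makes the non-injective tuples carry at most half of the sum.
  have hbad : 2 * P ^ (t + 1) * ∑ w ∈ W with ¬ Injective w, M w ≤ m ^ (k + t) := by
    have hM : ∀ w, M w ≤ m ^ k := fun w => (card_filter_le _ _).trans (card_monoCopies_le hS)
    have hcard := Fintype.card_filter_piFinset_not_injective_le (S (φ a)) t
    rw [hS] at hcard
    have hpow : 2 * t ^ 2 * P ^ (t + 1) * m ^ (t - 1) ≤ m ^ t := by
      rcases t with _ | t
      · simp
      · calc _ ≤ m * m ^ t := Nat.mul_le_mul_right _ hm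
          _ = m ^ (t + 1) := (pow_succ' m t).symm
    calc 2 * P ^ (t + 1) * ∑ w ∈ W with ¬ Injective w, M w
        ≤ 2 * P ^ (t + 1) * ∑ w ∈ W with ¬ Injective w, m ^ k := by gcongr with w; exact hM w
      _ ≤ 2 * P ^ (t + 1) * (t ^ 2 * m ^ (t - 1) * m ^ k) := by
        rw [sum_const, smul_eq_mul]; gcongr
      _ = 2 * t ^ 2 * P ^ (t + 1) * m ^ (t - 1) * m ^ k := by ring
      _ ≤ m ^ t * m ^ k := by gcongr
      _ = m ^ (k + t) := by ring
  have hgood : m ^ (k + t) ≤ 2 * P ^ (t + 1) * ∑ w ∈ W with Injective w, M w := by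
    have hall := pow_le_sum_card_compatibleMonoCopies hS hP a t
    rw [← sum_filter_add_sum_filter_not W Injective] at hall
    nlinarith
  have hne : (W.filter Injective).Nonempty := by
    refine nonempty_of_sum_ne_zero (f := M) fun h => ?_
    rw [h, mul_zero] at hgood
    exact (pow_pos hm₀ _).ne' (Nat.le_zero.1 hgood)
  obtain ⟨w, hw, hwM⟩ := exists_le_of_sum_le hne (f := fun _ => m ^ k)
    (g := fun w => 2 * P ^ (t + 1) * M w) (by
      calc ∑ w ∈ W with Injective w, m ^ k = #(W.filter Injective) * m ^ k := by
            rw [sum_const, smul_eq_mul]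
        _ ≤ m ^ t * m ^ k := by gcongr; exact hW ▸ card_filter_le _ _
        _ = m ^ (k + t) := by ring
        _ ≤ _ := by rw [← mul_sum]; exact hgood)
  obtain ⟨hwW, hwinj⟩ := mem_filter.1 hw
  exact ⟨w, hwinj, Fintype.mem_piFinset.1 hwW, hwM⟩

theorem card_compatibleMonoCopies_le {m t : ℕ} (hS : ∀ v, #(S v) = m) {a b : α}
    (hab : H.Adj a b) (w : Fin t → β) :
    #(compatibleMonoCopies H C φ c S a w) ≤
      #{y ∈ S (φ b) | ∀ i, C s((φ a, w i), (φ b, y)) = c} * m ^ (Fintype.card α - 1) := by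
  set Z := {y ∈ S (φ b) | ∀ i, C s((φ a, w i), (φ b, y)) = c}
  calc #(compatibleMonoCopies H C φ c S a w)
      ≤ #{x ∈ Fintype.piFinset (fun a => S (φ a)) | x b ∈ Z} := card_le_card fun x hx => ?_
    _ ≤ #Z * m ^ (Fintype.card α - 1) :=
        Fintype.card_filter_piFinset_mem_le _ (fun _ => hS _) b Z
  obtain ⟨hxX, hxw⟩ := mem_filter.1 hx
  have hxS := (mem_monoCopies.1 hxX).1
  exact mem_filter.2 ⟨Fintype.mem_piFinset.2 hxS,
    mem_filter.2 ⟨hxS b, fun i => (mem_filter.1 (hxw i)).2 b hab⟩⟩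

theorem exists_shrink_of_le_card_compatibleMonoCopies {m Q t : ℕ} (hS : ∀ v, #(S v) = m)
    (a : α) (w : Fin t → β)
    (hw : m ^ Fintype.card α ≤ Q * #(compatibleMonoCopies H C φ c S a w)) :
    ∃ S' : V → Finset β, (∀ v, S' v ⊆ S v) ∧ (∀ v, #(S' v) = m / Q) ∧
      ∀ b, H.Adj a b → ∀ i, ∀ y ∈ S' (φ b), C s((φ a, w i), (φ b, y)) = c := by
  set k := Fintype.card α
  set Y : V → Finset β := fun v =>
    {y ∈ S v | ∀ b, φ b = v → H.Adj a b → ∀ i, C s((φ a, w i), (v, y)) = c}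
  have hY : ∀ v, m / Q ≤ #(Y v) := by
    intro v
    by_cases hv : ∃ b, φ b = v ∧ H.Adj a b
    · obtain ⟨b, rfl, hab⟩ := hv
      rcases Nat.eq_zero_or_pos m with rfl | hm
      · simp
      have hcard := (card_compatibleMonoCopies_le hS hab w).trans
        (Nat.mul_le_mul_right _ (card_le_card fun y hy => mem_filter.2
          ⟨(mem_filter.1 hy).1, fun _ _ _ => (mem_filter.1 hy).2⟩) : _ ≤ #(Y (φ b)) * _)
      refine Nat.div_le_of_le_mul (Nat.le_of_mul_le_mul_right ?_ (pow_pos hm (k - 1)))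
      calc m * m ^ (k - 1) = m ^ k := by
            rw [← pow_succ', Nat.sub_add_cancel (Fintype.card_pos_iff.2 ⟨a⟩)]
        _ ≤ Q * (#(Y (φ b)) * m ^ (k - 1)) := hw.trans (Nat.mul_le_mul_left _ hcard)
        _ = Q * #(Y (φ b)) * m ^ (k - 1) := by ring
    · have hYS : Y v = S v := filter_true_of_mem fun y _ b hb hab => absurd ⟨b, hb, hab⟩ hv
      rw [hYS, hS]
      exact Nat.div_le_self _ _
  choose S' hS'Y hS' using fun v => exists_subset_card_eq (hY v)
  refine ⟨S', fun v => (hS'Y v).trans (filter_subset _ _), hS', fun b hab i y hy => ?_⟩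
  exact (mem_filter.1 (hS'Y _ hy)).2 b rfl hab i

end MonoCopies

section PartialBlowup

variable (H : SimpleGraph α) (C : Sym2 (V × β) → κ) (φ : α → V) (c : κ)
  (S : V → Finset β)

/-- `T a`, for `a ∈ D`, are the blowup vertices already chosen for `a`; the parts `S` hold the
vertices still available for the rest of `H`. -/
structure IsMonoPartialBlowup {t : ℕ} (D : Finset α) (T : α → Fin t → β) : Prop where
  injective : ∀ a ∈ D, Injective (T a)
  color_avail : ∀ a ∈ D, ∀ b, H.Adj a b → ∀ i, ∀ y ∈ S (φ b),
    C s((φ a, T a i), (φ b, y)) = c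
  color_chosen : ∀ a ∈ D, ∀ b ∈ D, H.Adj a b → ∀ i j,
    C s((φ a, T a i), (φ b, T b j)) = c

variable {H C φ c S} {t : ℕ}

theorem isMonoPartialBlowup_empty (T : α → Fin t → β) :
    IsMonoPartialBlowup H C φ c S ∅ T :=
  ⟨by simp, by simp, by simp⟩

theorem IsMonoPartialBlowup.mono {D : Finset α} {T : α → Fin t → β}
    (h : IsMonoPartialBlowup H C φ c S D T) {S' : V → Finset β} (hS' : ∀ v, S' v ⊆ S v) :
    IsMonoPartialBlowup H C φ c S' D T :=
  ⟨h.injective, fun a ha b hab i y hy => h.color_avail a ha b hab i y (hS' _ hy),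
    h.color_chosen⟩

theorem IsMonoPartialBlowup.insert [DecidableEq α] {D : Finset α} {T : α → Fin t → β}
    (h : IsMonoPartialBlowup H C φ c S D T) {a : α} {w : Fin t → β} (hw : Injective w)
    (hwS : ∀ i, w i ∈ S (φ a)) {S' : V → Finset β} (hS' : ∀ v, S' v ⊆ S v)
    (hcol : ∀ b, H.Adj a b → ∀ i, ∀ y ∈ S' (φ b), C s((φ a, w i), (φ b, y)) = c) :
    IsMonoPartialBlowup H C φ c S' (insert a D) (update T a w) := by
  have hmem {x} (hx : x ∈ Insert.insert a D) (hxa : x ≠ a) : x ∈ D :=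
    (mem_insert.1 hx).resolve_left hxa
  refine ⟨fun b hb => ?_, fun b hb b' hbb' i y hy => ?_, fun b hb b' hb' hbb' i j => ?_⟩
  · rcases eq_or_ne b a with rfl | hba
    · simpa using hw
    · rw [update_of_ne hba]
      exact h.injective b (hmem hb hba)
  · rcases eq_or_ne b a with rfl | hba
    · simpa using hcol b' hbb' i y hy
    · rw [update_of_ne hba]
      exact h.color_avail b (hmem hb hba) b' hbb' i y (hS' _ hy)
  · rcases eq_or_ne b a with rfl | hba
    · rcases eq_or_ne b' b with rfl | hb'b
      · exact absurd hbb' (H.loopless.irrefl _)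
      · rw [update_self, update_of_ne hb'b, Sym2.eq_swap]
        exact h.color_avail b' (hmem hb' hb'b) b hbb'.symm j _ (hwS i)
    · rcases eq_or_ne b' a with rfl | hb'a
      · rw [update_self, update_of_ne hba]
        exact h.color_avail b (hmem hb hba) b' hbb' i _ (hwS j)
      · rw [update_of_ne hba, update_of_ne hb'a]
        exact h.color_chosen b (hmem hb hba) b' (hmem hb' hb'a) hbb' i j

end PartialBlowup

section Blowup

variable {α V : Type} [Fintype α] {G : SimpleGraph V} {H : SimpleGraph α} {r : ℕ}

theorem IsMonoPartialBlowup.hasMonoCanonicalBlowup {n t : ℕ} {C : Sym2 (V × Fin n) → Fin r}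
    {φ : α → V} {c : Fin r} {S : V → Finset (Fin n)} {T : α → Fin t → Fin n}
    (h : IsMonoPartialBlowup H C φ c S univ T) (hφ : IsCopy G H φ) :
    HasMonoCanonicalBlowup G H n t r C :=
  ⟨φ, T, c, hφ.1, fun a => h.injective a (mem_univ a),
    fun a b hab => ⟨hφ.2 a b hab, h.color_chosen a (mem_univ a) b (mem_univ b) hab⟩⟩

variable [Fintype V]

theorem exists_isCopy_le_card_monoCopies {β : Type*} (hGH : ArrowsFor G H r)
    (C : Sym2 (V × β) → Fin r) {m : ℕ} {S : V → Finset β} (hS : ∀ v, #(S v) = m)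
    (hm : 0 < m) :
    ∃ φ c, IsCopy G H φ ∧
      m ^ Fintype.card α ≤ Fintype.card ((α → V) × Fin r) * #(monoCopies H C φ c S) := by
  have hcopy : ∀ g : V → β, ∃ p : (α → V) × Fin r, IsCopy G H p.1 ∧
      ∀ a b, H.Adj a b → C s((p.1 a, g (p.1 a)), (p.1 b, g (p.1 b))) = p.2 := by
    intro g
    obtain ⟨φ, c, hφ, hadj⟩ := hGH (C ∘ Sym2.map fun v => (v, g v))
    exact ⟨(φ, c), ⟨hφ, fun a b h => (hadj a b h).1⟩,
      fun a b h => by simpa using (hadj a b h).2⟩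
  choose F hF hFcol using hcopy
  set k := Fintype.card α
  set N := Fintype.card V
  set P := Fintype.card ((α → V) × Fin r)
  set T := Fintype.piFinset S
  have hT : #T = m ^ N := by simp [T, N, hS]
  obtain ⟨g₀, -⟩ := card_pos.1 (hT ▸ pow_pos hm _ : 0 < #T)
  obtain ⟨p, -, hp⟩ : ∃ p ∈ (univ : Finset ((α → V) × Fin r)),
      m ^ N ≤ P * #{g ∈ T | F g = p} := by
    refine exists_le_of_sum_le (univ_nonempty_iff.2 ⟨F g₀⟩) ?_
    rw [sum_const, smul_eq_mul, card_univ, ← hT, ← mul_sum,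
      ← card_eq_sum_card_fiberwise fun g _ => mem_univ (F g)]
  obtain ⟨g₁, hg₁⟩ : {g ∈ T | F g = p}.Nonempty := by
    refine card_pos.1 (Nat.pos_of_ne_zero fun h => ?_)
    rw [h, mul_zero] at hp
    exact (pow_pos hm _).ne' (Nat.le_zero.1 hp)
  have hp_copy : IsCopy G H p.1 := (mem_filter.1 hg₁).2 ▸ hF g₁
  have hfib : #{g ∈ T | F g = p} ≤ m ^ (N - k) * #(monoCopies H C p.1 p.2 S) := by
    refine card_le_mul_card_image_of_maps_to (f := fun g => g ∘ p.1) (fun g hg => ?_) _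
      fun x _ => (card_le_card (filter_subset_filter _ (filter_subset _ _))).trans
        (Fintype.card_filter_piFinset_comp_eq_le S hS hp_copy.1 x)
    obtain ⟨hgT, rfl⟩ := mem_filter.1 hg
    exact mem_monoCopies.2 ⟨fun a => Fintype.mem_piFinset.1 hgT _, hFcol g⟩
  have hkN : k ≤ N := Fintype.card_le_of_injective _ hp_copy.1
  refine ⟨p.1, p.2, hp_copy, Nat.le_of_mul_le_mul_right (c := m ^ (N - k)) ?_ (pow_pos hm _)⟩
  calc m ^ k * m ^ (N - k) = m ^ N := by rw [← pow_add, Nat.add_sub_cancel' hkN]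
    _ ≤ P * (m ^ (N - k) * #(monoCopies H C p.1 p.2 S)) := hp.trans (Nat.mul_le_mul_left _ hfib)
    _ = _ := by ring

theorem hasMonoCanonicalBlowup_or_exists_larger_isMonoPartialBlowup (hGH : ArrowsFor G H r)
    {n t m P : ℕ} (hP : Fintype.card ((α → V) × Fin r) ≤ P)
    (C : Sym2 (V × Fin n) → Fin r)
    {S : V → Finset (Fin n)} (hS : ∀ v, #(S v) = m) (hm₀ : 0 < m)
    (hm : 2 * t ^ 2 * P ^ (t + 1) ≤ m)
    {D : (α → V) × Fin r → Finset α} {T : (α → V) × Fin r → α → Fin t → Fin n}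
    (h : ∀ p, IsMonoPartialBlowup H C p.1 p.2 S (D p) (T p)) :
    HasMonoCanonicalBlowup G H n t r C ∨
      ∃ (S' : V → Finset (Fin n)) (D' : (α → V) × Fin r → Finset α)
        (T' : (α → V) × Fin r → α → Fin t → Fin n),
        (∀ v, #(S' v) = m / (2 * P ^ (t + 1))) ∧
        (∀ p, IsMonoPartialBlowup H C p.1 p.2 S' (D' p) (T' p)) ∧
        ∑ p, #(D p) < ∑ p, #(D' p) := by
  obtain ⟨φ, c, hφ, hX⟩ := exists_isCopy_le_card_monoCopies hGH C hS hm₀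
  by_cases hfull : D (φ, c) = univ
  · exact .inl ((hfull ▸ h (φ, c)).hasMonoCanonicalBlowup hφ)
  obtain ⟨a, ha⟩ : ∃ a, a ∉ D (φ, c) := by simpa [eq_univ_iff_forall] using hfull
  obtain ⟨w, hw, hwS, hwX⟩ := exists_injective_le_card_compatibleMonoCopies hS
    (hX.trans (Nat.mul_le_mul_right _ hP)) a hm₀ hm
  obtain ⟨S', hS'S, hS', hS'col⟩ := exists_shrink_of_le_card_compatibleMonoCopies hS a w hwX
  refine .inr ⟨S', update D (φ, c) (insert a (D (φ, c))),
    update T (φ, c) (update (T (φ, c)) a w), hS', fun p => ?_,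
    sum_lt_sum (fun p _ => ?_) ⟨(φ, c), mem_univ _, ?_⟩⟩
  · rcases eq_or_ne p (φ, c) with rfl | hp
    · simpa using (h (φ, c)).insert hw hwS hS'S hS'col
    · simpa [hp] using (h p).mono hS'S
  · rcases eq_or_ne p (φ, c) with rfl | hp
    · simpa using card_le_card (subset_insert a (D (φ, c)))
    · simp [hp]
  · simpa using card_lt_card (ssubset_insert ha)

theorem hasMonoCanonicalBlowup_of_isMonoPartialBlowup (hGH : ArrowsFor G H r) {n t P : ℕ}
    (hP : Fintype.card ((α → V) × Fin r) ≤ P) (hP₀ : 0 < P) (ht : 1 ≤ t)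
    (C : Sym2 (V × Fin n) → Fin r) (j : ℕ) {m : ℕ} {S : V → Finset (Fin n)}
    (hS : ∀ v, #(S v) = m) (hm : 2 * t ^ 2 * P ^ (t + 1) * (2 * P ^ (t + 1)) ^ j ≤ m)
    {D : (α → V) × Fin r → Finset α} {T : (α → V) × Fin r → α → Fin t → Fin n}
    (h : ∀ p, IsMonoPartialBlowup H C p.1 p.2 S (D p) (T p))
    (hD : P * Fintype.card α < ∑ p, #(D p) + j) :
    HasMonoCanonicalBlowup G H n t r C := by
  induction j generalizing m S D T with
  | zero =>
    have : ∑ p, #(D p) ≤ P * Fintype.card α :=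
      calc ∑ p, #(D p) ≤ ∑ _p : (α → V) × Fin r, Fintype.card α :=
            sum_le_sum fun p _ => card_le_univ (D p)
        _ ≤ P * Fintype.card α := by
            rw [sum_const, card_univ, smul_eq_mul]
            exact Nat.mul_le_mul_right _ hP
    omega
  | succ j ih =>
    have hQ : 0 < 2 * P ^ (t + 1) := by positivity
    rcases hasMonoCanonicalBlowup_or_exists_larger_isMonoPartialBlowup hGH hP C hS
      (lt_of_lt_of_le (by positivity) hm)
      (le_of_mul_le_of_one_le_left hm (Nat.one_le_pow _ _ hQ)) h with
      hC | ⟨S', D', T', hS', h', hDD'⟩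
    · exact hC
    · refine ih hS' ((Nat.le_div_iff_mul_le hQ).2 ?_) h' (by omega)
      rwa [mul_assoc, ← pow_succ]

end Blowup

end BlowupRamsey

/-- Souza's theorem, Theorem 1.1. If `G →_r H`, then there is a constant
`c = c(G,H,r)` such that `B_r(G → H; t) ≤ c^t` for every positive integer `t`. -/
theorem souza_exponential_upper_bound
    (α V : Type) [Fintype α] [Fintype V] (H : SimpleGraph α) (G : SimpleGraph V)
    (r : ℕ) (hr : 1 ≤ r) (hGH : ArrowsFor G H r) :
    ∃ c : ℝ, 0 < c ∧ ∀ t : ℕ, 1 ≤ t →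
      ∃ n : ℕ, (n : ℝ) ≤ c ^ t ∧ BlowupArrow G H r n t := by
  classical
  obtain ⟨φ, c, -⟩ := hGH fun _ => ⟨0, hr⟩
  set P := Fintype.card ((α → V) × Fin r)
  have hP : 0 < P := Fintype.card_pos_iff.2 ⟨(φ, c)⟩
  set j := P * Fintype.card α + 1
  refine ⟨((8 * P ^ 2) ^ (j + 1) : ℕ), by positivity, fun t ht => ?_⟩
  refine ⟨2 * t ^ 2 * P ^ (t + 1) * (2 * P ^ (t + 1)) ^ j, ?_, fun C => ?_⟩
  · exact_mod_cast BlowupRamsey.two_mul_sq_mul_pow_succ_mul_pow_le ht hP j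
  · exact BlowupRamsey.hasMonoCanonicalBlowup_of_isMonoPartialBlowup hGH le_rfl hP ht C j
      (S := fun _ => univ) (fun _ => card_fin _) le_rfl (T := fun _ _ _ => ⟨0, by positivity⟩)
      (fun _ => BlowupRamsey.isMonoPartialBlowup_empty _)
      (by rw [sum_eq_zero fun _ _ => card_empty, zero_add]; exact Nat.lt_succ_self _)
end

section
/- Let H be a graph with at least one edge and r ≥ 2 an integer. There exists a constant c' = c'(H,r) > 1 such that for every graph G, if t is sufficiently large in terms of G (and H, r) and n ≤ (c')^t, then there exists an r-coloring of the edges of G[n] containing no monochromatic canonical copy of H[t]. -/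
/-!
Colour an edge of `G[n]` by a colour of the pair of blowup indices of its endpoints, taken from
a colouring of the pairs of `Fin n` in which no `t × t` grid `s(u i, v j)` is monochromatic:
over any edge of `H`, a canonical copy of `H[t]` contains such a grid. A grid covers at least
`t² / 2` pairs, so by the union bound over the at most `n ^ (2 t) r` choices of grid and colour
a random `r`-colouring works once `n ^ (2 t) r < r ^ (t² / 2)`, which holds for
`n ≤ r ^ (t / 8)` and `t ≥ 3`.
-/

open Finset

theorem Finset.card_le_two_mul_card_image_sym2Mk {α : Type*} [DecidableEq α]
    (s : Finset (α × α)) : #s ≤ 2 * #(s.image Sym2.mk.uncurry) := by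
  refine card_le_mul_card_image (f := Sym2.mk.uncurry) s 2 fun z _ => ?_
  induction z using Sym2.inductionOn with
  | hf x y =>
    calc #{p ∈ s | Sym2.mk.uncurry p = s(x, y)} ≤ #({(x, y), (y, x)} : Finset (α × α)) := by
          refine card_le_card fun ⟨a, b⟩ hp => ?_
          rcases Sym2.eq_iff.1 (mem_filter.1 hp).2 with ⟨rfl, rfl⟩ | ⟨rfl, rfl⟩ <;> simp
      _ ≤ 2 := card_le_two

def sym2Grid {ι κ β : Type*} [Fintype ι] [Fintype κ] [DecidableEq β]
    (u : ι ↪ β) (v : κ ↪ β) : Finset (Sym2 β) :=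
  (univ.map (u.prodMap v)).image Sym2.mk.uncurry

theorem card_mul_card_le_two_mul_card_sym2Grid {ι κ β : Type*} [Fintype ι] [Fintype κ]
    [DecidableEq β] (u : ι ↪ β) (v : κ ↪ β) :
    Fintype.card ι * Fintype.card κ ≤ 2 * #(sym2Grid u v) := by
  simpa [sym2Grid] using (univ.map (u.prodMap v)).card_le_two_mul_card_image_sym2Mk

theorem card_filter_forall_mem_eq_mul_pow {β γ : Type*} [Fintype β] [DecidableEq β]
    [Fintype γ] [DecidableEq γ] (S : Finset β) (c : γ) :
    #{g : β → γ | ∀ e ∈ S, g e = c} * Fintype.card γ ^ #S =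
      Fintype.card γ ^ Fintype.card β := by
  have hpi : ({g : β → γ | ∀ e ∈ S, g e = c} : Finset (β → γ)) =
      Fintype.piFinset fun e => if e ∈ S then {c} else univ := by
    ext g
    simp only [mem_filter, mem_univ, true_and, Fintype.mem_piFinset]
    refine forall_congr' fun e => ?_
    split_ifs <;> simp_all
  simp only [hpi, Fintype.card_piFinset, apply_ite card, card_singleton, card_univ, prod_ite,
    prod_const_one, one_mul, prod_const, ← pow_add]
  rw [filter_notMem_eq_sdiff, card_sdiff_add_card_eq_card (subset_univ S), card_univ]

def HasMonoGrid {β γ : Type*} (g : Sym2 β → γ) (t : ℕ) : Prop :=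
  ∃ (u v : Fin t ↪ β) (c : γ), ∀ i j, g s(u i, v j) = c

theorem card_filter_forall_mem_sym2Grid_mul_pow_le {β γ : Type*} [Fintype β] [DecidableEq β]
    [Fintype γ] [DecidableEq γ] [Nonempty γ] {t : ℕ} (u v : Fin t ↪ β) (c : γ) :
    #{g : Sym2 β → γ | ∀ e ∈ sym2Grid u v, g e = c} * Fintype.card γ ^ (t ^ 2 / 2) ≤
      Fintype.card γ ^ Fintype.card (Sym2 β) := by
  have hgrid := card_mul_card_le_two_mul_card_sym2Grid u v
  rw [Fintype.card_fin, ← sq] at hgrid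
  calc _ ≤ #{g : Sym2 β → γ | ∀ e ∈ sym2Grid u v, g e = c} *
        Fintype.card γ ^ #(sym2Grid u v) :=
        Nat.mul_le_mul_left _ (Nat.pow_le_pow_right Fintype.card_pos (by omega))
    _ = _ := card_filter_forall_mem_eq_mul_pow _ _

open scoped Classical in
theorem card_filter_hasMonoGrid_mul_pow_le {β γ : Type*} [Fintype β] [Fintype γ] [Nonempty γ]
    (t : ℕ) :
    #{g : Sym2 β → γ | HasMonoGrid g t} * Fintype.card γ ^ (t ^ 2 / 2) ≤
      Fintype.card β ^ (2 * t) * Fintype.card γ * Fintype.card γ ^ Fintype.card (Sym2 β) := by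
  let X := (Fin t ↪ β) × (Fin t ↪ β) × γ
  let constOnGrid (x : X) : Finset (Sym2 β → γ) :=
    {g | ∀ e ∈ sym2Grid x.1 x.2.1, g e = x.2.2}
  have hbad : ({g | HasMonoGrid g t} : Finset (Sym2 β → γ)) ⊆ univ.biUnion constOnGrid := by
    intro g hg
    obtain ⟨u, v, c, huv⟩ := (mem_filter.1 hg).2
    refine mem_biUnion.2 ⟨(u, v, c), mem_univ _, mem_filter.2 ⟨mem_univ _, fun e he => ?_⟩⟩
    obtain ⟨p, hp, rfl⟩ := mem_image.1 he
    obtain ⟨⟨i, j⟩, -, rfl⟩ := mem_map.1 hp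
    exact huv i j
  have hX : Fintype.card X ≤ Fintype.card β ^ (2 * t) * Fintype.card γ := by
    simp only [X, Fintype.card_prod, Fintype.card_embedding_eq, Fintype.card_fin]
    have hemb := (Fintype.card β).descFactorial_le_pow t
    rw [two_mul, pow_add, mul_assoc]
    gcongr
  calc _ ≤ ∑ x, #(constOnGrid x) * Fintype.card γ ^ (t ^ 2 / 2) := by
        rw [← sum_mul]
        exact Nat.mul_le_mul_right _ ((card_le_card hbad).trans card_biUnion_le)
    _ ≤ ∑ _x : X, Fintype.card γ ^ Fintype.card (Sym2 β) :=
        sum_le_sum fun x _ => card_filter_forall_mem_sym2Grid_mul_pow_le x.1 x.2.1 x.2.2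
    _ = Fintype.card X * Fintype.card γ ^ Fintype.card (Sym2 β) := by simp
    _ ≤ _ := Nat.mul_le_mul_right _ hX

theorem exists_not_hasMonoGrid {β γ : Type*} [Fintype β] [Fintype γ] [Nonempty γ] {t : ℕ}
    (h : Fintype.card β ^ (2 * t) * Fintype.card γ < Fintype.card γ ^ (t ^ 2 / 2)) :
    ∃ g : Sym2 β → γ, ¬ HasMonoGrid g t := by
  classical
  have hlt : Fintype.card γ ^ (t ^ 2 / 2) * #{g : Sym2 β → γ | HasMonoGrid g t} <
      Fintype.card γ ^ (t ^ 2 / 2) * Fintype.card (Sym2 β → γ) := by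
    rw [mul_comm, Fintype.card_fun]
    exact (card_filter_hasMonoGrid_mul_pow_le t).trans_lt
      (Nat.mul_lt_mul_of_pos_right h (pow_pos Fintype.card_pos _))
  obtain ⟨g, -, hg⟩ := exists_mem_notMem_of_card_lt_card
    (s := ({g | HasMonoGrid g t} : Finset (Sym2 β → γ))) (t := univ)
    (by rw [card_univ]; exact Nat.lt_of_mul_lt_mul_left hlt)
  simp only [mem_filter, mem_univ, true_and] at hg
  exact ⟨g, hg⟩

theorem pow_two_mul_mul_lt_pow_sq_div_two {k n t : ℕ} (hk : 2 ≤ k) (ht : 3 ≤ t)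
    (hn : n ^ 8 ≤ k ^ t) : n ^ (2 * t) * k < k ^ (t ^ 2 / 2) := by
  refine lt_of_pow_lt_pow_left₀ 8 (Nat.zero_le _) ?_
  have ht2 : 9 ≤ t ^ 2 := by nlinarith
  calc (n ^ (2 * t) * k) ^ 8 = (n ^ 8) ^ (2 * t) * k ^ 8 := by ring
    _ ≤ (k ^ t) ^ (2 * t) * k ^ 8 := by gcongr
    _ = k ^ (2 * t ^ 2 + 8) := by ring
    _ < k ^ (8 * (t ^ 2 / 2)) := Nat.pow_lt_pow_right hk (by omega)
    _ = (k ^ (t ^ 2 / 2)) ^ 8 := by ring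

theorem not_hasMonoCanonicalBlowup_of_not_hasMonoGrid {V α : Type} {G : SimpleGraph V}
    {H : SimpleGraph α} (hH : ∃ x y, H.Adj x y) {n t r : ℕ} {g : Sym2 (Fin n) → Fin r}
    (hg : ¬ HasMonoGrid g t) :
    ¬ HasMonoCanonicalBlowup G H n t r (fun e => g (e.map Prod.snd)) := by
  rintro ⟨φ, ψ, c, -, hψ, hmono⟩
  obtain ⟨x, y, hxy⟩ := hH
  exact hg ⟨⟨ψ x, hψ x⟩, ⟨ψ y, hψ y⟩, c, (hmono x y hxy).2⟩

theorem blowup_ramsey_lower_bound_general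
    (α : Type) (H : SimpleGraph α) (hH : ∃ x y, H.Adj x y)
    (r : ℕ) (hr : 2 ≤ r) :
    ∃ c' : ℝ, 1 < c' ∧ ∀ (V : Type) [Fintype V] (G : SimpleGraph V),
      ∃ t₀ : ℕ, ∀ t : ℕ, t₀ ≤ t → ∀ n : ℕ, (n : ℝ) ≤ c' ^ t →
        ∃ C : Sym2 (V × Fin n) → Fin r, ¬ HasMonoCanonicalBlowup G H n t r C := by
  have hr0 : (0 : ℝ) ≤ r := Nat.cast_nonneg r
  refine ⟨(r : ℝ) ^ ((8 : ℕ)⁻¹ : ℝ), Real.one_lt_rpow (mod_cast hr) (by norm_num),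
    fun V _ G => ⟨3, fun t ht n hn => ?_⟩⟩
  have hn8 : n ^ 8 ≤ r ^ t := by
    have : (n : ℝ) ^ 8 ≤ (r : ℝ) ^ t :=
      calc (n : ℝ) ^ 8 ≤ (((r : ℝ) ^ ((8 : ℕ)⁻¹ : ℝ)) ^ t) ^ 8 := by gcongr
        _ = (r : ℝ) ^ t := by
          rw [← pow_mul, mul_comm, pow_mul, Real.rpow_inv_natCast_pow hr0 (by norm_num)]
    exact_mod_cast this
  have : NeZero r := ⟨by omega⟩
  obtain ⟨g, hg⟩ := exists_not_hasMonoGrid (β := Fin n) (γ := Fin r) (t := t)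
    (by simpa using pow_two_mul_mul_lt_pow_sq_div_two hr ht hn8)
  exact ⟨_, not_hasMonoCanonicalBlowup_of_not_hasMonoGrid hH hg⟩

/-- Souza's lower bound. For `H` with at least one edge and `r ≥ 2`, there is
a constant `c' = c'(H,r) > 1` such that for every graph `G`, if `t` is sufficiently large in
terms of `G` (and `H`, `r`) and `n ≤ (c')^t`, then some `r`-coloring of the edges of `G[n]`
contains no monochromatic canonical copy of `H[t]`. -/
theorem blowup_ramsey_lower_bound
    (α : Type) [Fintype α] (H : SimpleGraph α) (hH : ∃ x y, H.Adj x y)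
    (r : ℕ) (hr : 2 ≤ r) :
    ∃ c' : ℝ, 1 < c' ∧ ∀ (V : Type) [Fintype V] (G : SimpleGraph V),
      ∃ t₀ : ℕ, ∀ t : ℕ, t₀ ≤ t → ∀ n : ℕ, (n : ℝ) ≤ c' ^ t →
        ∃ C : Sym2 (V × Fin n) → Fin r, ¬ HasMonoCanonicalBlowup G H n t r C :=
  blowup_ramsey_lower_bound_general α H hH r hr
end

section
/- Let r ≥ 1 and m ≥ 2 be integers, let 0 < ε < 1/2, and set β = ε^{m² ε^{−5}}. Suppose F is an m-partite graph with parts V_1, …, V_m whose edge set is partitioned into r color classes, giving graphs F_1, …, F_r on the same vertex set. Then there exists a cylinder partition K of V_1 × ⋯ × V_m into at most 4^{m² ε^{−5}} cylinders such that K is ε-regular with respect to each of the graphs F_1, …, F_r, and moreover every cylinder K ∈ K satisfies |V_i(K)| ≥ β |V_i| for all i ∈ [m]. -/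
open Finset SimpleGraph

set_option linter.unusedSectionVars false
namespace WeakReg

variable {V : Type} [DecidableEq V] (G : SimpleGraph V) [DecidableRel G.Adj]

/-- number of edges between `s` and `t` -/
noncomputable def ee (s t : Finset V) : ℕ := (G.interedges s t).card

/-- real edge density -/
noncomputable def dd (s t : Finset V) : ℝ := (G.edgeDensity s t : ℝ)

lemma dd_nonneg (s t : Finset V) : 0 ≤ dd G s t := by
  unfold dd; exact_mod_cast G.edgeDensity_nonneg s t

lemma dd_le_one (s t : Finset V) : dd G s t ≤ 1 := by
  unfold dd; exact_mod_cast G.edgeDensity_le_one s t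

lemma dd_comm (s t : Finset V) : dd G s t = dd G t s := by
  unfold dd; rw [edgeDensity_comm]

lemma ee_le (s t : Finset V) : ee G s t ≤ s.card * t.card :=
  G.card_interedges_le_mul s t

lemma dd_mul (s t : Finset V) :
    dd G s t * ((s.card : ℝ) * t.card) = (ee G s t : ℝ) := by
  unfold dd ee
  rcases Nat.eq_zero_or_pos (s.card * t.card) with h | h
  · have : (G.interedges s t).card = 0 :=
      Nat.le_zero.1 (h ▸ G.card_interedges_le_mul s t)
    rw [this]
    rcases Nat.mul_eq_zero.1 h with h' | h' <;> simp [h']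
  · rw [edgeDensity_def]
    push_cast
    rw [div_mul_cancel₀]
    have : (0:ℝ) < (s.card * t.card : ℕ) := by exact_mod_cast h
    push_cast at this
    exact ne_of_gt this

lemma interedges_union_left (s s' t : Finset V) :
    G.interedges (s ∪ s') t = G.interedges s t ∪ G.interedges s' t := by
  ext x
  simp [mem_interedges_iff, mem_union, or_and_right]

lemma ee_sdiff_left {X s : Finset V} (hX : X ⊆ s) (t : Finset V) :
    ee G X t + ee G (s \ X) t = ee G s t := by
  unfold ee
  rw [← card_union_of_disjoint (G.interedges_disjoint_left disjoint_sdiff t),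
    ← interedges_union_left, union_sdiff_of_subset hX]

lemma interedges_union_right (s t t' : Finset V) :
    G.interedges s (t ∪ t') = G.interedges s t ∪ G.interedges s t' := by
  ext x
  simp only [mem_interedges_iff, mem_union]
  tauto

lemma ee_sdiff_right {Y t : Finset V} (hY : Y ⊆ t) (s : Finset V) :
    ee G s Y + ee G s (t \ Y) = ee G s t := by
  unfold ee
  rw [← card_union_of_disjoint (G.interedges_disjoint_right s disjoint_sdiff),
    ← interedges_union_right, union_sdiff_of_subset hY]


lemma ee_insert {x : V} {s : Finset V} (hx : x ∉ s) (t : Finset V) :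
    ee G (insert x s) t = ee G {x} t + ee G s t := by
  unfold ee
  rw [insert_eq, interedges_union_left,
    card_union_of_disjoint (G.interedges_disjoint_left (by simpa using hx) t)]

lemma sum_ee_singleton (s t : Finset V) : ∑ x ∈ s, ee G {x} t = ee G s t := by
  induction s using Finset.induction with
  | empty => simp [ee, interedges_empty_left]
  | insert _ _ hx ih => rw [sum_insert hx, ih, ee_insert _ hx]

lemma ee_erase {x : V} {X : Finset V} (hx : x ∈ X) (t : Finset V) :
    ee G {x} t + ee G (X.erase x) t = ee G X t := by
  rw [erase_eq]
  exact ee_sdiff_left G (by simpa using hx) t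

lemma sum_ee_erase (X t : Finset V) :
    ∑ x ∈ X, ee G (X.erase x) t + ee G X t = X.card * ee G X t := by
  have h : ∑ x ∈ X, (ee G {x} t + ee G (X.erase x) t) = ∑ x ∈ X, ee G X t :=
    Finset.sum_congr rfl fun x hx => ee_erase G hx t
  rw [Finset.sum_add_distrib, sum_ee_singleton, Finset.sum_const, smul_eq_mul] at h
  omega

lemma exists_erase_density_ge {X : Finset V} (h2 : 2 ≤ X.card) (Y : Finset V) :
    ∃ x ∈ X, G.edgeDensity X Y ≤ G.edgeDensity (X.erase x) Y := by
  have hne : X.Nonempty := card_pos.1 (by omega)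
  have hkey := sum_ee_erase G X Y
  have hsum : ∑ x ∈ X, (X.card - 1) * ee G X Y ≤ ∑ x ∈ X, X.card * ee G (X.erase x) Y := by
    rw [Finset.sum_const, smul_eq_mul, ← Finset.mul_sum]
    have h1 : (X.card - 1) * ee G X Y ≤ ∑ x ∈ X, ee G (X.erase x) Y := by
      rw [Nat.sub_one_mul, ← hkey, Nat.add_sub_cancel]
    exact Nat.mul_le_mul_left _ h1
  obtain ⟨x, hx, hle⟩ := Finset.exists_le_of_sum_le hne hsum
  refine ⟨x, hx, ?_⟩
  rcases Y.eq_empty_or_nonempty with rfl | hY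
  · simp [edgeDensity_empty_right]
  · have hY0 : 0 < Y.card := card_pos.2 hY
    have hX0 : 0 < X.card := by omega
    have hXe : (X.erase x).card = X.card - 1 := card_erase_of_mem hx
    have hXe1 : 0 < (X.erase x).card := by omega
    rw [edgeDensity_def, edgeDensity_def, div_le_div_iff₀ (by positivity) (by positivity)]
    have hc : ((X.card - 1) * ee G X Y : ℕ) ≤ (X.card * ee G (X.erase x) Y : ℕ) := hle
    have hc' : (((X.card : ℚ) - 1) * ee G X Y) ≤ ((X.card : ℚ) * ee G (X.erase x) Y) := by
      have h1 : (1:ℚ) ≤ (X.card : ℚ) := by exact_mod_cast hX0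
      calc ((X.card : ℚ) - 1) * ee G X Y = ((X.card - 1 : ℕ) : ℚ) * ee G X Y := by
            rw [Nat.cast_sub (by omega)]; push_cast; ring
        _ ≤ ((X.card * ee G (X.erase x) Y : ℕ) : ℚ) := by exact_mod_cast hc
        _ = (X.card : ℚ) * ee G (X.erase x) Y := by push_cast; ring
    show ((ee G X Y : ℚ)) * ((X.erase x).card * Y.card) ≤ (ee G (X.erase x) Y : ℚ) * (X.card * Y.card)
    have hYQ : (0:ℚ) ≤ (Y.card : ℚ) := by positivity
    have : ((X.erase x).card : ℚ) = (X.card : ℚ) - 1 := by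
      rw [hXe, Nat.cast_sub (by omega)]; push_cast; ring
    rw [this]
    nlinarith [hc', hYQ]
lemma exists_erase_density_le {X : Finset V} (h2 : 2 ≤ X.card) (Y : Finset V) :
    ∃ x ∈ X, G.edgeDensity (X.erase x) Y ≤ G.edgeDensity X Y := by
  have hne : X.Nonempty := card_pos.1 (by omega)
  have hkey := sum_ee_erase G X Y
  have hsum : ∑ x ∈ X, X.card * ee G (X.erase x) Y ≤ ∑ x ∈ X, (X.card - 1) * ee G X Y := by
    rw [Finset.sum_const, smul_eq_mul, ← Finset.mul_sum]
    have h1 : ∑ x ∈ X, ee G (X.erase x) Y ≤ (X.card - 1) * ee G X Y := by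
      rw [Nat.sub_one_mul, ← hkey, Nat.add_sub_cancel]
    exact Nat.mul_le_mul_left _ h1
  obtain ⟨x, hx, hle⟩ := Finset.exists_le_of_sum_le hne hsum
  refine ⟨x, hx, ?_⟩
  rcases Y.eq_empty_or_nonempty with rfl | hY
  · simp [edgeDensity_empty_right]
  · have hY0 : 0 < Y.card := card_pos.2 hY
    have hX0 : 0 < X.card := by omega
    have hXe : (X.erase x).card = X.card - 1 := card_erase_of_mem hx
    have hXe1 : 0 < (X.erase x).card := by omega
    rw [edgeDensity_def, edgeDensity_def, div_le_div_iff₀ (by positivity) (by positivity)]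
    have hc' : ((X.card : ℚ) * ee G (X.erase x) Y) ≤ (((X.card : ℚ) - 1) * ee G X Y) := by
      calc ((X.card : ℚ) * ee G (X.erase x) Y) = ((X.card * ee G (X.erase x) Y : ℕ) : ℚ) := by
            push_cast; ring
        _ ≤ (((X.card - 1) * ee G X Y : ℕ) : ℚ) := by exact_mod_cast hle
        _ = ((X.card : ℚ) - 1) * ee G X Y := by
            rw [Nat.cast_mul, Nat.cast_sub (by omega)]; push_cast; ring
    show ((ee G (X.erase x) Y : ℚ)) * (X.card * Y.card) ≤ (ee G X Y : ℚ) * ((X.erase x).card * Y.card)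
    have hYQ : (0:ℚ) ≤ (Y.card : ℚ) := by positivity
    have hcard : ((X.erase x).card : ℚ) = (X.card : ℚ) - 1 := by
      rw [hXe, Nat.cast_sub (by omega)]; push_cast; ring
    rw [hcard]
    nlinarith [hc', hYQ]

/-- Shrink a set to any given size while not decreasing the density to `Y`. -/
lemma shrink_ge (Y : Finset V) {X : Finset V} {k : ℕ} (hk1 : 1 ≤ k) (hk : k ≤ X.card) :
    ∃ X', X' ⊆ X ∧ X'.card = k ∧ G.edgeDensity X Y ≤ G.edgeDensity X' Y := by
  obtain ⟨n, hn⟩ : ∃ n, X.card = k + n := ⟨X.card - k, by omega⟩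
  clear hk
  induction n generalizing X with
  | zero => exact ⟨X, Finset.Subset.rfl, by omega, le_rfl⟩
  | succ n ih =>
      obtain ⟨x, hx, hd⟩ := exists_erase_density_ge G (X := X) (by omega) Y
      obtain ⟨X', hX', hc, hd'⟩ := ih (X := X.erase x) (by rw [card_erase_of_mem hx]; omega)
      exact ⟨X', hX'.trans (erase_subset _ _), hc, hd.trans hd'⟩

/-- Shrink a set to any given size while not increasing the density to `Y`. -/
lemma shrink_le (Y : Finset V) {X : Finset V} {k : ℕ} (hk1 : 1 ≤ k) (hk : k ≤ X.card) :
    ∃ X', X' ⊆ X ∧ X'.card = k ∧ G.edgeDensity X' Y ≤ G.edgeDensity X Y := by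
  obtain ⟨n, hn⟩ : ∃ n, X.card = k + n := ⟨X.card - k, by omega⟩
  clear hk
  induction n generalizing X with
  | zero => exact ⟨X, Finset.Subset.rfl, by omega, le_rfl⟩
  | succ n ih =>
      obtain ⟨x, hx, hd⟩ := exists_erase_density_le G (X := X) (by omega) Y
      obtain ⟨X', hX', hc, hd'⟩ := ih (X := X.erase x) (by rw [card_erase_of_mem hx]; omega)
      exact ⟨X', hX'.trans (erase_subset _ _), hc, hd'.trans hd⟩

/-- Shrink the right-hand set, keeping density at least as large. -/
lemma shrink_right_ge (X : Finset V) {Y : Finset V} {k : ℕ} (hk1 : 1 ≤ k) (hk : k ≤ Y.card) :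
    ∃ Y', Y' ⊆ Y ∧ Y'.card = k ∧ G.edgeDensity X Y ≤ G.edgeDensity X Y' := by
  obtain ⟨Y', h1, h2, h3⟩ := shrink_ge G X hk1 hk
  exact ⟨Y', h1, h2, by rwa [edgeDensity_comm G X, edgeDensity_comm G X]⟩

/-- Shrink the right-hand set, keeping density at least as small. -/
lemma shrink_right_le (X : Finset V) {Y : Finset V} {k : ℕ} (hk1 : 1 ≤ k) (hk : k ≤ Y.card) :
    ∃ Y', Y' ⊆ Y ∧ Y'.card = k ∧ G.edgeDensity X Y' ≤ G.edgeDensity X Y := by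
  obtain ⟨Y', h1, h2, h3⟩ := shrink_le G X hk1 hk
  exact ⟨Y', h1, h2, by rwa [edgeDensity_comm G X Y', edgeDensity_comm G X Y]⟩
section adjust
variable {ε : ℝ}

lemma adjust_ge (hε0 : 0 < ε) (hε : ε < 1/2) {s X₀ : Finset V} (Y₀ : Finset V)
    (hX₀ : X₀ ⊆ s) (hXc : (s.card : ℝ) * ε ≤ (X₀.card : ℝ)) :
    ∃ X, X ⊆ s ∧ (s.card : ℝ) * ε ≤ (X.card : ℝ) ∧
      (s \ X = ∅ ∨ ε^2 * s.card ≤ ((s \ X).card : ℝ)) ∧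
      G.edgeDensity X₀ Y₀ ≤ G.edgeDensity X Y₀ := by
  by_cases h : s \ X₀ = ∅ ∨ ε^2 * s.card ≤ ((s \ X₀).card : ℝ)
  · exact ⟨X₀, hX₀, hXc, h, le_rfl⟩
  push_neg at h
  obtain ⟨hne, hsmall⟩ := h
  have hd1 : 1 ≤ (s \ X₀).card := card_pos.2 hne
  have hd1R : (1:ℝ) ≤ ((s \ X₀).card : ℝ) := by exact_mod_cast hd1
  have hbig : (1:ℝ) < ε^2 * s.card := lt_of_le_of_lt hd1R hsmall
  have hε2 : ε^2 < 1/4 := by nlinarith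
  have hn4 : (4:ℝ) < s.card := by nlinarith
  set n := s.card with hn
  have hceilge : ε^2 * n ≤ (⌈ε^2 * (n:ℝ)⌉₊ : ℝ) := Nat.le_ceil _
  have hceillt : (⌈ε^2 * (n:ℝ)⌉₊ : ℝ) < ε^2 * n + 1 :=
    Nat.ceil_lt_add_one (by positivity)
  have hceil_le_n : ⌈ε^2 * (n:ℝ)⌉₊ ≤ n := by
    rw [Nat.ceil_le]
    nlinarith
  have hceil_lt_n : ⌈ε^2 * (n:ℝ)⌉₊ < n := by
    by_contra hcon
    push_neg at hcon
    have : (n:ℝ) ≤ (⌈ε^2 * (n:ℝ)⌉₊ : ℝ) := by exact_mod_cast hcon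
    nlinarith
  set k := n - ⌈ε^2 * (n:ℝ)⌉₊ with hk
  have hkR : (k:ℝ) = (n:ℝ) - (⌈ε^2 * (n:ℝ)⌉₊ : ℝ) := by
    rw [hk, Nat.cast_sub hceil_le_n]
  have hk1 : 1 ≤ k := by omega
  have hcs : (s \ X₀).card = n - X₀.card := card_sdiff_of_subset hX₀
  have hsdlt : (s \ X₀).card < ⌈ε^2 * (n:ℝ)⌉₊ := by
    have : ((s \ X₀).card : ℝ) < (⌈ε^2 * (n:ℝ)⌉₊ : ℝ) := lt_of_lt_of_le hsmall hceilge
    exact_mod_cast this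
  have hX₀le : X₀.card ≤ n := card_le_card hX₀
  have hkX : k ≤ X₀.card := by omega
  obtain ⟨X, hXsub, hXcard, hXd⟩ := shrink_ge G Y₀ hk1 hkX
  refine ⟨X, hXsub.trans hX₀, ?_, ?_, hXd⟩
  · rw [hXcard, hkR]
    nlinarith
  · right
    have hXs : X ⊆ s := hXsub.trans hX₀
    have : (s \ X).card = n - k := by rw [card_sdiff_of_subset hXs, hXcard]
    rw [this, Nat.cast_sub (by omega)]
    rw [hkR]
    nlinarith

lemma adjust_le (hε0 : 0 < ε) (hε : ε < 1/2) {s X₀ : Finset V} (Y₀ : Finset V)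
    (hX₀ : X₀ ⊆ s) (hXc : (s.card : ℝ) * ε ≤ (X₀.card : ℝ)) :
    ∃ X, X ⊆ s ∧ (s.card : ℝ) * ε ≤ (X.card : ℝ) ∧
      (s \ X = ∅ ∨ ε^2 * s.card ≤ ((s \ X).card : ℝ)) ∧
      G.edgeDensity X Y₀ ≤ G.edgeDensity X₀ Y₀ := by
  by_cases h : s \ X₀ = ∅ ∨ ε^2 * s.card ≤ ((s \ X₀).card : ℝ)
  · exact ⟨X₀, hX₀, hXc, h, le_rfl⟩
  push_neg at h
  obtain ⟨hne, hsmall⟩ := h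
  have hd1 : 1 ≤ (s \ X₀).card := card_pos.2 hne
  have hd1R : (1:ℝ) ≤ ((s \ X₀).card : ℝ) := by exact_mod_cast hd1
  have hbig : (1:ℝ) < ε^2 * s.card := lt_of_le_of_lt hd1R hsmall
  have hε2 : ε^2 < 1/4 := by nlinarith
  have hn4 : (4:ℝ) < s.card := by nlinarith
  set n := s.card with hn
  have hceilge : ε^2 * n ≤ (⌈ε^2 * (n:ℝ)⌉₊ : ℝ) := Nat.le_ceil _
  have hceillt : (⌈ε^2 * (n:ℝ)⌉₊ : ℝ) < ε^2 * n + 1 :=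
    Nat.ceil_lt_add_one (by positivity)
  have hceil_le_n : ⌈ε^2 * (n:ℝ)⌉₊ ≤ n := by
    rw [Nat.ceil_le]
    nlinarith
  have hceil_lt_n : ⌈ε^2 * (n:ℝ)⌉₊ < n := by
    by_contra hcon
    push_neg at hcon
    have : (n:ℝ) ≤ (⌈ε^2 * (n:ℝ)⌉₊ : ℝ) := by exact_mod_cast hcon
    nlinarith
  set k := n - ⌈ε^2 * (n:ℝ)⌉₊ with hk
  have hkR : (k:ℝ) = (n:ℝ) - (⌈ε^2 * (n:ℝ)⌉₊ : ℝ) := by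
    rw [hk, Nat.cast_sub hceil_le_n]
  have hk1 : 1 ≤ k := by omega
  have hcs : (s \ X₀).card = n - X₀.card := card_sdiff_of_subset hX₀
  have hsdlt : (s \ X₀).card < ⌈ε^2 * (n:ℝ)⌉₊ := by
    have : ((s \ X₀).card : ℝ) < (⌈ε^2 * (n:ℝ)⌉₊ : ℝ) := lt_of_lt_of_le hsmall hceilge
    exact_mod_cast this
  have hX₀le : X₀.card ≤ n := card_le_card hX₀
  have hkX : k ≤ X₀.card := by omega
  obtain ⟨X, hXsub, hXcard, hXd⟩ := shrink_le G Y₀ hk1 hkX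
  refine ⟨X, hXsub.trans hX₀, ?_, ?_, hXd⟩
  · rw [hXcard, hkR]
    nlinarith
  · right
    have hXs : X ⊆ s := hXsub.trans hX₀
    have : (s \ X).card = n - k := by rw [card_sdiff_of_subset hXs, hXcard]
    rw [this, Nat.cast_sub (by omega)]
    rw [hkR]
    nlinarith

/-- Adjusted witnesses for non-uniformity: big witness sets with big (or empty) complements. -/
lemma get_witnesses (hε0 : 0 < ε) (hε : ε < 1/2) {s t : Finset V}
    (hs : s.Nonempty) (ht : t.Nonempty) (hnu : ¬ G.IsUniform ε s t) :
    ∃ X Y, X ⊆ s ∧ Y ⊆ t ∧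
      ε * s.card ≤ (X.card : ℝ) ∧ ε * t.card ≤ (Y.card : ℝ) ∧
      ε ≤ |dd G X Y - dd G s t| ∧
      (s \ X = ∅ ∨ ε^2 * s.card ≤ ((s \ X).card : ℝ)) ∧
      (t \ Y = ∅ ∨ ε^2 * t.card ≤ ((t \ Y).card : ℝ)) := by
  rw [SimpleGraph.not_isUniform_iff] at hnu
  obtain ⟨X₀, hX₀, Y₀, hY₀, hXc, hYc, hdev0⟩ := hnu
  have hdev : ε ≤ |dd G X₀ Y₀ - dd G s t| := by
    unfold dd
    push_cast at hdev0
    exact hdev0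
  rcases le_total (dd G s t) (dd G X₀ Y₀) with hsign | hsign
  · have hdev' : ε ≤ dd G X₀ Y₀ - dd G s t := by
      rwa [abs_of_nonneg (by linarith)] at hdev
    obtain ⟨X, hXs, hXbig, hXrem, hXd⟩ := adjust_ge G hε0 hε Y₀ hX₀ hXc
    have hXdR : dd G X₀ Y₀ ≤ dd G X Y₀ := by unfold dd; exact_mod_cast hXd
    obtain ⟨Y, hYs, hYbig, hYrem, hYd⟩ := adjust_ge G hε0 hε X hY₀ hYc
    have hYdR : dd G Y₀ X ≤ dd G Y X := by unfold dd; exact_mod_cast hYd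
    rw [dd_comm G Y₀ X, dd_comm G Y X] at hYdR
    refine ⟨X, Y, hXs, hYs, by linarith [hXbig], by linarith [hYbig], ?_, hXrem, hYrem⟩
    rw [abs_of_nonneg (by linarith)]
    linarith
  · have hdev' : ε ≤ dd G s t - dd G X₀ Y₀ := by
      rwa [abs_of_nonpos (by linarith), neg_sub] at hdev
    obtain ⟨X, hXs, hXbig, hXrem, hXd⟩ := adjust_le G hε0 hε Y₀ hX₀ hXc
    have hXdR : dd G X Y₀ ≤ dd G X₀ Y₀ := by unfold dd; exact_mod_cast hXd
    obtain ⟨Y, hYs, hYbig, hYrem, hYd⟩ := adjust_le G hε0 hε X hY₀ hYc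
    have hYdR : dd G Y X ≤ dd G Y₀ X := by unfold dd; exact_mod_cast hYd
    rw [dd_comm G Y₀ X, dd_comm G Y X] at hYdR
    refine ⟨X, Y, hXs, hYs, by linarith [hXbig], by linarith [hYbig], ?_, hXrem, hYrem⟩
    rw [abs_of_nonpos (by linarith), neg_sub]
    linarith

end adjust
section algebra

lemma l2 {A Z x z w : ℝ} (hA : 0 ≤ A) (hZ : 0 ≤ Z)
    (hsum : x * A + z * Z = w * (A + Z)) :
    w^2 * (A + Z) ≤ x^2 * A + z^2 * Z := by
  have key : (A + Z) * (x^2*A + z^2*Z - w^2*(A+Z)) = A * Z * (x - z)^2 := by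
    linear_combination (x*A + z*Z + w*(A+Z)) * hsum
  rcases eq_or_lt_of_le (by positivity : (0:ℝ) ≤ A + Z) with h0 | h0
  · have hA0 : A = 0 := by linarith
    have hZ0 : Z = 0 := by linarith
    simp [hA0, hZ0]
  · nlinarith [mul_nonneg (mul_nonneg hA hZ) (sq_nonneg (x - z))]

lemma l3 {A1 A2 B1 B2 d11 d12 d21 d22 d : ℝ}
    (hA1 : 0 ≤ A1) (hA2 : 0 ≤ A2) (hB1 : 0 ≤ B1) (hB2 : 0 ≤ B2)
    (hsum : d11*A1*B1 + d12*A1*B2 + d21*A2*B1 + d22*A2*B2 = d*(A1+A2)*(B1+B2)) :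
    d^2*(A1+A2)*(B1+B2) + (d11-d)^2*A1*B1
      ≤ d11^2*A1*B1 + d12^2*A1*B2 + d21^2*A2*B1 + d22^2*A2*B2 := by
  have key : d11^2*A1*B1 + d12^2*A1*B2 + d21^2*A2*B1 + d22^2*A2*B2
      - (d^2*(A1+A2)*(B1+B2) + (d11-d)^2*A1*B1)
      = (d12-d)^2*A1*B2 + (d21-d)^2*A2*B1 + (d22-d)^2*A2*B2 := by
    linear_combination (2*d) * hsum
  nlinarith [mul_nonneg (mul_nonneg hA1 hB2) (sq_nonneg (d12-d)),
    mul_nonneg (mul_nonneg hA2 hB1) (sq_nonneg (d21-d)),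
    mul_nonneg (mul_nonneg hA2 hB2) (sq_nonneg (d22-d))]

/-- density of empty sets is zero -/
lemma dd_empty_left (t : Finset V) : dd G ∅ t = 0 := by
  simp [dd, edgeDensity_empty_left]

lemma dd_empty_right (s : Finset V) : dd G s ∅ = 0 := by
  simp [dd, edgeDensity_empty_right]

/-- One-sided convexity of density-squared, left splitting. -/
lemma convex_left {X s : Finset V} (hX : X ⊆ s) (u : Finset V) :
    dd G s u^2 * s.card ≤ dd G X u^2 * X.card + dd G (s\X) u^2 * (s\X).card := by
  rcases u.eq_empty_or_nonempty with rfl | hu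
  · simp [dd_empty_right]
  have hU : (0:ℝ) < u.card := by exact_mod_cast card_pos.2 hu
  have hAZ : (X.card : ℝ) + ((s\X).card : ℝ) = (s.card : ℝ) := by
    rw [card_sdiff_of_subset hX, Nat.cast_sub (card_le_card hX)]; ring
  have hsum : dd G X u * X.card + dd G (s\X) u * (s\X).card
      = dd G s u * ((X.card : ℝ) + ((s\X).card : ℝ)) := by
    have h1 := dd_mul G X u
    have h2 := dd_mul G (s\X) u
    have h3 := dd_mul G s u
    have hee : (ee G X u : ℝ) + (ee G (s\X) u : ℝ) = (ee G s u : ℝ) := by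
      have := ee_sdiff_left G hX u
      exact_mod_cast congrArg (fun n : ℕ => (n:ℝ)) this
    rw [hAZ]
    field_simp at h1 h2 h3 ⊢
    nlinarith [h1, h2, h3, hee, hU]
  calc dd G s u^2 * s.card = dd G s u^2 * ((X.card : ℝ) + ((s\X).card : ℝ)) := by rw [hAZ]
    _ ≤ _ := l2 (by positivity) (by positivity) hsum

/-- One-sided convexity of density-squared, right splitting. -/
lemma convex_right {Y t : Finset V} (hY : Y ⊆ t) (u : Finset V) :
    dd G u t^2 * t.card ≤ dd G u Y^2 * Y.card + dd G u (t\Y)^2 * (t\Y).card := by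
  rw [dd_comm G u t, dd_comm G u Y, dd_comm G u (t\Y)]
  exact convex_left G hY u

/-- The 2×2 defect inequality. -/
lemma defect22 {X s Y t : Finset V} (hX : X ⊆ s) (hY : Y ⊆ t) :
    dd G s t^2 * (s.card * t.card) + (dd G X Y - dd G s t)^2 * (X.card * Y.card)
      ≤ dd G X Y^2 * (X.card * Y.card) + dd G X (t\Y)^2 * (X.card * (t\Y).card)
        + dd G (s\X) Y^2 * ((s\X).card * Y.card)
        + dd G (s\X) (t\Y)^2 * ((s\X).card * (t\Y).card) := by
  have hA : (X.card : ℝ) + ((s\X).card : ℝ) = (s.card : ℝ) := by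
    rw [card_sdiff_of_subset hX, Nat.cast_sub (card_le_card hX)]; ring
  have hB : (Y.card : ℝ) + ((t\Y).card : ℝ) = (t.card : ℝ) := by
    rw [card_sdiff_of_subset hY, Nat.cast_sub (card_le_card hY)]; ring
  have hee : (ee G X Y : ℝ) + (ee G X (t\Y) : ℝ) + (ee G (s\X) Y : ℝ)
      + (ee G (s\X) (t\Y) : ℝ) = (ee G s t : ℝ) := by
    have h1 := ee_sdiff_right G hY X
    have h2 := ee_sdiff_right G hY (s\X)
    have h3 := ee_sdiff_left G hX t
    push_cast [← h1, ← h2, ← h3]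
    ring
  have hsum : dd G X Y * X.card * Y.card + dd G X (t\Y) * X.card * (t\Y).card
      + dd G (s\X) Y * (s\X).card * Y.card + dd G (s\X) (t\Y) * (s\X).card * (t\Y).card
      = dd G s t * ((X.card:ℝ) + (s\X).card) * ((Y.card:ℝ) + (t\Y).card) := by
    have k1 := dd_mul G X Y
    have k2 := dd_mul G X (t\Y)
    have k3 := dd_mul G (s\X) Y
    have k4 := dd_mul G (s\X) (t\Y)
    have k5 := dd_mul G s t
    rw [hA, hB]
    nlinarith [k1, k2, k3, k4, k5, hee]
  have := l3 (d := dd G s t) (by positivity : (0:ℝ) ≤ (X.card:ℝ))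
    (by positivity : (0:ℝ) ≤ ((s\X).card:ℝ)) (by positivity : (0:ℝ) ≤ (Y.card:ℝ))
    (by positivity : (0:ℝ) ≤ ((t\Y).card:ℝ)) hsum
  rw [hA, hB] at this
  nlinarith [this]

end algebra
section energy

variable {r m : ℕ} (F : Fin r → SimpleGraph V) [∀ c, DecidableRel (F c).Adj]

/-- ordered pairs of indices -/
def pairs (m : ℕ) : Finset (Fin m × Fin m) :=
  Finset.univ.filter (fun p => p.1 < p.2)

lemma mem_pairs {m : ℕ} {p : Fin m × Fin m} : p ∈ pairs m ↔ p.1 < p.2 := by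
  simp [pairs]

/-- energy (mean square density, weighted) of a cylinder -/
noncomputable def en (K : Fin m → Finset V) : ℝ :=
  ∑ c, ∑ p ∈ pairs m, (∏ k, ((K k).card : ℝ)) * dd (F c) (K p.1) (K p.2)^2

/-- the four-way split of a cylinder at coordinates i j -/
def upd (K : Fin m → Finset V) (i j : Fin m) (A B : Finset V) : Fin m → Finset V :=
  Function.update (Function.update K i A) j B

variable {K : Fin m → Finset V} {i j : Fin m} {A B : Finset V}

lemma upd_i (hij : i ≠ j) : upd K i j A B i = A := by
  simp [upd, Function.update_of_ne hij]

lemma upd_j : upd K i j A B j = B := by simp [upd]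

lemma upd_k {k : Fin m} (hki : k ≠ i) (hkj : k ≠ j) : upd K i j A B k = K k := by
  simp [upd, Function.update_of_ne hkj, Function.update_of_ne hki]

lemma prod_split (hij : i ≠ j) (f : Fin m → ℝ) :
    ∏ k, f k = f i * f j * ∏ k ∈ (Finset.univ.erase j).erase i, f k := by
  rw [← Finset.mul_prod_erase Finset.univ f (Finset.mem_univ j),
    ← Finset.mul_prod_erase (Finset.univ.erase j) f
      (Finset.mem_erase.2 ⟨hij, Finset.mem_univ i⟩)]
  ring

lemma prod_upd (hij : i ≠ j) :
    ∏ k, ((upd K i j A B k).card : ℝ)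
      = (A.card : ℝ) * B.card * ∏ k ∈ (Finset.univ.erase j).erase i, ((K k).card : ℝ) := by
  rw [prod_split hij (fun k => ((upd K i j A B k).card : ℝ)), upd_i hij, upd_j]
  congr 1
  apply Finset.prod_congr rfl
  intro k hk
  rw [Finset.mem_erase] at hk
  obtain ⟨hki, hk2⟩ := hk
  rw [Finset.mem_erase] at hk2
  rw [upd_k hki hk2.1]

end energy
section core

variable {r m : ℕ} (F : Fin r → SimpleGraph V) [∀ c, DecidableRel (F c).Adj]
variable {K : Fin m → Finset V} {i j : Fin m} {X Y : Finset V}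

lemma pair_ineq (c : Fin r) (hij : i < j) (hX : X ⊆ K i) (hY : Y ⊆ K j)
    {p : Fin m × Fin m} (hp : p.1 < p.2) :
    (∏ k, ((K k).card:ℝ)) * dd (F c) (K p.1) (K p.2)^2
      ≤ (∏ k, ((upd K i j X Y k).card:ℝ))
            * dd (F c) (upd K i j X Y p.1) (upd K i j X Y p.2)^2
        + (∏ k, ((upd K i j X (K j \ Y) k).card:ℝ))
            * dd (F c) (upd K i j X (K j \ Y) p.1) (upd K i j X (K j \ Y) p.2)^2
        + (∏ k, ((upd K i j (K i \ X) Y k).card:ℝ))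
            * dd (F c) (upd K i j (K i \ X) Y p.1) (upd K i j (K i \ X) Y p.2)^2
        + (∏ k, ((upd K i j (K i \ X) (K j \ Y) k).card:ℝ))
            * dd (F c) (upd K i j (K i \ X) (K j \ Y) p.1)
                (upd K i j (K i \ X) (K j \ Y) p.2)^2 := by
  have hijne : i ≠ j := hij.ne
  have hR0 : (0:ℝ) ≤ ∏ k ∈ (Finset.univ.erase j).erase i, ((K k).card : ℝ) :=
    Finset.prod_nonneg fun k _ => by positivity
  set R := ∏ k ∈ (Finset.univ.erase j).erase i, ((K k).card : ℝ) with hRdef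
  have hA : (X.card:ℝ) + ((K i \ X).card:ℝ) = ((K i).card:ℝ) := by
    rw [card_sdiff_of_subset hX, Nat.cast_sub (card_le_card hX)]; ring
  have hB : (Y.card:ℝ) + ((K j \ Y).card:ℝ) = ((K j).card:ℝ) := by
    rw [card_sdiff_of_subset hY, Nat.cast_sub (card_le_card hY)]; ring
  rw [prod_upd hijne, prod_upd hijne, prod_upd hijne, prod_upd hijne,
    prod_split hijne (fun k => ((K k).card:ℝ))]
  rcases eq_or_ne p.1 i with h1i | h1i
  · rcases eq_or_ne p.2 j with h2j | h2j
    · -- p = (i,j) : the 2×2 case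
      rw [h1i, h2j]
      simp only [upd_i hijne, upd_j]
      have h := mul_le_mul_of_nonneg_right (defect22 (F c) hX hY) hR0
      nlinarith [h, mul_nonneg (mul_nonneg (sq_nonneg (dd (F c) X Y - dd (F c) (K i) (K j)))
        (by positivity : (0:ℝ) ≤ (X.card:ℝ) * Y.card)) hR0]
    · -- p.1 = i, p.2 ∉ {i,j}
      have h2i : p.2 ≠ i := ne_of_gt (h1i ▸ hp)
      rw [h1i]
      simp only [upd_i hijne, upd_k h2i h2j]
      rw [← hB]
      have h := mul_le_mul_of_nonneg_right (convex_left (F c) hX (K p.2))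
        (mul_nonneg (by positivity : (0:ℝ) ≤ (Y.card:ℝ) + ((K j \ Y).card:ℝ)) hR0)
      nlinarith [h]
  · rcases eq_or_ne p.1 j with h1j | h1j
    · -- p.1 = j, p.2 ∉ {i,j}
      have h2j : p.2 ≠ j := ne_of_gt (h1j ▸ hp)
      have h2i : p.2 ≠ i := by
        intro h
        rw [h1j, h] at hp
        exact absurd (hij.trans hp) (lt_irrefl i)
      rw [h1j]
      simp only [upd_j, upd_k h2i h2j]
      rw [← hA]
      have h := mul_le_mul_of_nonneg_right (convex_left (F c) hY (K p.2))
        (mul_nonneg (by positivity : (0:ℝ) ≤ (X.card:ℝ) + ((K i \ X).card:ℝ)) hR0)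
      nlinarith [h]
    · rcases eq_or_ne p.2 i with h2i | h2i
      · -- p.2 = i, p.1 ∉ {i,j}
        have h1j' : p.1 ≠ j := by
          intro h
          rw [h, h2i] at hp
          exact absurd (hp.trans hij) (lt_irrefl j)
        rw [h2i]
        simp only [upd_i hijne, upd_k h1i h1j]
        rw [← hB]
        have h := mul_le_mul_of_nonneg_right (convex_right (F c) hX (K p.1))
          (mul_nonneg (by positivity : (0:ℝ) ≤ (Y.card:ℝ) + ((K j \ Y).card:ℝ)) hR0)
        nlinarith [h]
      · rcases eq_or_ne p.2 j with h2j | h2j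
        · -- p.2 = j, p.1 ∉ {i,j}
          rw [h2j]
          simp only [upd_j, upd_k h1i h1j]
          rw [← hA]
          have h := mul_le_mul_of_nonneg_right (convex_right (F c) hY (K p.1))
            (mul_nonneg (by positivity : (0:ℝ) ≤ (X.card:ℝ) + ((K i \ X).card:ℝ)) hR0)
          nlinarith [h]
        · -- p disjoint from {i,j}
          simp only [upd_k h1i h1j, upd_k h2i h2j]
          rw [← hA, ← hB]
          nlinarith [sq_nonneg (dd (F c) (K p.1) (K p.2)), hR0]

lemma pair_defect (c : Fin r) (hij : i < j) (hX : X ⊆ K i) (hY : Y ⊆ K j) :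
    (∏ k, ((K k).card:ℝ)) * dd (F c) (K i) (K j)^2
      + (dd (F c) X Y - dd (F c) (K i) (K j))^2
          * ((X.card:ℝ) * Y.card * ∏ k ∈ (Finset.univ.erase j).erase i, ((K k).card : ℝ))
      ≤ (∏ k, ((upd K i j X Y k).card:ℝ))
            * dd (F c) (upd K i j X Y i) (upd K i j X Y j)^2
        + (∏ k, ((upd K i j X (K j \ Y) k).card:ℝ))
            * dd (F c) (upd K i j X (K j \ Y) i) (upd K i j X (K j \ Y) j)^2
        + (∏ k, ((upd K i j (K i \ X) Y k).card:ℝ))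
            * dd (F c) (upd K i j (K i \ X) Y i) (upd K i j (K i \ X) Y j)^2
        + (∏ k, ((upd K i j (K i \ X) (K j \ Y) k).card:ℝ))
            * dd (F c) (upd K i j (K i \ X) (K j \ Y) i)
                (upd K i j (K i \ X) (K j \ Y) j)^2 := by
  have hijne : i ≠ j := hij.ne
  have hR0 : (0:ℝ) ≤ ∏ k ∈ (Finset.univ.erase j).erase i, ((K k).card : ℝ) :=
    Finset.prod_nonneg fun k _ => by positivity
  set R := ∏ k ∈ (Finset.univ.erase j).erase i, ((K k).card : ℝ) with hRdef
  rw [prod_upd hijne, prod_upd hijne, prod_upd hijne, prod_upd hijne,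
    prod_split hijne (fun k => ((K k).card:ℝ))]
  simp only [upd_i hijne, upd_j]
  have h := mul_le_mul_of_nonneg_right (defect22 (F c) hX hY) hR0
  nlinarith [h]

end core
section children

variable {r m : ℕ} (F : Fin r → SimpleGraph V) [∀ c, DecidableRel (F c).Adj]
variable {K : Fin m → Finset V} {i j : Fin m} {X Y : Finset V}

open scoped Classical in
lemma children_energy (c₀ : Fin r) (hij : i < j) (hX : X ⊆ K i) (hY : Y ⊆ K j) :
    en F K + (dd (F c₀) X Y - dd (F c₀) (K i) (K j))^2
        * ((X.card:ℝ) * Y.card * ∏ k ∈ (Finset.univ.erase j).erase i, ((K k).card:ℝ))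
      ≤ en F (upd K i j X Y) + en F (upd K i j X (K j \ Y))
        + en F (upd K i j (K i \ X) Y) + en F (upd K i j (K i \ X) (K j \ Y)) := by
  set D := (dd (F c₀) X Y - dd (F c₀) (K i) (K j))^2
      * ((X.card:ℝ) * Y.card * ∏ k ∈ (Finset.univ.erase j).erase i, ((K k).card:ℝ)) with hDdef
  have hp₀ : (i,j) ∈ pairs m := mem_pairs.2 hij
  have hD : (∑ c, ∑ p ∈ pairs m, (if (c = c₀ ∧ p = (i,j)) then D else 0)) = D := by
    have h1 : ∀ c : Fin r,
        (∑ p ∈ pairs m, if (c = c₀ ∧ p = (i,j)) then D else 0) = if c = c₀ then D else 0 := by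
      intro c
      by_cases hc : c = c₀
      · simp only [hc, true_and]
        rw [Finset.sum_ite_eq' (pairs m) ((i,j) : Fin m × Fin m) (fun _ => D)]
        simp [hp₀]
      · simp [hc]
    rw [Finset.sum_congr rfl (fun c _ => h1 c)]
    simp
  have key : ∀ c : Fin r, ∀ p ∈ pairs m,
      (∏ k, ((K k).card:ℝ)) * dd (F c) (K p.1) (K p.2)^2
          + (if (c = c₀ ∧ p = (i,j)) then D else 0)
        ≤ (∏ k, ((upd K i j X Y k).card:ℝ))
              * dd (F c) (upd K i j X Y p.1) (upd K i j X Y p.2)^2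
          + (∏ k, ((upd K i j X (K j \ Y) k).card:ℝ))
              * dd (F c) (upd K i j X (K j \ Y) p.1) (upd K i j X (K j \ Y) p.2)^2
          + (∏ k, ((upd K i j (K i \ X) Y k).card:ℝ))
              * dd (F c) (upd K i j (K i \ X) Y p.1) (upd K i j (K i \ X) Y p.2)^2
          + (∏ k, ((upd K i j (K i \ X) (K j \ Y) k).card:ℝ))
              * dd (F c) (upd K i j (K i \ X) (K j \ Y) p.1)
                  (upd K i j (K i \ X) (K j \ Y) p.2)^2 := by
    intro c p hp
    by_cases h : c = c₀ ∧ p = (i,j)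
    · obtain ⟨rfl, rfl⟩ := h
      rw [if_pos ⟨rfl, rfl⟩]
      exact pair_defect F c hij hX hY
    · rw [if_neg h, add_zero]
      exact pair_ineq F c hij hX hY (mem_pairs.1 hp)
  have hle := Finset.sum_le_sum (s := (Finset.univ : Finset (Fin r)))
    (fun c _ => Finset.sum_le_sum (key c))
  simp only [Finset.sum_add_distrib] at hle
  rw [hD] at hle
  unfold en
  linarith [hle]

end children
section refine

variable {r m : ℕ} (F : Fin r → SimpleGraph V) [∀ c, DecidableRel (F c).Adj] {ε : ℝ}

/-- a cylinder that fails to be uniform in some color -/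
def badAny (F : Fin r → SimpleGraph V) [∀ c, DecidableRel (F c).Adj] (ε : ℝ)
    (K : Fin m → Finset V) : Prop :=
  ∃ c, ¬ ∀ i j : Fin m, i ≠ j → (F c).IsUniform ε (K i) (K j)

lemma en_zero {K : Fin m → Finset V} (h : ¬ ∀ k, (K k).Nonempty) : en F K = 0 := by
  push_neg at h
  obtain ⟨k, hk⟩ := h
  have hk0 : ((K k).card : ℝ) = 0 := by
    simp [hk]
  unfold en
  apply Finset.sum_eq_zero
  intro c _
  apply Finset.sum_eq_zero
  intro p _
  rw [Finset.prod_eq_zero (Finset.mem_univ k) hk0, zero_mul]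

set_option maxHeartbeats 2000000 in
open scoped Classical in
lemma refine_one (hε0 : 0 < ε) (hε : ε < 1/2) {K : Fin m → Finset V}
    (hne : ∀ k, (K k).Nonempty) (hbad : badAny F ε K) :
    ∃ 𝒞 : Finset (Fin m → Finset V),
      𝒞.card ≤ 4 ∧
      (∀ C ∈ 𝒞, ∀ k, C k ⊆ K k ∧ ε^2 * ((K k).card:ℝ) ≤ ((C k).card:ℝ)) ∧
      (∀ v : Fin m → V, (∀ k, v k ∈ K k) → ∃! C, C ∈ 𝒞 ∧ ∀ k, v k ∈ C k) ∧
      en F K + ε^4 * ∏ k, ((K k).card:ℝ) ≤ ∑ C ∈ 𝒞, en F C := by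
  -- extract a bad pair i < j and a color
  obtain ⟨c₀, hc⟩ := hbad
  push_neg at hc
  obtain ⟨i₀, j₀, hij₀, hnu₀⟩ := hc
  obtain ⟨i, j, hij, hnu⟩ : ∃ i j : Fin m, i < j ∧ ¬ (F c₀).IsUniform ε (K i) (K j) := by
    rcases lt_or_gt_of_ne hij₀ with h | h
    · exact ⟨i₀, j₀, h, hnu₀⟩
    · exact ⟨j₀, i₀, h, fun hu => hnu₀ hu.symm⟩
  have hijne : i ≠ j := hij.ne
  obtain ⟨X, Y, hXs, hYs, hXbig, hYbig, hdev, hXrem, hYrem⟩ :=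
    get_witnesses (F c₀) hε0 hε (hne i) (hne j) hnu
  have hKi0 : (0:ℝ) < (K i).card := by exact_mod_cast Finset.card_pos.2 (hne i)
  have hKj0 : (0:ℝ) < (K j).card := by exact_mod_cast Finset.card_pos.2 (hne j)
  have hXpos : (0:ℝ) < X.card := lt_of_lt_of_le (by positivity) hXbig
  have hYpos : (0:ℝ) < Y.card := lt_of_lt_of_le (by positivity) hYbig
  have hXne : X.Nonempty := Finset.card_pos.1 (by exact_mod_cast hXpos)
  have hYne : Y.Nonempty := Finset.card_pos.1 (by exact_mod_cast hYpos)
  set C1 := upd K i j X Y with hC1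
  set C2 := upd K i j X (K j \ Y) with hC2
  set C3 := upd K i j (K i \ X) Y with hC3
  set C4 := upd K i j (K i \ X) (K j \ Y) with hC4
  set 𝒞 := ({C1, C2, C3, C4} : Finset (Fin m → Finset V)).filter
    (fun C => ∀ k, (C k).Nonempty) with h𝒞
  have hform : ∀ C ∈ 𝒞, (C i = X ∨ C i = K i \ X) ∧ (C j = Y ∨ C j = K j \ Y) ∧
      (∀ k, k ≠ i → k ≠ j → C k = K k) := by
    intro C hC
    rw [h𝒞, Finset.mem_filter] at hC
    have h4 := hC.1
    simp only [Finset.mem_insert, Finset.mem_singleton] at h4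
    rcases h4 with rfl | rfl | rfl | rfl
    · exact ⟨Or.inl (upd_i hijne), Or.inl upd_j, fun k h1 h2 => upd_k h1 h2⟩
    · exact ⟨Or.inl (upd_i hijne), Or.inr upd_j, fun k h1 h2 => upd_k h1 h2⟩
    · exact ⟨Or.inr (upd_i hijne), Or.inl upd_j, fun k h1 h2 => upd_k h1 h2⟩
    · exact ⟨Or.inr (upd_i hijne), Or.inr upd_j, fun k h1 h2 => upd_k h1 h2⟩
  have hCne : ∀ C ∈ 𝒞, ∀ k, (C k).Nonempty := by
    intro C hC
    rw [h𝒞, Finset.mem_filter] at hC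
    exact hC.2
  have hXsz : ε^2 * ((K i).card:ℝ) ≤ (X.card:ℝ) := by nlinarith
  have hYsz : ε^2 * ((K j).card:ℝ) ≤ (Y.card:ℝ) := by nlinarith
  have hXcsz : (K i \ X).Nonempty → ε^2 * ((K i).card:ℝ) ≤ (((K i \ X)).card:ℝ) := by
    intro h
    rcases hXrem with he | hsz
    · exact absurd he (Finset.nonempty_iff_ne_empty.1 h)
    · exact hsz
  have hYcsz : (K j \ Y).Nonempty → ε^2 * ((K j).card:ℝ) ≤ (((K j \ Y)).card:ℝ) := by
    intro h
    rcases hYrem with he | hsz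
    · exact absurd he (Finset.nonempty_iff_ne_empty.1 h)
    · exact hsz
  refine ⟨𝒞, ?_, ?_, ?_, ?_⟩
  · -- card bound
    calc 𝒞.card ≤ ({C1, C2, C3, C4} : Finset (Fin m → Finset V)).card :=
          Finset.card_filter_le _ _
      _ ≤ 4 := by
          apply (Finset.card_insert_le _ _).trans
          apply Nat.succ_le_succ
          apply (Finset.card_insert_le _ _).trans
          apply Nat.succ_le_succ
          apply (Finset.card_insert_le _ _).trans
          simp
  · -- subsets and sizes
    intro C hC k
    obtain ⟨hfi, hfj, hfk⟩ := hform C hC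
    rcases eq_or_ne k i with rfl | hki
    · rcases hfi with h | h <;> rw [h]
      · exact ⟨hXs, hXsz⟩
      · exact ⟨Finset.sdiff_subset, hXcsz (h ▸ hCne C hC k)⟩
    · rcases eq_or_ne k j with rfl | hkj
      · rcases hfj with h | h <;> rw [h]
        · exact ⟨hYs, hYsz⟩
        · exact ⟨Finset.sdiff_subset, hYcsz (h ▸ hCne C hC k)⟩
      · rw [hfk k hki hkj]
        refine ⟨Finset.Subset.rfl, ?_⟩
        have h0 : (0:ℝ) ≤ ((K k).card : ℝ) := by positivity
        have hε2 : ε^2 ≤ 1 := by nlinarith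
        nlinarith [mul_le_mul_of_nonneg_right hε2 h0]
  · -- partition property
    intro v hv
    have huniq2 : ∀ C C', C ∈ 𝒞 → C' ∈ 𝒞 → (∀ k, v k ∈ C k) → (∀ k, v k ∈ C' k) → C = C' := by
      intro C C' hC hC' hvC hvC'
      obtain ⟨hfi, hfj, hfk⟩ := hform C hC
      obtain ⟨hfi', hfj', hfk'⟩ := hform C' hC'
      funext k
      rcases eq_or_ne k i with rfl | hki
      · rcases hfi with h | h <;> rcases hfi' with h' | h' <;> rw [h, h']
        · exfalso
          have h1 := hvC k
          have h2 := hvC' k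
          rw [h] at h1
          rw [h'] at h2
          exact (Finset.mem_sdiff.1 h2).2 h1
        · exfalso
          have h1 := hvC k
          have h2 := hvC' k
          rw [h] at h1
          rw [h'] at h2
          exact (Finset.mem_sdiff.1 h1).2 h2
      · rcases eq_or_ne k j with rfl | hkj
        · rcases hfj with h | h <;> rcases hfj' with h' | h' <;> rw [h, h']
          · exfalso
            have h1 := hvC k
            have h2 := hvC' k
            rw [h] at h1
            rw [h'] at h2
            exact (Finset.mem_sdiff.1 h2).2 h1
          · exfalso
            have h1 := hvC k
            have h2 := hvC' k
            rw [h] at h1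
            rw [h'] at h2
            exact (Finset.mem_sdiff.1 h1).2 h2
        · rw [hfk k hki hkj, hfk' k hki hkj]
    have hmem4 : ∀ (A B : Finset V), v i ∈ A → v j ∈ B →
        upd K i j A B ∈ ({C1, C2, C3, C4} : Finset (Fin m → Finset V)) →
        (upd K i j A B ∈ 𝒞 ∧ ∀ k, v k ∈ upd K i j A B k) := by
      intro A B hA hB hm4
      have hcoord : ∀ k, v k ∈ upd K i j A B k := by
        intro k
        rcases eq_or_ne k i with rfl | hki
        · rwa [upd_i hijne]
        · rcases eq_or_ne k j with rfl | hkj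
          · rwa [upd_j]
          · rw [upd_k hki hkj]; exact hv k
      refine ⟨?_, hcoord⟩
      rw [h𝒞, Finset.mem_filter]
      exact ⟨hm4, fun k => ⟨v k, hcoord k⟩⟩
    have hexists : ∃ C, C ∈ 𝒞 ∧ ∀ k, v k ∈ C k := by
      by_cases hvX : v i ∈ X <;> by_cases hvY : v j ∈ Y
      · obtain ⟨hm, hco⟩ := hmem4 X Y hvX hvY (Finset.mem_insert_self _ _)
        exact ⟨C1, hm, hco⟩
      · obtain ⟨hm, hco⟩ := hmem4 X (K j \ Y) hvX (Finset.mem_sdiff.2 ⟨hv j, hvY⟩)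
          (Finset.mem_insert_of_mem (Finset.mem_insert_self _ _))
        exact ⟨C2, hm, hco⟩
      · obtain ⟨hm, hco⟩ := hmem4 (K i \ X) Y (Finset.mem_sdiff.2 ⟨hv i, hvX⟩) hvY
          (Finset.mem_insert_of_mem (Finset.mem_insert_of_mem (Finset.mem_insert_self _ _)))
        exact ⟨C3, hm, hco⟩
      · obtain ⟨hm, hco⟩ := hmem4 (K i \ X) (K j \ Y) (Finset.mem_sdiff.2 ⟨hv i, hvX⟩)
          (Finset.mem_sdiff.2 ⟨hv j, hvY⟩)
          (Finset.mem_insert_of_mem (Finset.mem_insert_of_mem (Finset.mem_insert_of_mem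
            (Finset.mem_singleton_self _))))
        exact ⟨C4, hm, hco⟩
    obtain ⟨C, hCm, hCv⟩ := hexists
    exact ⟨C, ⟨hCm, hCv⟩, fun C' hC' => huniq2 C' C hC'.1 hCm hC'.2 hCv⟩
  · -- energy increment
    have hXd : X ≠ K i \ X := by
      intro h
      obtain ⟨x, hx⟩ := hXne
      have hx2 := hx
      rw [h] at hx2
      exact (Finset.mem_sdiff.1 hx2).2 hx
    have hYd : Y ≠ K j \ Y := by
      intro h
      obtain ⟨y, hy⟩ := hYne
      have hy2 := hy
      rw [h] at hy2
      exact (Finset.mem_sdiff.1 hy2).2 hy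
    have hd12 : C1 ≠ C2 := fun h => hYd (by simpa [hC1, hC2, upd_j] using congrFun h j)
    have hd13 : C1 ≠ C3 := fun h => hXd (by simpa [hC1, hC3, upd_i hijne] using congrFun h i)
    have hd14 : C1 ≠ C4 := fun h => hXd (by simpa [hC1, hC4, upd_i hijne] using congrFun h i)
    have hd23 : C2 ≠ C3 := fun h => hXd (by simpa [hC2, hC3, upd_i hijne] using congrFun h i)
    have hd24 : C2 ≠ C4 := fun h => hXd (by simpa [hC2, hC4, upd_i hijne] using congrFun h i)
    have hd34 : C3 ≠ C4 := fun h => hYd (by simpa [hC3, hC4, upd_j] using congrFun h j)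
    have hsum4 : ∑ C ∈ ({C1, C2, C3, C4} : Finset (Fin m → Finset V)), en F C
        = en F C1 + en F C2 + en F C3 + en F C4 := by
      rw [Finset.sum_insert (by
          simp only [Finset.mem_insert, Finset.mem_singleton]
          push_neg
          exact ⟨hd12, hd13, hd14⟩),
        Finset.sum_insert (by
          simp only [Finset.mem_insert, Finset.mem_singleton]
          push_neg
          exact ⟨hd23, hd24⟩),
        Finset.sum_insert (by
          simp only [Finset.mem_singleton]
          exact hd34), Finset.sum_singleton]
      ring
    have hzero : ∑ C ∈ ({C1, C2, C3, C4} : Finset (Fin m → Finset V)).filter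
        (fun C => ¬ ∀ k, (C k).Nonempty), en F C = 0 := by
      apply Finset.sum_eq_zero
      intro C hC
      exact en_zero F (Finset.mem_filter.1 hC).2
    have hsum𝒞 : ∑ C ∈ 𝒞, en F C = en F C1 + en F C2 + en F C3 + en F C4 := by
      rw [← hsum4, ← Finset.sum_filter_add_sum_filter_not
        ({C1, C2, C3, C4} : Finset (Fin m → Finset V)) (fun C => ∀ k, (C k).Nonempty), hzero,
        add_zero]
    rw [hsum𝒞]
    have hR0 : (0:ℝ) ≤ ∏ k ∈ (Finset.univ.erase j).erase i, ((K k).card : ℝ) :=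
      Finset.prod_nonneg fun k _ => by positivity
    have hdev2 : ε^2 ≤ (dd (F c₀) X Y - dd (F c₀) (K i) (K j))^2 := by
      have h := pow_le_pow_left₀ hε0.le hdev 2
      rwa [sq_abs] at h
    have m1 : (ε * ((K i).card:ℝ)) * (ε * ((K j).card:ℝ)) ≤ (X.card:ℝ) * Y.card :=
      mul_le_mul hXbig hYbig (mul_nonneg hε0.le (by positivity)) (by positivity)
    have m2 : ε^2 * ((ε * ((K i).card:ℝ)) * (ε * ((K j).card:ℝ)))
        ≤ (dd (F c₀) X Y - dd (F c₀) (K i) (K j))^2 * ((X.card:ℝ) * Y.card) :=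
      mul_le_mul hdev2 m1
        (mul_nonneg (mul_nonneg hε0.le (by positivity)) (mul_nonneg hε0.le (by positivity)))
        (sq_nonneg _)
    have m3 := mul_le_mul_of_nonneg_right m2 hR0
    have e1 : ε^4 * ∏ k, ((K k).card:ℝ)
        ≤ (dd (F c₀) X Y - dd (F c₀) (K i) (K j))^2
          * ((X.card:ℝ) * Y.card * ∏ k ∈ (Finset.univ.erase j).erase i, ((K k).card : ℝ)) := by
      rw [prod_split hijne (fun k => ((K k).card:ℝ))]
      nlinarith [m3]
    have hchild := children_energy F c₀ hij hXs hYs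
    linarith [hchild, e1]

end refine
section global

variable {r m : ℕ} (F : Fin r → SimpleGraph V) [∀ c, DecidableRel (F c).Adj] {ε : ℝ}

lemma en_nonneg (K : Fin m → Finset V) : 0 ≤ en F K := by
  unfold en
  apply Finset.sum_nonneg
  intro c _
  apply Finset.sum_nonneg
  intro p _
  have h1 : (0:ℝ) ≤ ∏ k, ((K k).card : ℝ) := Finset.prod_nonneg fun k _ => by positivity
  positivity

open scoped Classical in
lemma refine_one' (hε0 : 0 < ε) (hε : ε < 1/2) {K : Fin m → Finset V}
    (hne : ∀ k, (K k).Nonempty) :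
    ∃ 𝒞 : Finset (Fin m → Finset V),
      𝒞.card ≤ 4 ∧
      (∀ C ∈ 𝒞, ∀ k, C k ⊆ K k ∧ ε^2 * ((K k).card:ℝ) ≤ ((C k).card:ℝ)) ∧
      (∀ v : Fin m → V, (∀ k, v k ∈ K k) → ∃! C, C ∈ 𝒞 ∧ ∀ k, v k ∈ C k) ∧
      en F K + (if badAny F ε K then ε^4 * ∏ k, ((K k).card:ℝ) else 0)
        ≤ ∑ C ∈ 𝒞, en F C := by
  by_cases hbad : badAny F ε K
  · obtain ⟨𝒞, h1, h2, h3, h4⟩ := refine_one F hε0 hε hne hbad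
    exact ⟨𝒞, h1, h2, h3, by rwa [if_pos hbad]⟩
  · refine ⟨({K} : Finset (Fin m → Finset V)), ?_, ?_, ?_, ?_⟩
    · rw [Finset.card_singleton]; omega
    · intro C hC k
      rw [Finset.mem_singleton] at hC
      rw [hC]
      refine ⟨Finset.Subset.rfl, ?_⟩
      have h0 : (0:ℝ) ≤ ((K k).card : ℝ) := by positivity
      have hε2 : ε^2 ≤ 1 := by nlinarith
      nlinarith [mul_le_mul_of_nonneg_right hε2 h0]
    · intro v hv
      exact ⟨K, ⟨Finset.mem_singleton_self K, hv⟩, fun C' hC' => Finset.mem_singleton.1 hC'.1⟩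
    · rw [if_neg hbad, add_zero, Finset.sum_singleton]

open scoped Classical in
/-- a cylinder partition has total mass the full product -/
lemma mass_eq [Fintype V] {P : Fin m → Finset V} {𝒦 : Finset (Fin m → Finset V)}
    (hsub : ∀ K ∈ 𝒦, ∀ k, K k ⊆ P k)
    (hpart : ∀ v : Fin m → V, (∀ k, v k ∈ P k) → ∃! K, K ∈ 𝒦 ∧ ∀ k, v k ∈ K k) :
    ∑ K ∈ 𝒦, ∏ k, ((K k).card : ℝ) = ∏ k, ((P k).card : ℝ) := by
  have hdisj : ∀ K ∈ 𝒦, ∀ K' ∈ 𝒦, K ≠ K' →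
      Disjoint (Fintype.piFinset K) (Fintype.piFinset K') := by
    intro K hK K' hK' hne
    rw [Finset.disjoint_left]
    intro v hv hv'
    rw [Fintype.mem_piFinset] at hv hv'
    obtain ⟨Ku, _, huniq⟩ := hpart v (fun k => hsub K hK k (hv k))
    exact hne ((huniq K ⟨hK, hv⟩).trans (huniq K' ⟨hK', hv'⟩).symm)
  have hcover : Fintype.piFinset P = 𝒦.biUnion (fun K => Fintype.piFinset K) := by
    ext v
    rw [Finset.mem_biUnion, Fintype.mem_piFinset]
    constructor
    · intro hv
      obtain ⟨K, ⟨hK, hvK⟩, _⟩ := hpart v hv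
      exact ⟨K, hK, Fintype.mem_piFinset.2 hvK⟩
    · rintro ⟨K, hK, hvK⟩
      rw [Fintype.mem_piFinset] at hvK
      exact fun k => hsub K hK k (hvK k)
  have hcard : ∏ k, (P k).card = ∑ K ∈ 𝒦, ∏ k, (K k).card := by
    rw [← Fintype.card_piFinset, hcover, Finset.card_biUnion hdisj]
    exact Finset.sum_congr rfl fun K _ => Fintype.card_piFinset K
  have h := congrArg (fun n : ℕ => (n:ℝ)) hcard
  push_cast at h
  exact h.symm

/-- sum over colors of squared densities is at most 1 -/
lemma sum_dd_sq_le_one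
    (hdisj : ∀ c c', c ≠ c' → Disjoint ((F c).edgeSet) ((F c').edgeSet))
    {s t : Finset V} (hs : s.Nonempty) (ht : t.Nonempty) :
    ∑ c, dd (F c) s t ^ 2 ≤ 1 := by
  have hdisjI : ∀ c ∈ (Finset.univ : Finset (Fin r)), ∀ c' ∈ Finset.univ, c ≠ c' →
      Disjoint ((F c).interedges s t) ((F c').interedges s t) := by
    intro c _ c' _ hcc
    rw [Finset.disjoint_left]
    intro p hp hp'
    rw [SimpleGraph.mem_interedges_iff] at hp hp'
    have h1 : s(p.1, p.2) ∈ (F c).edgeSet := (SimpleGraph.mem_edgeSet _).2 hp.2.2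
    have h2 : s(p.1, p.2) ∈ (F c').edgeSet := (SimpleGraph.mem_edgeSet _).2 hp'.2.2
    exact Set.disjoint_left.1 (hdisj c c' hcc) h1 h2
  have hsum_e : ∑ c, ee (F c) s t ≤ s.card * t.card := by
    unfold ee
    rw [← Finset.card_biUnion hdisjI]
    calc (Finset.univ.biUnion (fun c => (F c).interedges s t)).card
        ≤ (s ×ˢ t).card := by
          apply Finset.card_le_card
          intro p hp
          rw [Finset.mem_biUnion] at hp
          obtain ⟨c, _, hp⟩ := hp
          rw [SimpleGraph.mem_interedges_iff] at hp
          exact Finset.mem_product.2 ⟨hp.1, hp.2.1⟩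
      _ = s.card * t.card := Finset.card_product s t
  have hD : (0:ℝ) < (s.card : ℝ) * t.card := by
    have h1 : 0 < s.card := Finset.card_pos.2 hs
    have h2 : 0 < t.card := Finset.card_pos.2 ht
    positivity
  have h1 : (∑ c, dd (F c) s t) * ((s.card : ℝ) * t.card) ≤ (s.card : ℝ) * t.card := by
    rw [Finset.sum_mul]
    calc ∑ c, dd (F c) s t * ((s.card : ℝ) * t.card) = ∑ c, (ee (F c) s t : ℝ) :=
          Finset.sum_congr rfl fun c _ => dd_mul (F c) s t
      _ ≤ ((s.card * t.card : ℕ) : ℝ) := by exact_mod_cast hsum_e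
      _ = (s.card : ℝ) * t.card := by push_cast; ring
  have hsumdd : ∑ c, dd (F c) s t ≤ 1 := by nlinarith
  calc ∑ c, dd (F c) s t ^ 2 ≤ ∑ c, dd (F c) s t := by
        apply Finset.sum_le_sum
        intro c _
        nlinarith [dd_nonneg (F c) s t, dd_le_one (F c) s t]
    _ ≤ 1 := hsumdd

end global
section stepsec

variable {r m : ℕ} (F : Fin r → SimpleGraph V) [∀ c, DecidableRel (F c).Adj] {ε : ℝ}

lemma en_le
    (hdisj : ∀ c c', c ≠ c' → Disjoint ((F c).edgeSet) ((F c').edgeSet))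
    {K : Fin m → Finset V} (hne : ∀ k, (K k).Nonempty) :
    en F K ≤ ((pairs m).card : ℝ) * ∏ k, ((K k).card:ℝ) := by
  unfold en
  rw [Finset.sum_comm]
  have h0 : (0:ℝ) ≤ ∏ k, ((K k).card:ℝ) := Finset.prod_nonneg fun k _ => by positivity
  have hpk : ∀ p ∈ pairs m,
      ∑ c, (∏ k, ((K k).card:ℝ)) * dd (F c) (K p.1) (K p.2)^2 ≤ ∏ k, ((K k).card:ℝ) := by
    intro p _
    rw [← Finset.mul_sum]
    have h := sum_dd_sq_le_one F hdisj (hne p.1) (hne p.2)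
    nlinarith [mul_le_mul_of_nonneg_left h h0]
  calc ∑ p ∈ pairs m, ∑ c, (∏ k, ((K k).card:ℝ)) * dd (F c) (K p.1) (K p.2)^2
      ≤ ∑ p ∈ pairs m, ∏ k, ((K k).card:ℝ) := Finset.sum_le_sum hpk
    _ = ((pairs m).card : ℝ) * ∏ k, ((K k).card:ℝ) := by
        rw [Finset.sum_const, nsmul_eq_mul]

open scoped Classical in
lemma step (hε0 : 0 < ε) (hε : ε < 1/2) {P : Fin m → Finset V}
    {𝒦 : Finset (Fin m → Finset V)}
    (hsub : ∀ K ∈ 𝒦, ∀ k, K k ⊆ P k)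
    (hne : ∀ K ∈ 𝒦, ∀ k, (K k).Nonempty)
    (hpart : ∀ v : Fin m → V, (∀ k, v k ∈ P k) → ∃! K, K ∈ 𝒦 ∧ ∀ k, v k ∈ K k) :
    ∃ 𝒦' : Finset (Fin m → Finset V),
      𝒦'.card ≤ 4 * 𝒦.card ∧
      (∀ K' ∈ 𝒦', ∃ K ∈ 𝒦, ∀ k, K' k ⊆ K k ∧ ε^2 * ((K k).card:ℝ) ≤ ((K' k).card:ℝ)) ∧
      (∀ v : Fin m → V, (∀ k, v k ∈ P k) → ∃! K', K' ∈ 𝒦' ∧ ∀ k, v k ∈ K' k) ∧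
      (∑ K ∈ 𝒦, en F K) + ε^4 * ∑ K ∈ 𝒦.filter (badAny F ε), ∏ k, ((K k).card:ℝ)
        ≤ ∑ K' ∈ 𝒦', en F K' := by
  choose f hf1 hf2 hf3 hf4 using
    fun (K : {K // K ∈ 𝒦}) => refine_one' F hε0 hε (hne K.1 K.2)
  set 𝒦' := 𝒦.attach.biUnion (fun K => f K) with h𝒦'
  have hCne : ∀ (Ka : {K // K ∈ 𝒦}) (C : Fin m → Finset V), C ∈ f Ka → ∀ k, (C k).Nonempty := by
    intro Ka C hC k
    have hsz := (hf2 Ka C hC k).2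
    have hKapos : (0:ℝ) < ((Ka.1 k).card : ℝ) := by
      exact_mod_cast Finset.card_pos.2 (hne Ka.1 Ka.2 k)
    have : (0:ℝ) < ((C k).card : ℝ) := lt_of_lt_of_le (by positivity) hsz
    exact Finset.card_pos.1 (by exact_mod_cast this)
  refine ⟨𝒦', ?_, ?_, ?_, ?_⟩
  · calc 𝒦'.card ≤ ∑ K ∈ 𝒦.attach, (f K).card := Finset.card_biUnion_le
      _ ≤ ∑ _K ∈ 𝒦.attach, 4 := Finset.sum_le_sum (fun K _ => hf1 K)
      _ = 4 * 𝒦.card := by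
          rw [Finset.sum_const, Finset.card_attach, smul_eq_mul, mul_comm]
  · intro K' hK'
    obtain ⟨Ka, _, hK'f⟩ := Finset.mem_biUnion.1 hK'
    exact ⟨Ka.1, Ka.2, fun k => hf2 Ka K' hK'f k⟩
  · intro v hv
    obtain ⟨K₀, ⟨hK₀, hvK₀⟩, hKuniq⟩ := hpart v hv
    obtain ⟨C₀, ⟨hC₀m, hvC₀⟩, hCuniq⟩ := hf3 ⟨K₀, hK₀⟩ v hvK₀
    refine ⟨C₀, ⟨Finset.mem_biUnion.2 ⟨⟨K₀, hK₀⟩, Finset.mem_attach _ _, hC₀m⟩, hvC₀⟩, ?_⟩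
    intro C' hC'
    obtain ⟨hC'm, hvC'⟩ := hC'
    obtain ⟨K₁, _, hC'f⟩ := Finset.mem_biUnion.1 hC'm
    have hvK₁ : ∀ k, v k ∈ K₁.1 k := fun k => (hf2 K₁ C' hC'f k).1 (hvC' k)
    have hK₁eq : K₁ = (⟨K₀, hK₀⟩ : {K // K ∈ 𝒦}) := Subtype.ext (hKuniq K₁.1 ⟨K₁.2, hvK₁⟩)
    rw [hK₁eq] at hC'f
    exact hCuniq C' ⟨hC'f, hvC'⟩
  · have hdisjf : ∀ Ka ∈ 𝒦.attach, ∀ Kb ∈ 𝒦.attach, Ka ≠ Kb → Disjoint (f Ka) (f Kb) := by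
      intro Ka _ Kb _ hab
      rw [Finset.disjoint_left]
      intro C hCa hCb
      have hCk := hCne Ka C hCa
      set v : Fin m → V := fun k => (hCk k).choose with hvdef
      have hvC : ∀ k, v k ∈ C k := fun k => (hCk k).choose_spec
      have hva : ∀ k, v k ∈ Ka.1 k := fun k => (hf2 Ka C hCa k).1 (hvC k)
      have hvb : ∀ k, v k ∈ Kb.1 k := fun k => (hf2 Kb C hCb k).1 (hvC k)
      have hvP : ∀ k, v k ∈ P k := fun k => hsub Ka.1 Ka.2 k (hva k)
      obtain ⟨K₀, _, hKuniq⟩ := hpart v hvP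
      exact hab (Subtype.ext ((hKuniq Ka.1 ⟨Ka.2, hva⟩).trans (hKuniq Kb.1 ⟨Kb.2, hvb⟩).symm))
    rw [h𝒦', Finset.sum_biUnion hdisjf]
    have h := Finset.sum_le_sum (s := 𝒦.attach) (fun K _ => hf4 K)
    rw [Finset.sum_add_distrib] at h
    have ha1 : ∑ K ∈ 𝒦.attach, en F K.1 = ∑ K ∈ 𝒦, en F K := Finset.sum_attach 𝒦 (en F)
    have ha2 : ∑ K ∈ 𝒦.attach, (if badAny F ε K.1 then ε^4 * ∏ k, ((K.1 k).card:ℝ) else 0)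
        = ε^4 * ∑ K ∈ 𝒦.filter (badAny F ε), ∏ k, ((K k).card:ℝ) := by
      rw [Finset.sum_attach 𝒦
        (fun K => if badAny F ε K then ε^4 * ∏ k, ((K k).card:ℝ) else 0)]
      rw [Finset.mul_sum, Finset.sum_filter]
    rw [ha1, ha2] at h
    exact h

end stepsec
section iteratesec

variable {r m : ℕ} (F : Fin r → SimpleGraph V) [∀ c, DecidableRel (F c).Adj] {ε : ℝ}

open scoped Classical in
lemma iterate (hε0 : 0 < ε) (hε : ε < 1/2) {P : Fin m → Finset V}
    (hP : ∀ k, (P k).Nonempty) (n : ℕ) :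
    ∃ 𝒦 : Finset (Fin m → Finset V),
      (∀ K ∈ 𝒦, ∀ k, K k ⊆ P k) ∧
      (∀ K ∈ 𝒦, ∀ k, ε^(2*n) * ((P k).card:ℝ) ≤ ((K k).card:ℝ)) ∧
      𝒦.card ≤ 4^n ∧
      (∀ v : Fin m → V, (∀ k, v k ∈ P k) → ∃! K, K ∈ 𝒦 ∧ ∀ k, v k ∈ K k) ∧
      ((∑ K ∈ 𝒦.filter (badAny F ε), ∏ k, ((K k).card:ℝ)) ≤ ε * ∏ k, ((P k).card:ℝ) ∨
        (n:ℝ) * (ε^5 * ∏ k, ((P k).card:ℝ)) ≤ ∑ K ∈ 𝒦, en F K) := by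
  induction n with
  | zero =>
      refine ⟨{P}, ?_, ?_, ?_, ?_, Or.inr ?_⟩
      · intro K hK k
        rw [Finset.mem_singleton] at hK
        rw [hK]
      · intro K hK k
        rw [Finset.mem_singleton] at hK
        rw [hK]
        simp
      · simp
      · intro v hv
        exact ⟨P, ⟨Finset.mem_singleton_self P, hv⟩, fun K hK => Finset.mem_singleton.1 hK.1⟩
      · rw [Finset.sum_singleton]
        simpa using en_nonneg F P
  | succ n ih =>
      obtain ⟨𝒦, hsub, hsize, hcard, hpart, hdisj⟩ := ih
      have hne : ∀ K ∈ 𝒦, ∀ k, (K k).Nonempty := by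
        intro K hK k
        have h1 := hsize K hK k
        have hPk : (0:ℝ) < (P k).card := by exact_mod_cast Finset.card_pos.2 (hP k)
        have h2 : (0:ℝ) < (K k).card := lt_of_lt_of_le (by positivity) h1
        exact Finset.card_pos.1 (by exact_mod_cast h2)
      by_cases hreg :
        (∑ K ∈ 𝒦.filter (badAny F ε), ∏ k, ((K k).card:ℝ)) ≤ ε * ∏ k, ((P k).card:ℝ)
      · refine ⟨𝒦, hsub, ?_, ?_, hpart, Or.inl hreg⟩
        · intro K hK k
          refine le_trans ?_ (hsize K hK k)
          apply mul_le_mul_of_nonneg_right _ (by positivity)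
          exact pow_le_pow_of_le_one hε0.le (by linarith) (by omega)
        · exact hcard.trans (Nat.pow_le_pow_right (by norm_num) (by omega))
      · have hen : (n:ℝ) * (ε^5 * ∏ k, ((P k).card:ℝ)) ≤ ∑ K ∈ 𝒦, en F K :=
          hdisj.resolve_left hreg
        obtain ⟨𝒦', hc', hsub', hpart', hen'⟩ := step F hε0 hε hsub hne hpart
        refine ⟨𝒦', ?_, ?_, ?_, hpart', Or.inr ?_⟩
        · intro K' hK' k
          obtain ⟨K, hK, h⟩ := hsub' K' hK'
          exact ((h k).1).trans (hsub K hK k)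
        · intro K' hK' k
          obtain ⟨K, hK, h⟩ := hsub' K' hK'
          calc ε^(2*(n+1)) * ((P k).card:ℝ) = ε^2 * (ε^(2*n) * ((P k).card:ℝ)) := by
                rw [show 2*(n+1) = 2 + 2*n from by ring, pow_add, mul_assoc]
            _ ≤ ε^2 * ((K k).card:ℝ) :=
                mul_le_mul_of_nonneg_left (hsize K hK k) (by positivity)
            _ ≤ ((K' k).card:ℝ) := (h k).2
        · calc 𝒦'.card ≤ 4 * 𝒦.card := hc'
            _ ≤ 4 * 4^n := by omega
            _ = 4^(n+1) := by ring
        · have hbadgt : ε * ∏ k, ((P k).card:ℝ)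
              ≤ ∑ K ∈ 𝒦.filter (badAny F ε), ∏ k, ((K k).card:ℝ) := (not_le.1 hreg).le
          have m4 := mul_le_mul_of_nonneg_left hbadgt (by positivity : (0:ℝ) ≤ ε^4)
          push_cast
          nlinarith [hen, hen', m4]

end iteratesec
lemma pairs_card_le {m : ℕ} (hm : 1 ≤ m) : ((pairs m).card : ℝ) ≤ ((m:ℝ)^2 - m)/2 := by
  have hinj : ((pairs m).card) ≤ ((Finset.univ : Finset (Fin m)).powersetCard 2).card := by
    apply Finset.card_le_card_of_injOn (fun p => ({p.1, p.2} : Finset (Fin m)))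
    · intro p hp
      rw [Finset.mem_coe, mem_pairs] at hp
      rw [Finset.mem_coe, Finset.mem_powersetCard]
      refine ⟨Finset.subset_univ _, ?_⟩
      rw [Finset.card_insert_of_notMem (by simp [hp.ne]), Finset.card_singleton]
    · intro p hp q hq h
      simp only at h
      rw [Finset.mem_coe, mem_pairs] at hp hq
      have h1 : p.1 ∈ ({q.1, q.2} : Finset (Fin m)) := by
        rw [← h]; simp
      have h2 : p.2 ∈ ({q.1, q.2} : Finset (Fin m)) := by
        rw [← h]; simp
      simp only [Finset.mem_insert, Finset.mem_singleton] at h1 h2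
      rcases h1 with h1 | h1 <;> rcases h2 with h2 | h2
      · exact absurd (h1 ▸ h2 ▸ hp) (lt_irrefl _)
      · exact Prod.ext h1 h2
      · exfalso
        have hq' := hq
        rw [← h2, ← h1] at hq'
        exact absurd (hp.trans hq') (lt_irrefl _)
      · exact absurd (h1 ▸ h2 ▸ hp) (lt_irrefl _)
  have hch : ((Finset.univ : Finset (Fin m)).powersetCard 2).card = m.choose 2 := by
    rw [Finset.card_powersetCard, Finset.card_fin]
  rw [hch] at hinj
  have h2 : (m.choose 2 : ℝ) ≤ ((m:ℝ)^2 - m)/2 := by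
    rw [Nat.choose_two_right]
    calc ((m * (m-1) / 2 : ℕ) : ℝ) ≤ ((m * (m-1) : ℕ) : ℝ)/2 := Nat.cast_div_le
      _ = ((m:ℝ)^2 - m)/2 := by
          rw [Nat.cast_mul, Nat.cast_sub hm]
          push_cast
          ring
  calc ((pairs m).card : ℝ) ≤ (m.choose 2 : ℝ) := by exact_mod_cast hinj
    _ ≤ ((m:ℝ)^2 - m)/2 := h2
end WeakReg

open WeakReg Finset

set_option maxHeartbeats 1000000 in
open scoped Classical in
/-- weak regularity lemma of Duke–Lefmann–Rödl / Fox–Li, Lemma 2.2. Let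
`r ≥ 1`, `m ≥ 2`, `0 < ε < 1/2` and `β = ε^(m² ε⁻⁵)`. If the edges of an `m`-partite graph
with parts `P 1, …, P m` are partitioned into `r` color classes `F 1, …, F r`, then there is a
cylinder partition `𝒦` of `P 1 × ⋯ × P m` into at most `4^(m² ε⁻⁵)` cylinders which is
`ε`-regular with respect to each `F c`, and each cylinder `K ∈ 𝒦` satisfies
`|K i| ≥ β |P i|` for all `i`. -/
theorem weak_regularity_cylinder_partition
    (r m : ℕ) (hr : 1 ≤ r) (hm : 2 ≤ m) (ε : ℝ) (hε0 : 0 < ε) (hε : ε < 1 / 2)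
    (V : Type) [Fintype V] [DecidableEq V] (P : Fin m → Finset V)
    (F : Fin r → SimpleGraph V) [∀ c, DecidableRel (F c).Adj]
    (hpartite : ∀ c v w, (F c).Adj v w → ∃ i j, i ≠ j ∧ v ∈ P i ∧ w ∈ P j)
    (hdisjoint : ∀ c c', c ≠ c' → Disjoint ((F c).edgeSet) ((F c').edgeSet)) :
    ∃ 𝒦 : Finset (Fin m → Finset V),
      -- at most `4^(m² ε⁻⁵)` cylinders
      (𝒦.card : ℝ) ≤ (4 : ℝ) ^ ((m : ℝ) ^ 2 * ε⁻¹ ^ 5) ∧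
      -- each cylinder is contained in the parts and has large sides: `|K i| ≥ β |P i|`
      (∀ K ∈ 𝒦, ∀ i, K i ⊆ P i ∧
        ε ^ ((m : ℝ) ^ 2 * ε⁻¹ ^ 5) * ((P i).card : ℝ) ≤ ((K i).card : ℝ)) ∧
      -- the cylinders partition `P 1 × ⋯ × P m`
      (∀ v : Fin m → V, (∀ i, v i ∈ P i) → ∃! K, K ∈ 𝒦 ∧ ∀ i, v i ∈ K i) ∧
      -- `ε`-regularity in each color: the tuples lying in non-`ε`-regular cylinders
      -- form at most an `ε`-fraction of all tuples
      (∀ c : Fin r,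
        ∑ K ∈ 𝒦.filter (fun K => ¬ ∀ i j, i ≠ j → (F c).IsUniform ε (K i) (K j)),
            ∏ i, ((K i).card : ℝ)
          ≤ ε * ∏ i, ((P i).card : ℝ)) := by
  by_cases hdeg : ∃ k, P k = ∅
  · obtain ⟨k₀, hk₀⟩ := hdeg
    refine ⟨∅, ?_, ?_, ?_, ?_⟩
    · rw [Finset.card_empty]
      push_cast
      positivity
    · intro K hK
      exact absurd hK (Finset.notMem_empty K)
    · intro v hv
      exact absurd (hv k₀) (by rw [hk₀]; exact Finset.notMem_empty _)
    · intro c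
      rw [Finset.filter_empty, Finset.sum_empty]
      have hz : ∏ i, ((P i).card:ℝ) = 0 :=
        Finset.prod_eq_zero (Finset.mem_univ k₀) (by simp [hk₀])
      rw [hz, mul_zero]
  · push_neg at hdeg
    have hP : ∀ k, (P k).Nonempty := fun k => hdeg k
    set x := (m:ℝ)^2 * ε⁻¹^5 with hxdef
    have hεinv : 2 < ε⁻¹ := by
      nlinarith [mul_inv_cancel₀ (ne_of_gt hε0), inv_pos.2 hε0]
    have hm2 : (2:ℝ) ≤ (m:ℝ) := by exact_mod_cast hm
    have hx128 : 128 ≤ x := by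
      have h32 : (32:ℝ) ≤ ε⁻¹^5 := by
        calc (32:ℝ) = 2^5 := by norm_num
          _ ≤ ε⁻¹^5 := pow_le_pow_left₀ (by norm_num) hεinv.le 5
      have h4 : (4:ℝ) ≤ (m:ℝ)^2 := by nlinarith
      calc (128:ℝ) = 4 * 32 := by norm_num
        _ ≤ (m:ℝ)^2 * ε⁻¹^5 := by nlinarith
    have hx0 : (0:ℝ) ≤ x := by linarith
    set N := ⌊x/2⌋₊ with hNdef
    have hNle : (N:ℝ) ≤ x/2 := Nat.floor_le (by linarith)
    have hNgt : x/2 < (N:ℝ) + 1 := Nat.lt_floor_add_one _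
    obtain ⟨𝒦, hsub, hsize, hcard, hpart, hdisj⟩ := iterate F hε0 hε hP N
    have hne : ∀ K ∈ 𝒦, ∀ k, (K k).Nonempty := by
      intro K hK k
      have h1 := hsize K hK k
      have hPk : (0:ℝ) < (P k).card := by exact_mod_cast Finset.card_pos.2 (hP k)
      have h2 : (0:ℝ) < (K k).card := lt_of_lt_of_le (by positivity) h1
      exact Finset.card_pos.1 (by exact_mod_cast h2)
    have hprodP : (0:ℝ) < ∏ k, ((P k).card:ℝ) := by
      apply Finset.prod_pos
      intro k _
      exact_mod_cast Finset.card_pos.2 (hP k)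
    -- the energy branch is impossible
    have hreg : (∑ K ∈ 𝒦.filter (badAny F ε), ∏ k, ((K k).card:ℝ))
        ≤ ε * ∏ k, ((P k).card:ℝ) := by
      rcases hdisj with h | hen
      · exact h
      · exfalso
        have hup : ∑ K ∈ 𝒦, en F K ≤ ((pairs m).card:ℝ) * ∏ k, ((P k).card:ℝ) := by
          calc ∑ K ∈ 𝒦, en F K
              ≤ ∑ K ∈ 𝒦, ((pairs m).card:ℝ) * ∏ k, ((K k).card:ℝ) :=
                Finset.sum_le_sum (fun K hK => en_le F hdisjoint (hne K hK))
            _ = ((pairs m).card:ℝ) * ∑ K ∈ 𝒦, ∏ k, ((K k).card:ℝ) := by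
                rw [Finset.mul_sum]
            _ = ((pairs m).card:ℝ) * ∏ k, ((P k).card:ℝ) := by
                rw [mass_eq hsub hpart]
        have hNp : (N:ℝ) * ε^5 ≤ ((pairs m).card:ℝ) := by
          have h := le_trans hen hup
          nlinarith [hprodP]
        have hpc := pairs_card_le (m := m) (by omega)
        have hcancel : ε⁻¹^5 * ε^5 = 1 := by
          rw [← mul_pow, inv_mul_cancel₀ (ne_of_gt hε0)]
          norm_num
        have hε5 : ε^5 ≤ 1/32 := by
          calc ε^5 ≤ (1/2)^5 := pow_le_pow_left₀ hε0.le hε.le 5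
            _ = 1/32 := by norm_num
        have hε50 : 0 < ε^5 := by positivity
        -- N > x/2 - 1, so N ε⁵ > (x/2-1)ε⁵ = m²/2 - ε⁵ > (m²-m)/2 ≥ pairs.card
        have hkey : ((pairs m).card:ℝ) < (N:ℝ) * ε^5 := by
          have h1 : (x/2 - 1) * ε^5 < (N:ℝ) * ε^5 := by nlinarith
          have h2 : (x/2 - 1) * ε^5 = (m:ℝ)^2/2 - ε^5 := by
            rw [hxdef]
            field_simp
          nlinarith [hpc, hε5, hm2, h1, h2]
        linarith
    refine ⟨𝒦, ?_, ?_, hpart, ?_⟩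
    · calc (𝒦.card:ℝ) ≤ ((4^N : ℕ):ℝ) := by exact_mod_cast hcard
        _ = (4:ℝ) ^ (N:ℕ) := by push_cast; ring
        _ = (4:ℝ) ^ ((N:ℕ):ℝ) := (Real.rpow_natCast 4 N).symm
        _ ≤ (4:ℝ) ^ x := by
            apply Real.rpow_le_rpow_of_exponent_le (by norm_num)
            linarith
    · intro K hK i
      refine ⟨hsub K hK i, ?_⟩
      have hεx : ε ^ x ≤ ε ^ (((2*N : ℕ)):ℝ) := by
        apply Real.rpow_le_rpow_of_exponent_ge hε0 (by linarith)
        push_cast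
        linarith
      have heq : ε ^ (((2*N : ℕ)):ℝ) = ε ^ (2*N : ℕ) := Real.rpow_natCast ε (2*N)
      calc ε ^ x * ((P i).card:ℝ) ≤ ε ^ (2*N : ℕ) * ((P i).card:ℝ) := by
            rw [← heq]
            exact mul_le_mul_of_nonneg_right hεx (by positivity)
        _ ≤ ((K i).card:ℝ) := hsize K hK i
    · intro c
      have hsubf : 𝒦.filter (fun K => ¬ ∀ i j, i ≠ j → (F c).IsUniform ε (K i) (K j))
          ⊆ 𝒦.filter (badAny F ε) := by
        intro K hK
        rw [Finset.mem_filter] at hK ⊢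
        exact ⟨hK.1, ⟨c, hK.2⟩⟩
      refine le_trans (Finset.sum_le_sum_of_subset_of_nonneg hsubf ?_) hreg
      intro K _ _
      exact Finset.prod_nonneg fun k _ => by positivity
end

section
/- Let H be a graph with at least one edge and r ≥ 1 an integer. If H is r-Ramsey-infinite, i.e., the set M_r(H) of r-Ramsey-minimal graphs for H is infinite, then inf { β_r(H; G) : G ∈ M_r(H) } = 0. -/
/-- `G` is `r`-Ramsey-minimal for `H`: `G →_r H` but no proper subgraph of `G` arrows `H`. -/
def RamseyMinimalFor {V α : Type} (G : SimpleGraph V) (H : SimpleGraph α) (r : ℕ) : Prop :=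
  ArrowsFor G H r ∧ ∀ G' : G.Subgraph, G' ≠ ⊤ → ¬ ArrowsFor G'.coe H r

/-- The number of copies of `H` in `G`, i.e. the number of subgraphs of `G` isomorphic to `H`. -/
noncomputable def copyCount {V α : Type} (G : SimpleGraph V) (H : SimpleGraph α) : ℕ :=
  Nat.card {G' : G.Subgraph // Nonempty (G'.coe ≃g H)}

/-- The number of copies of `H` in `G` that are monochromatic under the coloring `C`. -/
noncomputable def monoCopyCount {V α : Type} (G : SimpleGraph V) (H : SimpleGraph α)
    {r : ℕ} (C : Sym2 V → Fin r) : ℕ :=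
  Nat.card {G' : G.Subgraph // Nonempty (G'.coe ≃g H) ∧ ∃ c, ∀ e ∈ G'.edgeSet, C e = c}

/-- The robustness `β_r(H; G)`: the minimum over `r`-colorings of the edges of `G` of the
fraction of copies of `H` in `G` that are monochromatic. -/
noncomputable def robustness {V α : Type} (G : SimpleGraph V) (H : SimpleGraph α) (r : ℕ) : ℝ :=
  sInf {x : ℝ | ∃ C : Sym2 V → Fin r, x = (monoCopyCount G H C : ℝ) / (copyCount G H : ℝ)}


theorem aux_robust_le {α : Type} [Fintype α] (H : SimpleGraph α) (r : ℕ) (hr : 1 ≤ r)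
    {n : ℕ} (hn : 2 ≤ n) (G : SimpleGraph (Fin n)) (hG : RamseyMinimalFor G H r) :
    robustness G H r ≤ (Fintype.card α : ℝ) / n := by
  classical
  have hfin : Finite G.Subgraph := by
    have hinj : Function.Injective (fun G' : G.Subgraph => (G'.verts, G'.Adj)) := by
      intro a b h
      exact SimpleGraph.Subgraph.ext (congrArg Prod.fst h) (congrArg Prod.snd h)
    exact Finite.of_injective _ hinj
  haveI := Fintype.ofFinite G.Subgraph
  set P : G.Subgraph → Prop := fun G' => Nonempty (G'.coe ≃g H) with hP
  have hbdd : BddBelow {x : ℝ | ∃ C : Sym2 (Fin n) → Fin r,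
      x = (monoCopyCount G H C : ℝ) / (copyCount G H : ℝ)} := by
    refine ⟨0, ?_⟩
    rintro x ⟨C0, rfl⟩
    positivity
  have hT : copyCount G H = (Finset.univ.filter P).card := by
    rw [copyCount, Nat.card_eq_fintype_card, Fintype.card_subtype]
  rcases Nat.eq_zero_or_pos (copyCount G H) with hT0 | hTpos
  · -- degenerate case: no copies at all
    have : robustness G H r ≤ 0 := by
      have hmem : (0:ℝ) ∈ {x : ℝ | ∃ C : Sym2 (Fin n) → Fin r,
          x = (monoCopyCount G H C : ℝ) / (copyCount G H : ℝ)} := by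
        refine ⟨fun _ => ⟨0, hr⟩, ?_⟩
        rw [hT0]; simp
      exact csInf_le hbdd hmem
    refine this.trans (by positivity)
  -- counting
  set cnt : Fin n → ℕ := fun v =>
    (Finset.univ.filter (fun G' : G.Subgraph => P G' ∧ v ∈ G'.verts)).card with hcnt
  have hsum : ∑ v, cnt v = (Finset.univ.filter P).card * Fintype.card α := by
    calc ∑ v, cnt v
        = ∑ v, ∑ G' ∈ Finset.univ.filter P, (if v ∈ G'.verts then 1 else 0) := by
          refine Finset.sum_congr rfl fun v _ => ?_
          show (Finset.univ.filter (fun G' : G.Subgraph => P G' ∧ v ∈ G'.verts)).card = _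
          rw [← Finset.filter_filter, Finset.card_filter]
      _ = ∑ G' ∈ Finset.univ.filter P, ∑ v : Fin n, (if v ∈ G'.verts then 1 else 0) :=
          Finset.sum_comm
      _ = ∑ G' ∈ Finset.univ.filter P, Fintype.card α := by
          refine Finset.sum_congr rfl fun G' hG' => ?_
          obtain ⟨e⟩ := (Finset.mem_filter.mp hG').2
          calc ∑ v : Fin n, (if v ∈ G'.verts then 1 else 0)
              = (Finset.univ.filter (fun v => v ∈ G'.verts)).card :=
                (Finset.card_filter _ _).symm
            _ = Fintype.card G'.verts := (Fintype.card_subtype _).symm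
            _ = Fintype.card α := Fintype.card_congr e.toEquiv
      _ = (Finset.univ.filter P).card * Fintype.card α := by
          rw [Finset.sum_const, smul_eq_mul]
  -- choose a vertex in fewest copies
  haveI : Nonempty (Fin n) := ⟨⟨0, by omega⟩⟩
  obtain ⟨v₀, -, hv₀⟩ := Finset.exists_min_image Finset.univ cnt ⟨Classical.arbitrary _,
    Finset.mem_univ _⟩
  have hmin : n * cnt v₀ ≤ copyCount G H * Fintype.card α := by
    have h1 : Finset.univ.card • cnt v₀ ≤ ∑ v, cnt v :=
      Finset.card_nsmul_le_sum _ _ _ (fun v _ => hv₀ v (Finset.mem_univ v))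
    rw [Finset.card_univ, Fintype.card_fin, smul_eq_mul] at h1
    rw [hT]
    exact h1.trans hsum.le
  -- the subgraph G - v₀
  set Gv : G.Subgraph :=
    { verts := {v₀}ᶜ
      Adj := fun x y => G.Adj x y ∧ x ≠ v₀ ∧ y ≠ v₀
      adj_sub := fun h => h.1
      edge_vert := fun h => h.2.1
      symm := ⟨fun x y h => ⟨h.1.symm, h.2.2, h.2.1⟩⟩ } with hGv
  have hGvne : Gv ≠ ⊤ := by
    intro h
    have hmem : v₀ ∈ Gv.verts := by
      rw [h]; exact Set.mem_univ v₀
    exact hmem rfl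
  have hnot := hG.2 Gv hGvne
  rw [ArrowsFor] at hnot
  push_neg at hnot
  obtain ⟨C', hC'⟩ := hnot
  haveI : Nontrivial (Fin n) := Fin.nontrivial_iff_two_le.mpr hn
  obtain ⟨w, hwv⟩ := exists_ne v₀
  have hwmem : w ∈ Gv.verts := hwv
  set g : Fin n → Gv.verts := fun x => if h : x = v₀ then ⟨w, hwmem⟩ else ⟨x, h⟩ with hg
  set C : Sym2 (Fin n) → Fin r := fun e => C' (Sym2.map g e) with hC
  -- every monochromatic copy under C contains v₀
  have hkey : ∀ G' : G.Subgraph, Nonempty (G'.coe ≃g H) →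
      (∃ c, ∀ e ∈ G'.edgeSet, C e = c) → v₀ ∈ G'.verts := by
    intro G' hiso hc
    by_contra hv
    obtain ⟨e⟩ := hiso
    obtain ⟨c, hc⟩ := hc
    apply hC'
    have hne : ∀ a : α, ((e.symm a : G'.verts) : Fin n) ≠ v₀ := by
      intro a ha
      exact hv (ha ▸ (e.symm a).2)
    refine ⟨fun a => ⟨(e.symm a : G'.verts), hne a⟩, c, ?_, ?_⟩
    · intro a b hab
      have h2 := congrArg Subtype.val hab
      exact e.symm.toEquiv.injective (Subtype.ext h2)
    · intro a b hab
      have hadj : G'.Adj (e.symm a : G'.verts) (e.symm b : G'.verts) := by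
        have := e.symm.map_adj_iff.mpr hab
        exact this
      constructor
      · exact ⟨G'.adj_sub hadj, hne a, hne b⟩
      · have hedge : s(((e.symm a : G'.verts) : Fin n), ((e.symm b : G'.verts) : Fin n))
            ∈ G'.edgeSet := hadj
        have hgval : ∀ (x : G'.verts) (hx : (x : Fin n) ≠ v₀),
            g (x : Fin n) = ⟨(x : Fin n), hx⟩ := by
          intro x hx
          simp only [hg]
          rw [dif_neg hx]
        have h3 := hc _ hedge
        simp only [hC, Sym2.map_pair_eq, hgval _ (hne a), hgval _ (hne b)] at h3
        exact h3
  -- bound the number of monochromatic copies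
  have hmono : monoCopyCount G H C ≤ cnt v₀ := by
    rw [monoCopyCount, Nat.card_eq_fintype_card, Fintype.card_subtype, hcnt]
    apply Finset.card_le_card
    intro G' hG'
    rw [Finset.mem_filter] at hG' ⊢
    exact ⟨hG'.1, hG'.2.1, hkey G' hG'.2.1 hG'.2.2⟩
  -- conclude
  have hrob : robustness G H r ≤ (monoCopyCount G H C : ℝ) / (copyCount G H : ℝ) :=
    csInf_le hbdd ⟨C, rfl⟩
  refine hrob.trans ?_
  rw [div_le_div_iff₀ (by exact_mod_cast hTpos) (by positivity)]
  have hfinal : monoCopyCount G H C * n ≤ Fintype.card α * copyCount G H := by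
    calc monoCopyCount G H C * n ≤ cnt v₀ * n := Nat.mul_le_mul_right _ hmono
      _ = n * cnt v₀ := Nat.mul_comm _ _
      _ ≤ copyCount G H * Fintype.card α := hmin
      _ = Fintype.card α * copyCount G H := Nat.mul_comm _ _
  exact_mod_cast hfinal

/-- Proposition 5.3. If `H` is `r`-Ramsey-infinite (there are infinitely many
`r`-Ramsey-minimal graphs for `H` up to isomorphism, equivalently the set of numbers of
vertices of `r`-Ramsey-minimal graphs is infinite), then
`inf { β_r(H; G) : G ∈ M_r(H) } = 0`. -/
theorem robustness_inf_zero_of_ramsey_infinite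
    (α : Type) [Fintype α] (H : SimpleGraph α) (hH : ∃ x y, H.Adj x y)
    (r : ℕ) (hr : 1 ≤ r)
    (hinf : {n : ℕ | ∃ G : SimpleGraph (Fin n), RamseyMinimalFor G H r}.Infinite) :
    sInf {x : ℝ | ∃ (n : ℕ) (G : SimpleGraph (Fin n)),
      RamseyMinimalFor G H r ∧ x = robustness G H r} = 0 := by
  classical
  set S := {x : ℝ | ∃ (n : ℕ) (G : SimpleGraph (Fin n)),
      RamseyMinimalFor G H r ∧ x = robustness G H r} with hS
  have hnn : ∀ x ∈ S, (0:ℝ) ≤ x := by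
    rintro x ⟨n, G, hG, rfl⟩
    apply Real.sInf_nonneg
    rintro y ⟨C, rfl⟩
    positivity
  refine le_antisymm ?_ (Real.sInf_nonneg hnn)
  have hle : ∀ ε > (0:ℝ), sInf S ≤ 0 + ε := by
    intro ε hε
    obtain ⟨m, hm⟩ := exists_nat_gt ((Fintype.card α : ℝ) / ε)
    obtain ⟨n, hnmem, hn⟩ := hinf.exists_gt (max m 1)
    obtain ⟨G, hG⟩ := hnmem
    have h2n : 2 ≤ n := by
      have := le_max_right m 1; omega
    have hmn : m < n := by
      have := le_max_left m 1; omega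
    have h1 : sInf S ≤ robustness G H r :=
      csInf_le ⟨0, hnn⟩ ⟨n, G, hG, rfl⟩
    have h2 := aux_robust_le H r hr h2n G hG
    have h3 : (Fintype.card α : ℝ) / n ≤ ε := by
      rw [div_le_iff₀ (by positivity)]
      have hc : (Fintype.card α : ℝ) < ε * m := by
        rw [div_lt_iff₀ hε] at hm
        linarith [hm]
      have hmn' : (m : ℝ) ≤ n := by exact_mod_cast hmn.le
      nlinarith
    linarith
  by_contra hlt
  push_neg at hlt
  have := hle ((sInf S) / 2) (by linarith)
  linarith
end

section
/- Let H be a graph and r ≥ 1 an integer. If H is r-Ramsey-finite, i.e., the set M_r(H) of r-Ramsey-minimal graphs for H is finite, then there exists a constant c = c(H,r), independent of G, such that for every graph G with G →_r H and every positive integer t, the blowup Ramsey number satisfies B_r(G → H; t) ≤ c^t. -/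
/-!
Every `G →_r H` contains a Ramsey-minimal `F`, which by Ramsey-finiteness has at most `N = N(H, r)`
vertices, and a canonical copy of `H[t]` in `F[n]` is one in `G[n]`. So it suffices to show
`B_r(F → H; t) ≤ (p + 2)^(p |H| t)`, where `p ≤ N^|H| r` counts the pairs `π` of a copy of `H` in
`F` and a colour.

Colour `F[n]` and keep a box `B u ⊆ [n]` of candidates in every part. Each transversal of the
boxes induces a colouring of `F` and hence a monochromatic pair `π`; some `π` arises from a `1/p`
fraction of all transversals. Averaging over these, for any vertex `a` of `H` some `v` in the box
of `π a` sends edges of colour `π.2` to a `1/p` fraction of the box of `π b`, for every neighbour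
`b` of `a`. Commit `v` as a blowup vertex of `a` for `π`, remove it from its box and cut the boxes
of the neighbours down to those edges: every box shrinks by a factor at most `p + 2`. Each step
fills one of the `p |H| t` slots, so the process stops with a complete canonical `H[t]`.
-/

open Finset Function SimpleGraph

theorem Fintype.prod_update_mul {ι M : Type*} [Fintype ι] [DecidableEq ι] [CommMonoid M]
    (f : ι → M) (i : ι) (a : M) : (∏ k, update f i a k) * f i = (∏ k, f k) * a := by
  rw [prod_update_of_mem (mem_univ i), prod_eq_mul_prod_sdiff_singleton_of_mem (mem_univ i)]
  ac_rfl

theorem Finset.exists_card_le_mul_card_filter {β γ : Type*} [DecidableEq γ] {s : Finset β}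
    {t : Finset γ} {f : β → γ} (hf : ∀ b ∈ s, f b ∈ t) (ht : t.Nonempty) :
    ∃ y ∈ t, #s ≤ #t * #{b ∈ s | f b = y} := by
  obtain ⟨y, hy, hmax⟩ := exists_max_image t (fun y => #{b ∈ s | f b = y}) ht
  exact ⟨y, hy, mul_comm #t _ ▸ card_le_mul_card_image_of_maps_to hf _ hmax⟩

theorem Fintype.exists_mem_forall_card_le_mul_card_image {ι β : Type*} [Fintype ι]
    [DecidableEq ι] [DecidableEq β] {B : ι → Finset β} {X : Finset (ι → β)} {p : ℕ}
    (hX : X ⊆ piFinset B) (hB : ∀ i, (B i).Nonempty) (hdense : #(piFinset B) ≤ p * #X)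
    (i₀ : ι) : ∃ v ∈ B i₀, ∀ j ≠ i₀, #(B j) ≤ p * #({x ∈ X | x i₀ = v}.image (· j)) := by
  obtain ⟨v, hv, hfiber⟩ := exists_card_le_mul_card_filter (f := (· i₀))
    (fun x hx => mem_piFinset.mp (hX hx) i₀) (hB i₀)
  refine ⟨v, hv, fun j hj => ?_⟩
  set Xv := {x ∈ X | x i₀ = v}
  set P := Xv.image (· j)
  set c : ι → ℕ := fun k => #(B k)
  set Q := update (update B i₀ {v}) j P
  have hXv : Xv ⊆ piFinset Q := by
    intro x hx
    obtain ⟨hxX, rfl⟩ := mem_filter.mp hx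
    refine mem_piFinset.mpr fun k => ?_
    rcases eq_or_ne k j with rfl | hkj
    · simp only [Q, update_self]; exact mem_image_of_mem _ hx
    rcases eq_or_ne k i₀ with rfl | hki
    · simp [Q, hkj]
    · simpa [Q, hkj, hki] using mem_piFinset.mp (hX hxX) k
  have hQ : #(piFinset Q) * (c i₀ * c j) = (∏ k, c k) * #P := by
    have h₁ := Fintype.prod_update_mul (update c i₀ 1) j #P
    have h₂ := Fintype.prod_update_mul c i₀ 1
    rw [update_of_ne hj] at h₁
    simp only [Q, card_piFinset, apply_update (fun _ (s : Finset β) => #s), card_singleton]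
    calc (∏ k, update (update c i₀ 1) j #P k) * (c i₀ * c j)
        = (∏ k, update c i₀ 1 k) * c i₀ * #P := by rw [← mul_assoc, mul_right_comm, h₁]; ring
      _ = (∏ k, c k) * #P := by rw [h₂, mul_one]
  have hpos : 0 < ∏ k, c k := prod_pos fun k _ => Finset.card_pos.mpr (hB k)
  refine le_of_mul_le_mul_left ?_ hpos
  calc (∏ k, c k) * c j ≤ p * #X * c j := by
        rw [← card_piFinset]; exact Nat.mul_le_mul_right _ hdense
    _ ≤ p * (c i₀ * #(piFinset Q)) * c j := by
        gcongr; exact hfiber.trans (Nat.mul_le_mul_left _ (card_le_card hXv))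
    _ = (∏ k, c k) * (p * #P) := by linear_combination p * hQ

theorem SimpleGraph.Copy.card_le {α U : Type} [Fintype α] [DecidableEq α] [Fintype U]
    {H : SimpleGraph α} {F : SimpleGraph U} [Fintype (H.Copy F)] :
    Fintype.card (H.Copy F) ≤ Fintype.card U ^ Fintype.card α := by
  simpa using Fintype.card_le_of_injective _ (DFunLike.coe_injective (F := H.Copy F))

section Transfer

variable {V W α : Type} {G : SimpleGraph V} {G' : SimpleGraph W} {H : SimpleGraph α}
  {r n t : ℕ}

theorem ArrowsFor.of_copy (f : G.Copy G') (h : ArrowsFor G H r) : ArrowsFor G' H r := by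
  intro C
  obtain ⟨g, c, hg, hgC⟩ := h (fun e => C (e.map f))
  refine ⟨f ∘ g, c, f.injective.comp hg, fun a b hab => ⟨f.toHom.map_adj (hgC a b hab).1, ?_⟩⟩
  simpa using (hgC a b hab).2

theorem BlowupArrow.of_copy (f : G.Copy G') (h : BlowupArrow G H r n t) :
    BlowupArrow G' H r n t := by
  intro C
  obtain ⟨φ, ψ, c, hφ, hψ, hφC⟩ := h (fun e => C (e.map (Prod.map f id)))
  refine ⟨f ∘ φ, ψ, c, f.injective.comp hφ, hψ,
    fun a b hab => ⟨f.toHom.map_adj (hφC a b hab).1, ?_⟩⟩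
  simpa using (hφC a b hab).2

theorem SimpleGraph.Subgraph.eq_top_of_map_iso_eq_top (e : G ≃g G') {K : G'.Subgraph}
    (h : K.map e.symm.toHom = ⊤) : K = ⊤ := by
  ext x y
  · simpa using congrArg (e.symm x ∈ ·.verts) h
  · simpa [Relation.Map, Iso.map_adj_iff] using congrArg (·.Adj (e.symm x) (e.symm y)) h

theorem RamseyMinimalFor.of_iso (e : G ≃g G') (h : RamseyMinimalFor G H r) :
    RamseyMinimalFor G' H r :=
  ⟨h.1.of_copy e.toCopy, fun K hK hKH =>
    h.2 (K.map e.symm.toHom) (mt (Subgraph.eq_top_of_map_iso_eq_top e) hK)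
      (hKH.of_copy (e.symm.toCopy.isoSubgraphMap K).toCopy)⟩

theorem ArrowsFor.exists_ramseyMinimalFor_subgraph [Finite V] (h : ArrowsFor G H r) :
    ∃ G₀ : G.Subgraph, RamseyMinimalFor G₀.coe H r := by
  obtain ⟨G₀, hG₀, hmin⟩ := exists_minimal_of_wellFoundedLT
    (fun G₀ : G.Subgraph => ArrowsFor G₀.coe H r) ⟨⊤, h.of_copy Subgraph.topIso.symm.toCopy⟩
  refine ⟨G₀, hG₀, fun K hK hKH => hK (Subgraph.coeSubgraph_injective G₀ ?_)⟩
  have hle : Subgraph.coeSubgraph K ≤ G₀ := Subgraph.coeSubgraph_le K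
  rw [le_antisymm hle (hmin (hKH.of_copy (G₀.coeCopy.isoSubgraphMap K).toCopy) hle)]
  exact (Subgraph.map_hom_top G₀).symm

theorem ArrowsFor.exists_ramseyMinimalFor_fin_isContained [Fintype V] (h : ArrowsFor G H r) :
    ∃ (k : ℕ) (F : SimpleGraph (Fin k)), RamseyMinimalFor F H r ∧ F ⊑ G := by
  classical
  obtain ⟨G₀, hG₀⟩ := h.exists_ramseyMinimalFor_subgraph
  let e := Iso.map (Fintype.equivFin G₀.verts) G₀.coe
  exact ⟨_, _, hG₀.of_iso e, ⟨G₀.coeCopy.comp e.symm.toCopy⟩⟩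

end Transfer

section CanonicalBlowup

variable {α U : Type} {H : SimpleGraph α} {F : SimpleGraph U} {r n t : ℕ}
  (C : Sym2 (U × Fin n) → Fin r)

theorem ArrowsFor.exists_copy_mono_on_transversal (hA : ArrowsFor F H r) (χ : U → Fin n) :
    ∃ π : H.Copy F × Fin r,
      ∀ a b, H.Adj a b → C s((π.1 a, χ (π.1 a)), (π.1 b, χ (π.1 b))) = π.2 := by
  obtain ⟨f, c, hf, hfC⟩ := hA (fun e => C (e.map fun u => (u, χ u)))
  exact ⟨(⟨⟨f, (hfC _ _ · |>.1)⟩, hf⟩, c), fun a b hab => by simpa using (hfC a b hab).2⟩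

/-- `S π a` holds the blowup vertices chosen so far for the vertex `a` of the copy `π.1`, which is
to become monochromatic in colour `π.2`; `B u` holds the candidates still available in part `u`. -/
structure IsPartialBlowup (B : U → Finset (Fin n))
    (S : H.Copy F × Fin r → α → Finset (Fin n)) : Prop where
  mono : ∀ π a b, H.Adj a b → ∀ x ∈ S π a, ∀ y ∈ S π b, C s((π.1 a, x), (π.1 b, y)) = π.2
  mono_box : ∀ π a b, H.Adj a b → ∀ x ∈ S π a, ∀ y ∈ B (π.1 b),
    C s((π.1 a, x), (π.1 b, y)) = π.2
  disjoint : ∀ π a, Disjoint (S π a) (B (π.1 a))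

open Classical in
noncomputable def addVertex (S : H.Copy F × Fin r → α → Finset (Fin n))
    (π : H.Copy F × Fin r) (a₀ : α) (v : Fin n) : H.Copy F × Fin r → α → Finset (Fin n) :=
  fun π' a => if π' = π ∧ a = a₀ then insert v (S π' a) else S π' a

open Classical in
noncomputable def shrinkBoxes (B : U → Finset (Fin n)) (π : H.Copy F × Fin r) (a₀ : α)
    (v : Fin n) : U → Finset (Fin n) :=
  fun u => if u = π.1 a₀ then (B u).erase v
    else {y ∈ B u | (∃ b, H.Adj a₀ b ∧ π.1 b = u) → C s((π.1 a₀, v), (u, y)) = π.2}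

variable {C}

theorem IsPartialBlowup.hasMonoCanonicalBlowup {B : U → Finset (Fin n)}
    {S : H.Copy F × Fin r → α → Finset (Fin n)} (h : IsPartialBlowup C B S)
    (π : H.Copy F × Fin r) (hπ : ∀ a, t ≤ #(S π a)) : HasMonoCanonicalBlowup F H n t r C :=
  ⟨π.1, fun a => (S π a).orderEmbOfCardLe (hπ a), π.2, π.1.injective,
    fun a => ((S π a).orderEmbOfCardLe (hπ a)).injective, fun a b hab =>
      ⟨π.1.toHom.map_adj hab, fun _ _ => h.mono π a b hab _ (orderEmbOfCardLe_mem _ _ _) _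
        (orderEmbOfCardLe_mem _ _ _)⟩⟩

theorem mem_addVertex {S : H.Copy F × Fin r → α → Finset (Fin n)} {π π' : H.Copy F × Fin r}
    {a₀ a : α} {v x : Fin n} :
    x ∈ addVertex S π a₀ v π' a ↔ x ∈ S π' a ∨ (π' = π ∧ a = a₀ ∧ x = v) := by
  unfold addVertex
  split_ifs with h <;> aesop

open Classical in
theorem shrinkBoxes_subset (B : U → Finset (Fin n)) (π : H.Copy F × Fin r) (a₀ : α)
    (v : Fin n) (u : U) : shrinkBoxes C B π a₀ v u ⊆ B u := by
  unfold shrinkBoxes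
  split_ifs
  exacts [erase_subset _ _, filter_subset _ _]

theorem notMem_shrinkBoxes (B : U → Finset (Fin n)) (π : H.Copy F × Fin r) (a₀ : α)
    (v : Fin n) : v ∉ shrinkBoxes C B π a₀ v (π.1 a₀) := by
  simp [shrinkBoxes]

theorem mono_of_mem_shrinkBoxes {B : U → Finset (Fin n)} {π : H.Copy F × Fin r} {a₀ b : α}
    {v y : Fin n} (hab : H.Adj a₀ b) (hy : y ∈ shrinkBoxes C B π a₀ v (π.1 b)) :
    C s((π.1 a₀, v), (π.1 b, y)) = π.2 := by
  have hne : π.1 b ≠ π.1 a₀ := π.1.injective.ne hab.ne.symm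
  simp only [shrinkBoxes, hne, if_false, mem_filter] at hy
  exact hy.2 ⟨b, hab, rfl⟩

theorem IsPartialBlowup.addVertex {B : U → Finset (Fin n)}
    {S : H.Copy F × Fin r → α → Finset (Fin n)} (h : IsPartialBlowup C B S)
    {π : H.Copy F × Fin r} {a₀ : α} {v : Fin n} (hv : v ∈ B (π.1 a₀)) :
    IsPartialBlowup C (shrinkBoxes C B π a₀ v) (addVertex S π a₀ v) where
  mono π' a b hab x hx y hy := by
    rcases mem_addVertex.mp hx with hxS | ⟨rfl, rfl, rfl⟩
    · rcases mem_addVertex.mp hy with hyS | ⟨rfl, rfl, rfl⟩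
      · exact h.mono _ _ _ hab _ hxS _ hyS
      · exact h.mono_box _ _ _ hab _ hxS _ hv
    · rcases mem_addVertex.mp hy with hyS | ⟨-, rfl, -⟩
      · rw [Sym2.eq_swap]; exact h.mono_box _ _ _ hab.symm _ hyS _ hv
      · exact absurd hab H.irrefl
  mono_box π' a b hab x hx y hy := by
    rcases mem_addVertex.mp hx with hxS | ⟨rfl, rfl, rfl⟩
    · exact h.mono_box _ _ _ hab _ hxS _ (shrinkBoxes_subset _ _ _ _ _ hy)
    · exact mono_of_mem_shrinkBoxes hab hy
  disjoint π' a := by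
    refine disjoint_left.mpr fun x hx hxB => ?_
    rcases mem_addVertex.mp hx with hxS | ⟨rfl, rfl, rfl⟩
    · exact disjoint_left.mp (h.disjoint π' a) hxS (shrinkBoxes_subset _ _ _ _ _ hxB)
    · exact notMem_shrinkBoxes _ _ _ _ hxB

open Classical in
theorem le_card_shrinkBoxes {B : U → Finset (Fin n)} {π : H.Copy F × Fin r} {a₀ : α}
    {v : Fin n} {p k : ℕ} (hB : ∀ u, (p + 2) ^ (k + 1) ≤ #(B u))
    (hgood : ∀ b, H.Adj a₀ b →
      #(B (π.1 b)) ≤ p * #{y ∈ B (π.1 b) | C s((π.1 a₀, v), (π.1 b, y)) = π.2})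
    (u : U) : (p + 2) ^ k ≤ #(shrinkBoxes C B π a₀ v u) := by
  have hBu : (p + 2) ^ k * (p + 2) ≤ #(B u) := pow_succ (p + 2) k ▸ hB u
  have hpow : 0 < (p + 2) ^ k := by positivity
  unfold shrinkBoxes
  split_ifs with hu
  · have : (p + 2) ^ k + 1 ≤ #(B u) := by nlinarith
    have := pred_card_le_card_erase (s := B u) (a := v)
    omega
  by_cases hb : ∃ b, H.Adj a₀ b ∧ π.1 b = u
  · obtain ⟨b, hab, rfl⟩ := hb
    rw [filter_congr fun y _ => imp_iff_right ⟨b, hab, rfl⟩]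
    have hp : 0 < p := Nat.pos_of_ne_zero fun hp => by have := hgood b hab; simp_all
    refine Nat.le_of_mul_le_mul_left ?_ hp
    nlinarith [hgood b hab]
  · rw [filter_true_of_mem fun y _ h => absurd h hb]
    nlinarith

variable [Fintype α] [Fintype (H.Copy F)]

def deficit (t : ℕ) (S : H.Copy F × Fin r → α → Finset (Fin n)) : ℕ :=
  ∑ x : (H.Copy F × Fin r) × α, (t - #(S x.1 x.2))

theorem deficit_addVertex_lt {S : H.Copy F × Fin r → α → Finset (Fin n)}
    {π : H.Copy F × Fin r} {a₀ : α} {v : Fin n} (hv : v ∉ S π a₀) (ht : #(S π a₀) < t) :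
    deficit t (addVertex S π a₀ v) < deficit t S := by
  refine sum_lt_sum (fun x _ => Nat.sub_le_sub_left
    (card_le_card fun y hy => mem_addVertex.mpr (Or.inl hy)) t) ⟨(π, a₀), mem_univ _, ?_⟩
  have : addVertex S π a₀ v π a₀ = insert v (S π a₀) := by simp [addVertex]
  simp only [this, card_insert_of_notMem hv]
  omega

variable [Fintype U] [DecidableEq U]

variable (C) in
theorem ArrowsFor.exists_copy_forall_exists_card_le (hA : ArrowsFor F H r)
    {B : U → Finset (Fin n)} (hB : ∀ u, (B u).Nonempty) :
    ∃ π : H.Copy F × Fin r, ∀ a₀, ∃ v ∈ B (π.1 a₀), ∀ b, H.Adj a₀ b →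
      #(B (π.1 b)) ≤ Fintype.card (H.Copy F × Fin r) *
        #{y ∈ B (π.1 b) | C s((π.1 a₀, v), (π.1 b, y)) = π.2} := by
  choose pat hpat using hA.exists_copy_mono_on_transversal C
  have : Nonempty (H.Copy F × Fin r) := ⟨pat fun u => (hB u).choose⟩
  obtain ⟨π, -, hπ⟩ := exists_card_le_mul_card_filter (s := Fintype.piFinset B)
    (t := (univ : Finset (H.Copy F × Fin r))) (f := pat) (fun _ _ => mem_univ _) univ_nonempty
  rw [card_univ] at hπ
  refine ⟨π, fun a₀ => ?_⟩
  obtain ⟨v, hv, hgood⟩ := Fintype.exists_mem_forall_card_le_mul_card_image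
    (filter_subset (pat · = π) _) hB hπ (π.1 a₀)
  refine ⟨v, hv, fun b hab => (hgood _ (π.1.injective.ne hab.ne.symm)).trans
    (Nat.mul_le_mul_left _ (card_le_card fun y hy => ?_))⟩
  obtain ⟨χ, hχ, rfl⟩ := mem_image.mp hy
  simp only [mem_filter, Fintype.mem_piFinset] at hχ
  obtain ⟨⟨hχB, rfl⟩, rfl⟩ := hχ
  exact mem_filter.mpr ⟨hχB _, hpat χ a₀ b hab⟩

theorem ArrowsFor.hasMonoCanonicalBlowup_of_isPartialBlowup (hA : ArrowsFor F H r) (k : ℕ) :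
    ∀ {B : U → Finset (Fin n)} {S : H.Copy F × Fin r → α → Finset (Fin n)},
      IsPartialBlowup C B S → deficit t S ≤ k →
      (∀ u, (Fintype.card (H.Copy F × Fin r) + 2) ^ k ≤ #(B u)) →
      HasMonoCanonicalBlowup F H n t r C := by
  induction k using Nat.strong_induction_on with
  | _ k ih =>
  intro B S hS hdef hB
  obtain ⟨π, hπ⟩ := hA.exists_copy_forall_exists_card_le C (B := B)
    fun u => card_pos.mp ((pow_pos (by omega) k).trans_le (hB u))
  by_cases hdone : ∀ a, t ≤ #(S π a)
  · exact hS.hasMonoCanonicalBlowup π hdone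
  push Not at hdone
  obtain ⟨a₀, ha₀⟩ := hdone
  obtain ⟨v, hv, hgood⟩ := hπ a₀
  have hlt := deficit_addVertex_lt (disjoint_right.mp (hS.disjoint π a₀) hv) ha₀
  obtain ⟨k, rfl⟩ : ∃ k', k = k' + 1 := Nat.exists_eq_add_one.mpr (by omega)
  exact ih k (lt_add_one k) (hS.addVertex hv) (by omega) (le_card_shrinkBoxes hB hgood)

theorem ArrowsFor.blowupArrow (hA : ArrowsFor F H r) (t : ℕ) :
    BlowupArrow F H r ((Fintype.card (H.Copy F × Fin r) + 2) ^
      (Fintype.card (H.Copy F × Fin r) * Fintype.card α * t)) t := by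
  intro C
  refine hA.hasMonoCanonicalBlowup_of_isPartialBlowup (C := C)
    (Fintype.card (H.Copy F × Fin r) * Fintype.card α * t) (B := fun _ => univ)
    (S := fun _ _ => ∅) ⟨by simp, by simp, by simp⟩ ?_ fun _ => by simp
  simp [deficit, Fintype.card_prod, mul_assoc]

end CanonicalBlowup

theorem blowup_ramsey_uniform_bound_of_ramsey_finite_general
    (α : Type) [Fintype α] (H : SimpleGraph α) (r : ℕ)
    (hfin : {n : ℕ | ∃ G : SimpleGraph (Fin n), RamseyMinimalFor G H r}.Finite) :
    ∃ c : ℝ, 0 < c ∧ ∀ (V : Type) [Fintype V] (G : SimpleGraph V), ArrowsFor G H r →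
      ∀ t : ℕ, 1 ≤ t → ∃ n : ℕ, (n : ℝ) ≤ c ^ t ∧ BlowupArrow G H r n t := by
  classical
  obtain ⟨N, hN⟩ := hfin.bddAbove
  set P := N ^ Fintype.card α * r
  refine ⟨((P + 2) ^ (P * Fintype.card α) : ℕ), by positivity, fun V _ G hG t _ => ?_⟩
  obtain ⟨k, F, hF, ⟨f⟩⟩ := hG.exists_ramseyMinimalFor_fin_isContained
  let _ : Fintype (H.Copy F) := Fintype.ofInjective _ DFunLike.coe_injective
  set p := Fintype.card (H.Copy F × Fin r) with hp_def
  have hp : p ≤ P := by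
    rw [hp_def, Fintype.card_prod, Fintype.card_fin]
    exact Nat.mul_le_mul_right r
      (Copy.card_le.trans (by simpa using Nat.pow_le_pow_left (hN ⟨F, hF⟩) _))
  refine ⟨_, ?_, (hF.1.blowupArrow t).of_copy f⟩
  have : (p + 2) ^ (p * Fintype.card α * t) ≤ ((P + 2) ^ (P * Fintype.card α)) ^ t :=
    calc (p + 2) ^ (p * Fintype.card α * t) ≤ (P + 2) ^ (p * Fintype.card α * t) :=
          Nat.pow_le_pow_left (by omega) _
      _ ≤ (P + 2) ^ (P * Fintype.card α * t) := Nat.pow_le_pow_right (by omega) (by gcongr)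
      _ = ((P + 2) ^ (P * Fintype.card α)) ^ t := pow_mul _ _ _
  exact_mod_cast this

/-- observation of Souza. If `H` is `r`-Ramsey-finite (only finitely many
`r`-Ramsey-minimal graphs for `H` up to isomorphism, equivalently the set of numbers of
vertices of `r`-Ramsey-minimal graphs is finite), then there is a constant `c = c(H,r)`,
independent of `G`, with `B_r(G → H; t) ≤ c^t` for all `G →_r H` and all positive `t`. -/
theorem blowup_ramsey_uniform_bound_of_ramsey_finite
    (α : Type) [Fintype α] (H : SimpleGraph α) (r : ℕ) (hr : 1 ≤ r)
    (hfin : {n : ℕ | ∃ G : SimpleGraph (Fin n), RamseyMinimalFor G H r}.Finite) :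
    ∃ c : ℝ, 0 < c ∧ ∀ (V : Type) [Fintype V] (G : SimpleGraph V), ArrowsFor G H r →
      ∀ t : ℕ, 1 ≤ t → ∃ n : ℕ, (n : ℝ) ≤ c ^ t ∧ BlowupArrow G H r n t :=
  blowup_ramsey_uniform_bound_of_ramsey_finite_general α H r hfin
end

section
/- Let P_3 denote the path with three vertices and two edges. A graph G satisfies G →_2 P_3 (every 2-coloring of the edges of G contains a monochromatic copy of P_3) if and only if G has a vertex of degree at least 3 or G contains an odd cycle. -/
/-!
A 2-colouring of the edges with no monochromatic `P₃` is exactly a proper edge colouring with two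
colours. Such a colouring forces every degree to be at most 2 (pigeonhole), and along a trail the
two colours must alternate, which rules out odd cycles. Conversely, if all degrees are at most 2
and every cycle is even, delete an edge `uv` that either hangs off a leaf `u` or lies on a cycle,
and colour the rest by induction. In the first case `u` has no other edge and `v` at most one;
in the second the path from `u` to `v` avoiding `uv` closes to an even cycle, so it has odd
length and its two end edges share a colour. Either way all other edges at `u` and `v` carry one
colour, and `uv` receives the other.
-/

namespace SimpleGraph

variable {V α : Type*} {G : SimpleGraph V}

def IsProperEdgeColoring (G : SimpleGraph V) (C : Sym2 V → α) : Prop :=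
  ∀ ⦃x y z : V⦄, G.Adj y x → G.Adj y z → x ≠ z → C s(y, x) ≠ C s(y, z)

theorem IsProperEdgeColoring.degree_le_card [Fintype α] {C : Sym2 V → α}
    (hC : G.IsProperEdgeColoring C) (v : V) [Fintype (G.neighborSet v)] :
    G.degree v ≤ Fintype.card α := by
  by_contra! h
  rw [← card_neighborSet_eq_degree] at h
  obtain ⟨⟨x, hx⟩, ⟨z, hz⟩, hxz, hC'⟩ :=
    Fintype.exists_ne_map_eq_of_card_lt (fun x : G.neighborSet v ↦ C s(v, x)) h
  exact hC hx hz (by simpa using hxz) hC'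

theorem IsProperEdgeColoring.color_penultimate_eq_iff {C : Sym2 V → Fin 2}
    (hC : G.IsProperEdgeColoring C) {u v : V} {p : G.Walk u v} (hp : p.IsTrail) (hnil : ¬ p.Nil) :
    C s(p.penultimate, v) = C s(u, p.snd) ↔ Odd p.length := by
  induction p with
  | nil => exact absurd Walk.Nil.nil hnil
  | @cons u x v h q ih =>
    rw [Walk.isTrail_cons] at hp
    by_cases hq : q.Nil
    · cases hq
      simp
    have hne : C s(x, u) ≠ C s(x, q.snd) := by
      refine hC h.symm (q.adj_snd hq) fun hu ↦ hp.2 ?_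
      rw [hu, Sym2.eq_swap]
      exact q.mk_start_snd_mem_edges hq
    rw [Walk.penultimate_cons_of_not_nil _ _ hq, Walk.snd_cons, Walk.length_cons,
      Nat.odd_add_one, ← ih hp.1 hq, Sym2.eq_swap (a := u)]
    generalize C s(x, u) = a, C s(x, q.snd) = b, C s(q.penultimate, v) = c at hne ⊢
    revert a b c
    decide

theorem IsProperEdgeColoring.even_length_of_isCycle {C : Sym2 V → Fin 2}
    (hC : G.IsProperEdgeColoring C) {u : V} {p : G.Walk u u} (hp : p.IsCycle) :
    Even p.length := by
  by_contra hodd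
  have heq := (hC.color_penultimate_eq_iff hp.isTrail hp.not_nil).mpr
    (Nat.not_even_iff_odd.mp hodd)
  exact hC (p.adj_penultimate hp.not_nil).symm (p.adj_snd hp.not_nil)
    hp.snd_ne_penultimate.symm (by rw [Sym2.eq_swap, heq])

theorem IsProperEdgeColoring.update [DecidableEq V] {C : Sym2 V → α} {u v : V} {b : α}
    (hC : (G.deleteEdges {s(u, v)}).IsProperEdgeColoring C)
    (hb : ∀ w ∈ s(u, v), ∀ z, (G.deleteEdges {s(u, v)}).Adj w z → C s(w, z) ≠ b) :
    G.IsProperEdgeColoring (Function.update C s(u, v) b) := by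
  have hold : ∀ {y w}, G.Adj y w → s(y, w) ≠ s(u, v) →
      (G.deleteEdges {s(u, v)}).Adj y w ∧ Function.update C s(u, v) b s(y, w) = C s(y, w) :=
    fun hyw hne ↦ ⟨(deleteEdges_adj ..).mpr ⟨hyw, hne⟩, Function.update_of_ne hne ..⟩
  intro x y z hyx hyz hxz
  by_cases hx : s(y, x) = s(u, v) <;> by_cases hz : s(y, z) = s(u, v)
  · exact absurd (Sym2.congr_right.mp (hx.trans hz.symm)) hxz
  · obtain ⟨hyz', hCz⟩ := hold hyz hz
    rw [hx, Function.update_self, hCz]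
    exact (hb y (hx ▸ Sym2.mem_mk_left y x) z hyz').symm
  · obtain ⟨hyx', hCx⟩ := hold hyx hx
    rw [hz, Function.update_self, hCx]
    exact hb y (hz ▸ Sym2.mem_mk_left y z) x hyx'
  · obtain ⟨hyx', hCx⟩ := hold hyx hx
    obtain ⟨hyz', hCz⟩ := hold hyz hz
    rw [hCx, hCz]
    exact hC hyx' hyz' hxz

theorem neighborSet_deleteEdges_singleton (u v : V) :
    (G.deleteEdges {s(u, v)}).neighborSet u = G.neighborSet u \ {v} := by
  ext z
  simp only [mem_neighborSet, deleteEdges_adj, Set.mem_singleton_iff, Set.mem_sdiff, Sym2.eq_iff]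
  grind

theorem subsingleton_neighborSet_deleteEdges [Finite V] {u v : V} (huv : G.Adj u v)
    (hu : (G.neighborSet u).ncard ≤ 2) :
    ((G.deleteEdges {s(u, v)}).neighborSet u).Subsingleton := by
  rw [← Set.ncard_le_one_iff_subsingleton, neighborSet_deleteEdges_singleton,
    Set.ncard_sdiff_singleton_of_mem (show v ∈ G.neighborSet u from huv)]
  omega

theorem exists_color_of_neighborSet_eq_singleton [Finite V] [Nonempty α] (C : Sym2 V → α)
    {u v : V} (hu : G.neighborSet u = {v}) (hv : (G.neighborSet v).ncard ≤ 2) :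
    ∃ c, ∀ w ∈ s(u, v), ∀ z, (G.deleteEdges {s(u, v)}).Adj w z → C s(w, z) = c := by
  have huv : v ∈ G.neighborSet u := hu ▸ Set.mem_singleton v
  have hu' := neighborSet_deleteEdges_singleton (G := G) u v
  rw [hu, Set.sdiff_self] at hu'
  have hv' := subsingleton_neighborSet_deleteEdges huv.symm hv
  rw [Sym2.eq_swap] at hv'
  obtain ⟨c, hc⟩ : ∃ c, ∀ z, (G.deleteEdges {s(u, v)}).Adj v z → C s(v, z) = c := by
    by_cases ha : ∃ a, (G.deleteEdges {s(u, v)}).Adj v a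
    · obtain ⟨a, ha⟩ := ha
      exact ⟨C s(v, a), fun z hz ↦ by rw [hv' hz ha]⟩
    · exact ⟨Classical.arbitrary α, fun z hz ↦ absurd ⟨z, hz⟩ ha⟩
  refine ⟨c, fun w hw z hz ↦ ?_⟩
  rcases Sym2.mem_iff.mp hw with rfl | rfl
  · exact absurd hz (Set.eq_empty_iff_forall_notMem.mp hu' z)
  · exact hc z hz

theorem IsProperEdgeColoring.exists_color_of_reachable [Finite V] {C : Sym2 V → Fin 2} {u v : V}
    (huv : G.Adj u v) (hC : (G.deleteEdges {s(u, v)}).IsProperEdgeColoring C)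
    (hreach : (G.deleteEdges {s(u, v)}).Reachable u v)
    (hu : (G.neighborSet u).ncard ≤ 2) (hv : (G.neighborSet v).ncard ≤ 2)
    (heven : ∀ p : G.Walk v v, p.IsCycle → Even p.length) :
    ∃ c, ∀ w ∈ s(u, v), ∀ z, (G.deleteEdges {s(u, v)}).Adj w z → C s(w, z) = c := by
  obtain ⟨p, hp⟩ := hreach.exists_isPath
  have hnil : ¬ p.Nil := Walk.not_nil_of_ne huv.ne
  have hcycle : (Walk.cons huv.symm (p.mapLe (deleteEdges_le _))).IsCycle := by
    rw [Walk.cons_isCycle_iff]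
    exact ⟨hp.mapLe _, fun he ↦
      (edgeSet_deleteEdges _ ▸ p.edges_subset_edgeSet (by simpa using he)).2 Sym2.eq_swap⟩
  have hodd : Odd p.length := by simpa [Nat.even_add_one] using heven _ hcycle
  have hends := (hC.color_penultimate_eq_iff hp.isTrail hnil).mpr hodd
  refine ⟨C s(u, p.snd), fun w hw z hz ↦ ?_⟩
  rcases Sym2.mem_iff.mp hw with rfl | rfl
  · rw [subsingleton_neighborSet_deleteEdges huv hu hz (p.adj_snd hnil)]
  · have hv' := subsingleton_neighborSet_deleteEdges huv.symm hv
    rw [Sym2.eq_swap (a := w)] at hv'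
    rw [hv' hz (p.adj_penultimate hnil).symm, Sym2.eq_swap, hends]

theorem exists_isProperEdgeColoring_fin_two [Finite V] (G : SimpleGraph V)
    (hdeg : ∀ v, (G.neighborSet v).ncard ≤ 2)
    (heven : ∀ v (p : G.Walk v v), p.IsCycle → Even p.length) :
    ∃ C : Sym2 V → Fin 2, G.IsProperEdgeColoring C := by
  classical
  induction G using WellFoundedLT.induction with
  | ind G ih =>
  by_cases hbot : G = ⊥
  · exact ⟨0, fun x y _ hyx ↦ by simp [hbot] at hyx⟩
  obtain ⟨u, v, huv, hsplit⟩ : ∃ u v, G.Adj u v ∧ ∀ C : Sym2 V → Fin 2,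
      (G.deleteEdges {s(u, v)}).IsProperEdgeColoring C →
      ∃ c, ∀ w ∈ s(u, v), ∀ z, (G.deleteEdges {s(u, v)}).Adj w z → C s(w, z) = c := by
    by_cases hleaf : ∃ u, (G.neighborSet u).ncard = 1
    · obtain ⟨u, hu⟩ := hleaf
      obtain ⟨v, hv⟩ := Set.ncard_eq_one.mp hu
      exact ⟨u, v, (hv ▸ Set.mem_singleton v : v ∈ G.neighborSet u),
        fun C _ ↦ exists_color_of_neighborSet_eq_singleton C hv (hdeg v)⟩
    · simp only [not_exists] at hleaf
      have hcycles : G.IsCycles := fun w hw ↦ by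
        have := (Set.ncard_pos).mpr hw
        have := hleaf w
        have := hdeg w
        omega
      obtain ⟨u, v, huv⟩ := ne_bot_iff_exists_adj.mp hbot
      exact ⟨u, v, huv, fun C hC ↦ hC.exists_color_of_reachable huv
        (hcycles.reachable_deleteEdges huv) (hdeg u) (hdeg v) (heven v)⟩
  have hlt : G.deleteEdges {s(u, v)} < G := (deleteEdges_le _).lt_of_ne fun h ↦ by
    rw [← h] at huv
    simp at huv
  obtain ⟨C, hC⟩ := ih _ hlt
    (fun w ↦ (Set.ncard_le_ncard (neighborSet_mono (deleteEdges_le _) w)).trans (hdeg w))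
    (fun w p hp ↦ by simpa using heven w _ (hp.mapLe (deleteEdges_le _)))
  obtain ⟨c, hc⟩ := hsplit C hC
  have hc' : c ≠ c + 1 := by fin_cases c <;> decide
  exact ⟨_, hC.update fun w hw z hz ↦ (hc w hw z hz).trans_ne hc'⟩

end SimpleGraph

open SimpleGraph

theorem hasMonoCopy_pathGraph_three_iff {V : Type} {G : SimpleGraph V} {r : ℕ}
    (C : Sym2 V → Fin r) :
    HasMonoCopy G (pathGraph 3) C ↔ ¬ G.IsProperEdgeColoring C := by
  constructor
  · rintro ⟨f, c, hf, hmono⟩ hC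
    have h10 := hmono 1 0 (by simp [pathGraph_adj])
    have h12 := hmono 1 2 (by simp [pathGraph_adj])
    exact hC h10.1 h12.1 (hf.ne (by decide)) (h10.2.trans h12.2.symm)
  · intro hC
    simp only [IsProperEdgeColoring, not_forall, not_not] at hC
    obtain ⟨x, y, z, hyx, hyz, hxz, hcol⟩ := hC
    refine ⟨![x, y, z], C s(y, x), ?_, ?_⟩
    · intro i j hij
      fin_cases i <;> fin_cases j <;> simp_all [hyx.ne, hyz.ne, hyx.ne.symm, hyz.ne.symm, eq_comm]
    · intro a b hab
      fin_cases a <;> fin_cases b <;> simp_all [pathGraph_adj, hyx.symm, hyz.symm, Sym2.eq_swap]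

theorem arrows_path_three_iff_general
    (V : Type) [Fintype V] (G : SimpleGraph V) [DecidableRel G.Adj] :
    ArrowsFor G (SimpleGraph.pathGraph 3) 2 ↔
      ((∃ v, 3 ≤ G.degree v) ∨
        ∃ (v : V) (w : G.Walk v v), w.IsCycle ∧ Odd w.length) := by
  simp only [ArrowsFor, hasMonoCopy_pathGraph_three_iff]
  constructor
  · intro hnone
    by_contra! ⟨hdeg, hcyc⟩
    have hdeg' (v : V) : (G.neighborSet v).ncard ≤ 2 := by
      rw [Set.ncard_eq_toFinset_card', ← neighborFinset_def]
      exact Nat.le_of_lt_succ (hdeg v)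
    obtain ⟨C, hC⟩ := exists_isProperEdgeColoring_fin_two G hdeg'
      fun v p hp ↦ Nat.not_odd_iff_even.mp (hcyc v p hp)
    exact hnone C hC
  · rintro (⟨v, hv⟩ | ⟨v, p, hp, hodd⟩) C hC
    · have := hC.degree_le_card v
      rw [Fintype.card_fin] at this
      omega
    · exact Nat.not_even_iff_odd.mpr hodd (hC.even_length_of_isCycle hp)

/-- `G →₂ P₃` if and only if `G` has a vertex of degree at least `3` or `G`
contains an odd cycle. -/
theorem arrows_path_three_iff
    (V : Type) [Fintype V] [DecidableEq V] (G : SimpleGraph V) [DecidableRel G.Adj] :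
    ArrowsFor G (SimpleGraph.pathGraph 3) 2 ↔
      ((∃ v, 3 ≤ G.degree v) ∨
        ∃ (v : V) (w : G.Walk v v), w.IsCycle ∧ Odd w.length) :=
  arrows_path_three_iff_general V G
end

section
/- Let P_4 denote the path with four vertices and three edges, and P_3 the path with three vertices and two edges. For each ε > 0 there exists δ > 0 such that the following holds for all sufficiently large n. If a 2-coloring of the edges of the blowup P_4[n], with parts V_1, V_2, V_3, V_4 along the path, contains at most δ n³ monochromatic canonical copies of P_3, then there exist colors c_1, c_2, c_3 with c_1 ≠ c_2 and c_2 ≠ c_3 such that, apart from at most ε n² edges in total, every edge between V_i and V_{i+1} has color c_i for i = 1, 2, 3 (i.e., the coloring is monochromatic between consecutive parts and alternates color along the path). -/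
/-!
At a vertex `b ∈ V₂` with `r k` left and `s k` right edges of colour `k` there are
`∑ k, r k * s k` monochromatic `P₃`'s centred at `b`, and since `∑ k, r k = ∑ k, s k = n`,
some colour `q` is missed by at most `2 ∑ k, r k * s k / n` left edges while `q + 1` is missed
by at most as many right edges. Fix such a pattern `p₀ b` at every `b ∈ V₂`, and likewise
`p₁ w` at every `w ∈ V₃` for the paths through `V₂ V₃ V₄`. A pair `(b, w)` with `p₀ b = p₁ w`
makes the edge `bw` wrong for the pattern at `b` or at `w`, so such pairs are few, and the same
inequality applied to `p₀` and `p₁` gives one colour `q` with `p₀` mostly `q` and `p₁` mostly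
`q + 1`. Every error term is bounded by a constant times the number of monochromatic `P₃`'s
divided by `n`.
-/

open Finset

theorem exists_mostly_alternating_of_sum_eq {n : ℕ} (r s : Fin 2 → ℕ)
    (hr : ∑ k, r k = n) (hs : ∑ k, s k = n) :
    ∃ q : Fin 2, n * r (q + 1) ≤ 2 * ∑ k, r k * s k ∧ n * s q ≤ 2 * ∑ k, r k * s k := by
  -- Take `q` with `n ≤ 2 * r q`, so `n * s q ≤ 2 * r q * s q`. Likewise
  -- `n * r (q + 1) ≤ 2 * r (q + 1) * s (q + 1)` if `n ≤ 2 * s (q + 1)`, and otherwise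
  -- `n * r (q + 1) ≤ n ^ 2 / 2 ≤ 2 * r q * s q`.
  rw [Fin.sum_univ_two] at hr hs
  simp only [Fin.sum_univ_two]
  rcases le_total n (2 * r 0) with h | h
  · refine ⟨0, ?_, by nlinarith⟩
    rw [zero_add]
    rcases le_total n (2 * s 1) with h' | h' <;> nlinarith
  · refine ⟨1, ?_, by nlinarith⟩
    rw [show (1 : Fin 2) + 1 = 0 from rfl]
    rcases le_total n (2 * s 0) with h' | h' <;> nlinarith

theorem Fin.two_ne_iff_eq_add_one {u v : Fin 2} : u ≠ v ↔ u = v + 1 := by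
  revert u v; decide

theorem Fin.two_add_one_ne_iff {u v : Fin 2} : u + 1 ≠ v ↔ u ≠ v + 1 := by
  revert u v; decide

section Counting

variable {α β κ : Type*} [Fintype α] [Fintype β]

theorem card_filter_prod_eq_sum_fst (P : α → β → Prop) [∀ a b, Decidable (P a b)] :
    #{p : α × β | P p.1 p.2} = ∑ a, #{b | P a b} := by
  simp only [card_filter, Fintype.sum_prod_type]

theorem card_filter_prod_eq_sum_snd (P : α → β → Prop) [∀ a b, Decidable (P a b)] :
    #{p : α × β | P p.1 p.2} = ∑ b, #{a | P a b} := by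
  simp only [card_filter, Fintype.sum_prod_type]
  exact sum_comm

theorem card_filter_eq_eq_sum_mul [DecidableEq κ] [Fintype κ] (x : α → κ) (y : β → κ) :
    #{p : α × β | x p.1 = y p.2} = ∑ k, #{a | x a = k} * #{b | y b = k} := by
  rw [card_filter_prod_eq_sum_fst (fun a b => x a = y b), ← sum_fiberwise univ x]
  refine sum_congr rfl fun k _ => ?_
  rw [sum_congr rfl fun a ha => by rw [(mem_filter.1 ha).2], sum_const, smul_eq_mul]
  simp only [eq_comm]

theorem sum_card_filter_ne_le [DecidableEq κ] (f : β → α → κ) (c c' : β → κ) :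
    ∑ b, #{a | f b a ≠ c b} ≤
      ∑ b, #{a | f b a ≠ c' b} + Fintype.card α * #{b | c' b ≠ c b} := by
  calc ∑ b, #{a | f b a ≠ c b}
      ≤ ∑ b, (#{a | f b a ≠ c' b} + if c' b ≠ c b then Fintype.card α else 0) := by
        refine sum_le_sum fun b _ => ?_
        split_ifs with h
        · exact le_add_left (card_le_univ _)
        · rw [not_not.1 h, add_zero]
    _ = _ := by rw [sum_add_distrib, ← sum_filter, sum_const, smul_eq_mul, mul_comm]

theorem card_filter_eq_le_sum_card_ne (h : α → β → Fin 2) (u : α → Fin 2) (v : β → Fin 2) :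
    #{p : α × β | u p.1 = v p.2} ≤
      ∑ a, #{b | h a b ≠ u a + 1} + ∑ b, #{a | h a b ≠ v b} := by
  classical
  rw [← card_filter_prod_eq_sum_fst (fun a b => h a b ≠ u a + 1),
    ← card_filter_prod_eq_sum_snd (fun a b => h a b ≠ v b)]
  refine (card_le_card fun p => ?_).trans (card_union_le _ _)
  simp only [mem_union, mem_filter, mem_univ, true_and]
  generalize h p.1 p.2 = c, u p.1 = d, v p.2 = e
  revert c d e
  decide

end Counting

section Alternating

variable {α : Type*} [Fintype α]

theorem exists_mostly_alternating (x y : α → Fin 2) :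
    ∃ q : Fin 2, Fintype.card α * #{a | x a ≠ q} ≤ 2 * #{p : α × α | x p.1 = y p.2} ∧
      Fintype.card α * #{b | y b ≠ q + 1} ≤ 2 * #{p : α × α | x p.1 = y p.2} := by
  have hsum (z : α → Fin 2) : ∑ k, #{a | z a = k} = Fintype.card α :=
    (card_eq_sum_card_fiberwise fun _ _ => mem_univ _).symm
  obtain ⟨q, hx, hy⟩ := exists_mostly_alternating_of_sum_eq _ _ (hsum x) (hsum y)
  simp only [Fin.two_ne_iff_eq_add_one, add_assoc, show (1 : Fin 2) + 1 = 0 from rfl, add_zero,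
    card_filter_eq_eq_sum_mul]
  exact ⟨q, hx, hy⟩

theorem exists_alternating_defect_le (g₀ g₁ g₂ : α → α → Fin 2) :
    ∃ q : Fin 2, Fintype.card α *
        (∑ b, #{a | g₀ a b ≠ q} + ∑ b, #{c | g₁ b c ≠ q + 1} + ∑ w, #{z | g₂ w z ≠ q}) ≤
      16 * (∑ b, #{x : α × α | g₀ x.1 b = g₁ b x.2} +
        ∑ w, #{x : α × α | g₁ x.1 w = g₂ w x.2}) := by
  choose p₀ hp₀ using fun b => exists_mostly_alternating (g₀ · b) (g₁ b ·)
  choose p₁ hp₁ using fun w => exists_mostly_alternating (g₁ · w) (g₂ w ·)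
  obtain ⟨q, hq₀, hq₁⟩ := exists_mostly_alternating p₀ p₁
  have hleft₀ := sum_le_sum fun b (_ : b ∈ univ) => (hp₀ b).1
  have hright₀ := sum_le_sum fun b (_ : b ∈ univ) => (hp₀ b).2
  have hleft₁ := sum_le_sum fun w (_ : w ∈ univ) => (hp₁ w).1
  have hright₁ := sum_le_sum fun w (_ : w ∈ univ) => (hp₁ w).2
  rw [← mul_sum, ← mul_sum] at hleft₀ hright₀ hleft₁ hright₁
  have hQ := card_filter_eq_le_sum_card_ne g₁ p₀ p₁
  have h₀ := sum_card_filter_ne_le (fun b a => g₀ a b) (fun _ => q) p₀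
  have h₁ : ∑ b, #{c | g₁ b c ≠ q + 1} ≤
      ∑ b, #{c | g₁ b c ≠ p₀ b + 1} + Fintype.card α * #{b | p₀ b ≠ q} := by
    simpa only [ne_eq, add_left_inj] using sum_card_filter_ne_le g₁ (fun _ => q + 1) (p₀ · + 1)
  have h₂ : ∑ w, #{z | g₂ w z ≠ q} ≤
      ∑ w, #{z | g₂ w z ≠ p₁ w + 1} + Fintype.card α * #{w | p₁ w ≠ q + 1} := by
    simpa only [Fin.two_add_one_ne_iff] using sum_card_filter_ne_le g₂ (fun _ => q) (p₁ · + 1)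
  refine ⟨q, ?_⟩
  set n := Fintype.card α
  set M₀ := ∑ b, #{x : α × α | g₀ x.1 b = g₁ b x.2}
  set M₁ := ∑ w, #{x : α × α | g₁ x.1 w = g₂ w x.2}
  nlinarith [Nat.mul_le_mul_left n h₀, Nat.mul_le_mul_left n h₁, Nat.mul_le_mul_left n h₂,
    Nat.mul_le_mul_left n hQ, Nat.mul_le_mul_left n hq₀, Nat.mul_le_mul_left n hq₁]

end Alternating

section Blowup

variable {α : Type*} [Fintype α] (C : Sym2 (Fin 4 × α) → Fin 2)

theorem natCard_monochromatic_eq_sum :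
    Nat.card {x : Fin 2 × α × α × α //
        C s((x.1.castLE (by norm_num), x.2.1), (x.1.castLE (by norm_num) + 1, x.2.2.1)) =
        C s((x.1.castLE (by norm_num) + 1, x.2.2.1), (x.1.castLE (by norm_num) + 2, x.2.2.2))} =
      ∑ b, #{x : α × α | C s((0, x.1), (1, b)) = C s((1, b), (2, x.2))} +
        ∑ w, #{x : α × α | C s((1, x.1), (2, w)) = C s((2, w), (3, x.2))} := by
  rw [Nat.card_eq_fintype_card, Fintype.card_subtype]
  simp only [card_filter, Fintype.sum_prod_type, Fin.sum_univ_two]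
  congr 1 <;> exact sum_comm

theorem natCard_ne_eq_sum (c₀ c₁ c₂ : Fin 2) :
    Nat.card {y : Fin 3 × α × α //
        C s((y.1.castLE (by norm_num), y.2.1), (y.1.castLE (by norm_num) + 1, y.2.2)) ≠
          ![c₀, c₁, c₂] y.1} =
      ∑ b, #{a | C s((0, a), (1, b)) ≠ c₀} + ∑ b, #{c | C s((1, b), (2, c)) ≠ c₁} +
        ∑ w, #{z | C s((2, w), (3, z)) ≠ c₂} := by
  rw [Nat.card_eq_fintype_card, Fintype.card_subtype]
  simp only [card_filter, Fintype.sum_prod_type, Fin.sum_univ_three]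
  rw [sum_comm]
  rfl

end Blowup

/-- stability of colorings of `P₄[n]` with few monochromatic canonical
`P₃`'s. Vertices of `P₄[n]` are pairs in `Fin 4 × Fin n`, with part `Vᵢ = {i} × Fin n` and
parts `i, i+1` adjacent. A canonical copy of `P₃` is a path `u v w` with `u ∈ Vᵢ`,
`v ∈ Vᵢ₊₁`, `w ∈ Vᵢ₊₂` for some `i ∈ {0,1}`. For each `ε > 0` there is `δ > 0` such that, for
all sufficiently large `n`, any 2-coloring with at most `δ n³` monochromatic canonical `P₃`'s
is, apart from at most `ε n²` edges in total, monochromatic of color `c i` between `Vᵢ` and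
`Vᵢ₊₁`, with the colors alternating (`c 0 ≠ c 1` and `c 1 ≠ c 2`). -/
theorem path_four_blowup_stability (ε : ℝ) (hε : 0 < ε) :
    ∃ δ : ℝ, 0 < δ ∧ ∃ N : ℕ, ∀ n : ℕ, N ≤ n →
      ∀ C : Sym2 (Fin 4 × Fin n) → Fin 2,
        -- few monochromatic canonical copies of `P₃`
        (Nat.card {x : Fin 2 × Fin n × Fin n × Fin n //
            C s((x.1.castLE (by norm_num), x.2.1),
                (x.1.castLE (by norm_num) + 1, x.2.2.1)) =
            C s((x.1.castLE (by norm_num) + 1, x.2.2.1),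
                (x.1.castLE (by norm_num) + 2, x.2.2.2))} : ℝ) ≤ δ * (n : ℝ) ^ 3 →
        -- the coloring is `c i` between consecutive parts, alternating, up to `ε n²` edges
        ∃ c : Fin 3 → Fin 2, c 0 ≠ c 1 ∧ c 1 ≠ c 2 ∧
          (Nat.card {y : Fin 3 × Fin n × Fin n //
              C s((y.1.castLE (by norm_num), y.2.1),
                  (y.1.castLE (by norm_num) + 1, y.2.2)) ≠ c y.1} : ℝ) ≤ ε * (n : ℝ) ^ 2 := by
  refine ⟨ε / 16, by positivity, 1, fun n hn C hC => ?_⟩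
  obtain ⟨q, hq⟩ := exists_alternating_defect_le
    (fun a b => C s((0, a), (1, b))) (fun b c => C s((1, b), (2, c)))
    (fun w z => C s((2, w), (3, z)))
  refine ⟨![q, q + 1, q], by simp, by simp, ?_⟩
  rw [natCard_monochromatic_eq_sum] at hC
  rw [natCard_ne_eq_sum]
  have hq' := (Nat.cast_le (α := ℝ)).2 (Fintype.card_fin n ▸ hq)
  push_cast at hC hq' ⊢
  refine le_of_mul_le_mul_left ?_ (by exact_mod_cast hn : (0 : ℝ) < n)
  linarith
end

section
/- Let P_3 denote the path with three vertices and two edges. There exists an absolute constant δ > 0 such that the following holds for all integers ℓ ≥ 1 and all sufficiently large n. In every 2-coloring of the edges of the blowup C_{2ℓ+1}[n] of the odd cycle C_{2ℓ+1}, with parts V_1, …, V_{2ℓ+1} along the cycle, there exist three consecutive parts V_{i−1}, V_i, V_{i+1} (indices modulo 2ℓ+1) containing at least (δ/2) n³ monochromatic canonical copies of P_3, i.e., monochromatic paths u v w with u ∈ V_{i−1}, v ∈ V_i, w ∈ V_{i+1}. -/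
/-!
Encode the colouring between consecutive parts `V i` and `V (i + 1)` as a `±1` matrix `M i`.
The monochromatic canonical paths through `V i` number `(n³ + ∑ₓ cᵢ₋₁(x) rᵢ(x)) / 2`, where
`cᵢ₋₁` are the column sums of `M (i - 1)` and `rᵢ` the row sums of `M i`. If there are fewer than
`n³ / 8` of them for every `i`, that sum is at most `-(3/4) n³`, which forces the rows of `M i`
to be nearly constant; then its columns are nearly constant too, hence close to their mean, and
the same inequality at `V (i + 1)` shows that the entry sums of `M i` and `M (i + 1)` have
opposite signs. Signs cannot alternate around a cycle of odd length.
-/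

open Finset

lemma abs_sum_mul_le_of_abs_le {ι : Type*} (s : Finset ι) {u : ι → ℝ} {c : ℝ}
    (hu : ∀ i ∈ s, |u i| ≤ c) (v : ι → ℝ) :
    |∑ i ∈ s, u i * v i| ≤ c * ∑ i ∈ s, |v i| :=
  calc |∑ i ∈ s, u i * v i| ≤ ∑ i ∈ s, |u i| * |v i| := by
        simpa only [abs_mul] using abs_sum_le_sum_abs (fun i => u i * v i) s
    _ ≤ ∑ i ∈ s, c * |v i| :=
        sum_le_sum fun i hi => mul_le_mul_of_nonneg_right (hu i hi) (abs_nonneg _)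
    _ = c * ∑ i ∈ s, |v i| := (mul_sum _ _ _).symm

lemma abs_sub_sign_le {a : ℝ} (ha : |a| ≤ 1) (t : ℝ) :
    |a - SignType.sign t| ≤ 1 - SignType.sign t * a := by
  rw [abs_le] at ha
  rcases lt_trichotomy t 0 with ht | rfl | ht
  · rw [sign_neg ht, SignType.coe_neg_one, abs_le]; constructor <;> linarith
  · simpa using abs_le.mpr ha
  · rw [sign_pos ht, SignType.coe_one, abs_le]; constructor <;> linarith

section SignMatrix

variable {α β : Type*}

def rowSum [Fintype β] (M : α → β → ℝ) (x : α) : ℝ := ∑ y, M x y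

def colSum [Fintype α] (M : α → β → ℝ) (y : β) : ℝ := ∑ x, M x y

def entrySum [Fintype α] [Fintype β] (M : α → β → ℝ) : ℝ := ∑ x, ∑ y, M x y

lemma abs_rowSum_le [Fintype β] {M : α → β → ℝ} (hM : ∀ x y, |M x y| ≤ 1) (x : α) :
    |rowSum M x| ≤ Fintype.card β :=
  calc |rowSum M x| ≤ ∑ y, |M x y| := abs_sum_le_sum_abs _ _
    _ ≤ ∑ _y : β, 1 := sum_le_sum fun y _ => hM x y
    _ = Fintype.card β := by simp

lemma abs_colSum_le [Fintype α] {M : α → β → ℝ} (hM : ∀ x y, |M x y| ≤ 1) (y : β) :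
    |colSum M y| ≤ Fintype.card α :=
  abs_rowSum_le (M := fun y x => M x y) (fun y x => hM x y) y

variable [Fintype α] [Fintype β]

lemma sum_colSum (M : α → β → ℝ) : ∑ y, colSum M y = entrySum M :=
  sum_comm

/-- If the rows of `M` are nearly constant, then so are its columns. -/
lemma sum_abs_colSum_sub_le {M : α → β → ℝ} (hM : ∀ x y, |M x y| ≤ 1) :
    ∑ y, |colSum M y - ∑ x, (SignType.sign (rowSum M x) : ℝ)| ≤
      ∑ x, (Fintype.card β - |rowSum M x|) :=
  calc ∑ y, |colSum M y - ∑ x, (SignType.sign (rowSum M x) : ℝ)|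
      ≤ ∑ y, ∑ x, |M x y - SignType.sign (rowSum M x)| := by
        refine sum_le_sum fun y _ => ?_
        rw [colSum, ← sum_sub_distrib]
        exact abs_sum_le_sum_abs _ _
    _ ≤ ∑ y, ∑ x, (1 - SignType.sign (rowSum M x) * M x y) :=
        sum_le_sum fun y _ => sum_le_sum fun x _ => abs_sub_sign_le (hM x y) _
    _ = ∑ x, (Fintype.card β - |rowSum M x|) := by
        rw [sum_comm]
        refine sum_congr rfl fun x _ => ?_
        rw [sum_sub_distrib, ← mul_sum, ← rowSum, sign_mul_self]
        simp

lemma sum_abs_colSum_sub_mean_le {M : α → β → ℝ} (hM : ∀ x y, |M x y| ≤ 1) :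
    ∑ y, |colSum M y - entrySum M / Fintype.card β| ≤
      2 * ∑ x, (Fintype.card β - |rowSum M x|) := by
  rcases isEmpty_or_nonempty β with hβ | hβ
  · simp [rowSum]
  set K := ∑ x, (SignType.sign (rowSum M x) : ℝ)
  have hK := sum_abs_colSum_sub_le hM
  have hmean : Fintype.card β * |K - entrySum M / Fintype.card β| ≤
      ∑ y, |colSum M y - K| := by
    have hβ0 : (Fintype.card β : ℝ) ≠ 0 := by positivity
    have hsum : ∑ y, (K - colSum M y) = Fintype.card β * (K - entrySum M / Fintype.card β) := by
      rw [sum_sub_distrib, sum_colSum, sum_const, card_univ, nsmul_eq_mul, mul_sub,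
        mul_div_cancel₀ _ hβ0]
    calc Fintype.card β * |K - entrySum M / Fintype.card β|
        = |∑ y, (K - colSum M y)| := by rw [hsum, abs_mul, Nat.abs_cast]
      _ ≤ ∑ y, |K - colSum M y| := abs_sum_le_sum_abs _ _
      _ = ∑ y, |colSum M y - K| := by simp only [abs_sub_comm]
  calc ∑ y, |colSum M y - entrySum M / Fintype.card β|
      ≤ ∑ y, (|colSum M y - K| + |K - entrySum M / Fintype.card β|) :=
        sum_le_sum fun y _ => abs_sub_le _ _ _
    _ = ∑ y, |colSum M y - K| + Fintype.card β * |K - entrySum M / Fintype.card β| := by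
        rw [sum_add_distrib, sum_const, card_univ, nsmul_eq_mul]
    _ ≤ 2 * ∑ x, (Fintype.card β - |rowSum M x|) := by linarith

lemma entrySum_mul_entrySum_neg [Nonempty α] {A B C : α → α → ℝ} (hA : ∀ x y, |A x y| ≤ 1)
    (hB : ∀ x y, |B x y| ≤ 1) (hC : ∀ x y, |C x y| ≤ 1) {ε : ℝ} (hε : ε < 1 / 3)
    (hAB : ∑ x, colSum A x * rowSum B x ≤ -(1 - ε) * (Fintype.card α : ℝ) ^ 3)
    (hBC : ∑ y, colSum B y * rowSum C y ≤ -(1 - ε) * (Fintype.card α : ℝ) ^ 3) :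
    entrySum B * entrySum C < 0 := by
  set n : ℝ := (Fintype.card α : ℝ)
  have hn : 0 < n := by positivity
  have hrows : (1 - ε) * n ^ 3 ≤ n * ∑ x, |rowSum B x| := by
    have hbound := abs_sum_mul_le_of_abs_le univ (fun x _ => abs_colSum_le hA x) (rowSum B)
    linarith [neg_abs_le (∑ x, colSum A x * rowSum B x)]
  have hcols : n * ∑ y, |colSum B y - entrySum B / n| ≤ 2 * ε * n ^ 3 := by
    have hdev := sum_abs_colSum_sub_mean_le hB
    rw [sum_sub_distrib, sum_const, card_univ, nsmul_eq_mul] at hdev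
    nlinarith
  have hsplit : ∑ y, colSum B y * rowSum C y =
      entrySum B / n * entrySum C + ∑ y, rowSum C y * (colSum B y - entrySum B / n) := by
    rw [show entrySum C = ∑ y, rowSum C y from rfl, mul_sum, ← sum_add_distrib]
    exact sum_congr rfl fun y _ => by rw [rowSum]; ring
  have herr : |∑ y, rowSum C y * (colSum B y - entrySum B / n)| ≤
      n * ∑ y, |colSum B y - entrySum B / n| :=
    abs_sum_mul_le_of_abs_le univ (fun y _ => abs_rowSum_le hC y) _
  have hmean : entrySum B / n * entrySum C ≤ -((1 - 3 * ε) * n ^ 3) := by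
    linarith [neg_abs_le (∑ y, rowSum C y * (colSum B y - entrySum B / n))]
  have hgap : 0 < (1 - 3 * ε) * n ^ 3 := mul_pos (by linarith) (pow_pos hn 3)
  have hB : entrySum B = n * (entrySum B / n) := (mul_div_cancel₀ _ hn.ne').symm
  rw [hB, mul_assoc]
  exact mul_neg_of_pos_of_neg hn (by linarith)

def spin (a : Fin 2) : ℝ := if a = 0 then 1 else -1

lemma abs_spin_le (a : Fin 2) : |spin a| ≤ 1 := by
  unfold spin; split <;> simp

lemma spin_mul_spin (a b : Fin 2) : spin a * spin b = if a = b then 1 else -1 := by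
  fin_cases a <;> fin_cases b <;> simp [spin]

lemma sum_ite_one_neg_one {ι : Type*} [Fintype ι] (p : ι → Prop) [DecidablePred p] :
    ∑ i, (if p i then (1 : ℝ) else -1) = 2 * Nat.card {i // p i} - Fintype.card ι := by
  have hcard := card_filter_add_card_filter_not (s := univ) p
  rw [card_univ] at hcard
  rw [Nat.card_eq_fintype_card, Fintype.card_subtype, sum_ite, sum_const, sum_const, ← hcard]
  simp only [nsmul_eq_mul, Nat.cast_add]
  ring

lemma sum_colSum_mul_rowSum_spin {γ : Type*} [Fintype γ]
    (f : α → β → Fin 2) (g : β → γ → Fin 2) :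
    ∑ y, colSum (fun x y => spin (f x y)) y * rowSum (fun y z => spin (g y z)) y =
      2 * Nat.card {t : α × β × γ // f t.1 t.2.1 = g t.2.1 t.2.2} -
        Fintype.card α * Fintype.card β * Fintype.card γ := by
  calc ∑ y, colSum (fun x y => spin (f x y)) y * rowSum (fun y z => spin (g y z)) y
      = ∑ t : α × β × γ, if f t.1 t.2.1 = g t.2.1 t.2.2 then (1 : ℝ) else -1 := by
        simp only [colSum, rowSum, sum_mul_sum, spin_mul_spin, Fintype.sum_prod_type]
        exact sum_comm
    _ = _ := by
        rw [sum_ite_one_neg_one, Fintype.card_prod, Fintype.card_prod]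
        push_cast
        ring

end SignMatrix

open SimpleGraph in
lemma not_forall_mul_add_one_neg {m : ℕ} (S : Fin (2 * m + 1) → ℝ) :
    ¬ ∀ i, S i * S (i + 1) < 0 := by
  intro h
  rcases Nat.eq_zero_or_pos m with rfl | hm
  · exact (mul_self_nonneg (S 0)).not_gt (h 0)
  have hsign : ∀ {i j}, S i * S j < 0 → decide (0 < S i) ≠ decide (0 < S j) := by
    intro i j hij
    rcases mul_neg_iff.mp hij with ⟨hi, hj⟩ | ⟨hi, hj⟩ <;> simp [hi, hj.not_gt, hi.not_gt, hj]
  let c : (cycleGraph (2 * m + 1)).Coloring Bool :=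
    Coloring.mk (fun i => decide (0 < S i)) fun {i j} hij => by
      have h1 : (1 : Fin (2 * m + 1)).val = 1 := by
        rw [Fin.val_one', Nat.mod_eq_of_lt (by omega)]
      rcases cycleGraph_adj'.mp hij with hij | hij
      · rw [sub_eq_iff_eq_add'.mp (Fin.ext (hij.trans h1.symm))]
        exact (hsign (h j)).symm
      · rw [sub_eq_iff_eq_add'.mp (Fin.ext (hij.trans h1.symm))]
        exact hsign (h i)
  have := c.colorable.chromaticNumber_le
  rw [chromaticNumber_cycleGraph_of_odd _ (by omega) (odd_two_mul_add_one m)] at this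
  exact absurd this (by norm_num)

/-- Vertices of `C_{2ℓ+1}[n]` are pairs in `Fin (2ℓ+1) × Fin n`, with part
`Vᵢ = {i} × Fin n` and consecutive parts (indices mod `2ℓ+1`) adjacent. There is an absolute
constant `δ > 0` such that for every `ℓ ≥ 1` and all sufficiently large `n`, every 2-coloring
of `C_{2ℓ+1}[n]` has three consecutive parts `V_{i-1}, V_i, V_{i+1}` containing at least
`(δ/2) n³` monochromatic canonical copies of `P₃`, i.e. monochromatic paths `u v w` with
`u ∈ V_{i-1}`, `v ∈ V_i`, `w ∈ V_{i+1}`. -/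
theorem odd_cycle_blowup_many_mono_paths :
    ∃ δ : ℝ, 0 < δ ∧ ∀ ℓ : ℕ, 1 ≤ ℓ → ∃ N : ℕ, ∀ n : ℕ, N ≤ n →
      ∀ C : Sym2 (Fin (2 * ℓ + 1) × Fin n) → Fin 2,
        ∃ i : Fin (2 * ℓ + 1),
          δ / 2 * (n : ℝ) ^ 3 ≤
            (Nat.card {x : Fin n × Fin n × Fin n //
              C s((i - 1, x.1), (i, x.2.1)) = C s((i, x.2.1), (i + 1, x.2.2))} : ℝ) := by
  refine ⟨1 / 4, by norm_num, fun ℓ _ => ⟨1, fun n hn C => ?_⟩⟩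
  by_contra! hfew
  have : NeZero n := ⟨by omega⟩
  let M (i : Fin (2 * ℓ + 1)) (x y : Fin n) : ℝ := spin (C s((i, x), (i + 1, y)))
  have hM (i x y) : |M i x y| ≤ 1 := abs_spin_le _
  have hpaths (i : Fin (2 * ℓ + 1)) :
      ∑ x, colSum (M (i - 1)) x * rowSum (M i) x ≤ -(1 - 1 / 4) * (n : ℝ) ^ 3 := by
    have hcount := sum_colSum_mul_rowSum_spin (fun x y => C s((i - 1, x), (i, y)))
      (fun y z => C s((i, y), (i + 1, z)))
    simp only [Fintype.card_fin] at hcount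
    simp only [M, sub_add_cancel]
    linarith [hfew i]
  refine not_forall_mul_add_one_neg (fun i => entrySum (M i)) fun i => ?_
  exact entrySum_mul_entrySum_neg (hM _) (hM _) (hM _) (ε := 1 / 4) (by norm_num)
    (by simpa using hpaths i) (by simpa using hpaths (i + 1))
end
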